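/- arXiv:1506.02700 — 5 statements merged into one kernel-verified Lean document; each statement's English description precedes it below -/
import Mathlib

section
/- Let X_1, …, X_n be chosen independently and uniformly at random on the circle of circumference 1, and let 0 ≤ r ≤ 1/2. Then the probability that d(X_i, X_j) > r for all 1 ≤ i < j ≤ n is at most (1 - 2r)^(n choose 2). (Here p = 2r is the probability that two independent uniform points on the circle are at distance at most r.) -/
open MeasureTheory

open MeasureTheory Set

lemma perm_eq_one_of_strictMono {m : ℕ} (σ : Equiv.Perm (Fin m))
    (h : StrictMono (σ : Fin m → Fin m)) : σ = 1 := by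
  have he : StrictMono.orderIsoOfSurjective (σ : Fin m → Fin m) h σ.surjective
      = OrderIso.refl (Fin m) := Subsingleton.elim _ _
  have hc := StrictMono.coe_orderIsoOfSurjective (f := (σ : Fin m → Fin m)) h σ.surjective
  rw [he] at hc
  ext i
  have := congrFun hc i
  simp only [OrderIso.coe_refl, id_eq] at this
  rw [← this]; rfl

lemma measurePreserving_comp_perm {m : ℕ} (σ : Equiv.Perm (Fin m)) :
    MeasurePreserving (fun x : Fin m → ℝ => x ∘ σ) volume volume := by
  have hmeas : Measurable (fun x : Fin m → ℝ => x ∘ σ) :=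
    measurable_pi_iff.mpr fun i => measurable_pi_apply (σ i)
  constructor
  · exact hmeas
  · rw [show (volume : Measure (Fin m → ℝ)) = Measure.pi fun _ => volume from volume_pi]
    refine (Measure.pi_eq fun s hs => ?_).symm
    rw [Measure.map_apply hmeas (MeasurableSet.univ_pi hs)]
    have : (fun x : Fin m → ℝ => x ∘ σ) ⁻¹' (univ.pi s) = univ.pi (fun j => s (σ.symm j)) := by
      ext x
      simp only [mem_preimage, mem_pi, mem_univ, forall_true_left, Function.comp]
      exact ⟨fun h j => by simpa using h (σ.symm j), fun h i => by simpa using h (σ i)⟩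
    rw [this, Measure.pi_pi]
    exact Equiv.prod_comp σ.symm (fun j => volume (s j))

lemma vol_separated_le (m : ℕ) (r c d : ℝ) (hr : 0 < r) :
    volume {x : Fin m → ℝ | (∀ i, x i ∈ Ioo c d) ∧ ∀ i j, i ≠ j → r < |x i - x j|}
      ≤ ENNReal.ofReal ((max (d - c - (m - 1 : ℕ) * r) 0) ^ m) := by
  cases m with
  | zero =>
      have : volume (univ : Set (Fin 0 → ℝ)) = 1 := by
        rw [volume_pi, Measure.pi_univ]; simp
      calc volume {x : Fin 0 → ℝ | (∀ i, x i ∈ Ioo c d) ∧ ∀ i j, i ≠ j → r < |x i - x j|}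
          ≤ volume (univ : Set (Fin 0 → ℝ)) := measure_mono (subset_univ _)
        _ = 1 := this
        _ ≤ _ := by simp
  | succ mm =>
  set m := mm + 1 with hm
  set a : ℝ := d - mm * r with ha
  set S : Set (Fin m → ℝ) :=
    {x | (∀ i, x i ∈ Ioo c d) ∧ ∀ i j, i ≠ j → r < |x i - x j|} with hSdef
  set T : Set (Fin m → ℝ) := {x | StrictMono x} with hTdef
  set C : Set (Fin m → ℝ) := {z | ∀ i, z i ∈ Ioo c a} with hCdef
  have hT : MeasurableSet T := by
    have : T = ⋂ (i) (j) (_ : i < j), {x : Fin m → ℝ | x i < x j} := by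
      ext x
      simp only [hTdef, mem_setOf_eq, mem_iInter]
      exact ⟨fun h i j hij => h hij, fun h i j hij => h i j hij⟩
    rw [this]
    exact MeasurableSet.iInter fun i => MeasurableSet.iInter fun j =>
      MeasurableSet.iInter fun _ =>
        measurableSet_lt (measurable_pi_apply i) (measurable_pi_apply j)
  have hS : MeasurableSet S := by
    have : S = (⋂ i, {x : Fin m → ℝ | x i ∈ Ioo c d}) ∩
        ⋂ (i) (j) (_ : i ≠ j), {x : Fin m → ℝ | r < |x i - x j|} := by
      ext x
      simp only [hSdef, mem_setOf_eq, mem_inter_iff, mem_iInter]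
    rw [this]
    exact (MeasurableSet.iInter fun i =>
        measurable_pi_apply i measurableSet_Ioo).inter
      (MeasurableSet.iInter fun i => MeasurableSet.iInter fun j =>
        MeasurableSet.iInter fun _ => measurableSet_lt measurable_const
          (((measurable_pi_apply i).sub (measurable_pi_apply j)).abs))
  have hC : MeasurableSet C := by
    have : C = ⋂ i, {z : Fin m → ℝ | z i ∈ Ioo c a} := by
      ext z; simp [hCdef]
    rw [this]
    exact MeasurableSet.iInter fun i => measurable_pi_apply i measurableSet_Ioo
  -- permutation invariance of S and C
  have hSinv : ∀ σ : Equiv.Perm (Fin m), (fun x : Fin m → ℝ => x ∘ σ) ⁻¹' S = S := by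
    intro σ
    ext x
    simp only [mem_preimage, hSdef, mem_setOf_eq, Function.comp]
    constructor
    · rintro ⟨h1, h2⟩
      refine ⟨fun i => by simpa using h1 (σ.symm i), fun i j hij => ?_⟩
      have := h2 (σ.symm i) (σ.symm j) (fun hc => hij (by simpa using congrArg σ hc))
      simpa using this
    · rintro ⟨h1, h2⟩
      exact ⟨fun i => h1 (σ i), fun i j hij => h2 (σ i) (σ j) (fun hc => hij (σ.injective hc))⟩
  have hCinv : ∀ σ : Equiv.Perm (Fin m), (fun x : Fin m → ℝ => x ∘ σ) ⁻¹' C = C := by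
    intro σ
    ext x
    simp only [mem_preimage, hCdef, mem_setOf_eq, Function.comp]
    exact ⟨fun h i => by simpa using h (σ.symm i), fun h i => h (σ i)⟩
  -- sector cover
  have hcover : S ⊆ ⋃ σ : Equiv.Perm (Fin m), ((fun x : Fin m → ℝ => x ∘ σ) ⁻¹' T) ∩ S := by
    intro x hx
    have hinj : Function.Injective x := by
      intro i j hij
      by_contra hne
      have := hx.2 i j hne
      rw [hij] at this
      simp at this
      linarith
    refine mem_iUnion.mpr ⟨Tuple.sort x, ?_, hx⟩
    have hmono : Monotone (x ∘ Tuple.sort x) := Tuple.monotone_sort x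
    exact hmono.strictMono_of_injective (hinj.comp (Tuple.sort x).injective)
  -- per-sector equalities
  have hsecS : ∀ σ : Equiv.Perm (Fin m),
      volume (((fun x : Fin m → ℝ => x ∘ σ) ⁻¹' T) ∩ S) = volume (T ∩ S) := by
    intro σ
    have : ((fun x : Fin m → ℝ => x ∘ σ) ⁻¹' T) ∩ S
        = (fun x : Fin m → ℝ => x ∘ σ) ⁻¹' (T ∩ S) := by
      rw [preimage_inter, hSinv σ]
    rw [this]
    exact (measurePreserving_comp_perm σ).measure_preimage (hT.inter hS).nullMeasurableSet
  have hsecC : ∀ σ : Equiv.Perm (Fin m),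
      volume (((fun x : Fin m → ℝ => x ∘ σ) ⁻¹' T) ∩ C) = volume (T ∩ C) := by
    intro σ
    have : ((fun x : Fin m → ℝ => x ∘ σ) ⁻¹' T) ∩ C
        = (fun x : Fin m → ℝ => x ∘ σ) ⁻¹' (T ∩ C) := by
      rw [preimage_inter, hCinv σ]
    rw [this]
    exact (measurePreserving_comp_perm σ).measure_preimage (hT.inter hC).nullMeasurableSet
  -- translation step : T ∩ S shrinks into T ∩ C
  have htrans : volume (T ∩ S) ≤ volume (T ∩ C) := by
    set w : Fin m → ℝ := fun i => -((i : ℕ) * r) with hw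
    have hsub : T ∩ S ⊆ (fun x : Fin m → ℝ => x + w) ⁻¹' (T ∩ C) := by
      rintro x ⟨hxT, hx1, hx2⟩
      have hgap : ∀ i : Fin mm, x (Fin.castSucc i) + r < x (Fin.succ i) := by
        intro i
        have hlt : Fin.castSucc i < Fin.succ i := Fin.castSucc_lt_succ
        have h1 : x (Fin.castSucc i) < x (Fin.succ i) := hxT hlt
        have h2 := hx2 _ _ (ne_of_lt hlt)
        rw [abs_sub_comm, abs_of_pos (by linarith)] at h2
        linarith
      have hzmono : StrictMono (x + w) := by
        rw [Fin.strictMono_iff_lt_succ]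
        intro i
        have := hgap i
        simp only [Pi.add_apply, hw, Fin.coe_castSucc, Fin.val_succ]
        push_cast
        linarith
      constructor
      · exact hzmono
      · intro i
        constructor
        · have h0 : (x + w) 0 ≤ (x + w) i := hzmono.monotone (Fin.zero_le i)
          have : (x + w) 0 = x 0 := by simp [hw]
          have hx0 := (hx1 0).1
          rw [this] at h0
          linarith
        · have hlast : (x + w) i ≤ (x + w) (Fin.last mm) :=
            hzmono.monotone (Fin.le_last i)
          have : (x + w) (Fin.last mm) = x (Fin.last mm) - mm * r := by
            simp [hw, Fin.last, sub_eq_add_neg]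
          have hxl := (hx1 (Fin.last mm)).2
          rw [this] at hlast
          simp only [ha]
          linarith
    calc volume (T ∩ S) ≤ volume ((fun x : Fin m → ℝ => x + w) ⁻¹' (T ∩ C)) :=
          measure_mono hsub
      _ = volume (T ∩ C) :=
          (measurePreserving_add_right volume w).measure_preimage
            (hT.inter hC).nullMeasurableSet
  -- disjointness of sectors in the cube
  have hdisj : Pairwise (Function.onFun Disjoint
      (fun σ : Equiv.Perm (Fin m) => ((fun x : Fin m → ℝ => x ∘ σ) ⁻¹' T) ∩ C)) := by
    intro σ τ hne
    rw [Function.onFun]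
    refine Set.disjoint_left.mpr ?_
    rintro x ⟨hxσ, _⟩ ⟨hxτ, _⟩
    apply hne
    have hxσ' : StrictMono (x ∘ σ) := hxσ
    have hxτ' : StrictMono (x ∘ τ) := hxτ
    have hρ : StrictMono ((σ.trans τ.symm : Equiv.Perm (Fin m)) : Fin m → Fin m) := by
      intro i j hij
      have h1 : (x ∘ σ) i < (x ∘ σ) j := hxσ' hij
      have h2 : (x ∘ τ) (τ.symm (σ i)) < (x ∘ τ) (τ.symm (σ j)) := by
        simpa [Function.comp] using h1
      exact hxτ'.lt_iff_lt.mp h2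
    have h4 := perm_eq_one_of_strictMono _ hρ
    refine Equiv.ext fun i => ?_
    have h3 := congrArg (fun e : Equiv.Perm (Fin m) => τ (e i)) h4
    simpa using h3
  -- cube volume
  have hcube : volume C = (ENNReal.ofReal (a - c)) ^ m := by
    have : C = univ.pi (fun _ : Fin m => Ioo c a) := by
      ext z; simp [hCdef]
    rw [this, volume_pi, Measure.pi_pi]
    simp [Real.volume_Ioo, Finset.prod_const]
  -- assemble
  have step1 : volume S ≤ ∑ σ : Equiv.Perm (Fin m),
      volume (((fun x : Fin m → ℝ => x ∘ σ) ⁻¹' T) ∩ S) :=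
    (measure_mono hcover).trans (measure_iUnion_fintype_le _ _)
  have step2 : ∑ σ : Equiv.Perm (Fin m),
        volume (((fun x : Fin m → ℝ => x ∘ σ) ⁻¹' T) ∩ S)
      ≤ ∑ σ : Equiv.Perm (Fin m),
        volume (((fun x : Fin m → ℝ => x ∘ σ) ⁻¹' T) ∩ C) := by
    refine Finset.sum_le_sum fun σ _ => ?_
    rw [hsecS σ, hsecC σ]
    exact htrans
  have step3 : ∑ σ : Equiv.Perm (Fin m),
      volume (((fun x : Fin m → ℝ => x ∘ σ) ⁻¹' T) ∩ C) ≤ volume C := by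
    rw [← tsum_fintype (L := SummationFilter.unconditional _)]
    rw [← measure_iUnion hdisj (fun σ =>
      (((measurePreserving_comp_perm σ).measurable) hT).inter hC)]
    exact measure_mono (iUnion_subset fun σ => inter_subset_right)
  have hfin : volume S ≤ volume C := le_trans step1 (le_trans step2 step3)
  rw [hcube] at hfin
  refine le_trans hfin ?_
  have h1 : ENNReal.ofReal (a - c) ≤ ENNReal.ofReal (max (d - c - mm * r) 0) := by
    apply ENNReal.ofReal_le_ofReal
    rw [ha]
    exact le_max_of_le_left (by ring_nf; exact le_refl _)
  calc (ENNReal.ofReal (a - c)) ^ m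
      ≤ (ENNReal.ofReal (max (d - c - mm * r) 0)) ^ m := pow_le_pow_left' h1 m
    _ = ENNReal.ofReal ((max (d - c - mm * r) 0) ^ m) :=
        (ENNReal.ofReal_pow (le_max_right _ _) m).symm
    _ = ENNReal.ofReal ((max (d - c - (m - 1 : ℕ) * r) 0) ^ m) := by rw [hm, Nat.add_sub_cancel]

lemma aux_sq (k : ℕ) (r : ℝ) (hr : 0 ≤ r) (h1 : 0 ≤ 1 - ((k : ℝ) + 2) * r) :
    (1 - ((k : ℝ) + 2) * r) ^ 2 ≤ (1 - 2 * r) ^ (k + 2) := by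
  induction k with
  | zero => norm_num
  | succ k ih =>
    have hcast : ((k + 1 : ℕ) : ℝ) = (k : ℝ) + 1 := by push_cast; ring
    rw [hcast] at h1 ⊢
    set a : ℝ := ((k : ℝ) + 2) * r with ha
    have har : 2 * r ≤ a := by have : (0:ℝ) ≤ k := Nat.cast_nonneg k; nlinarith
    have ha1 : a + r ≤ 1 := by rw [ha]; nlinarith [h1]
    have ha0 : 0 ≤ a := by positivity
    have hk : 0 ≤ 1 - ((k : ℝ) + 2) * r := by rw [← ha]; linarith
    have ih' := ih hk
    have h2r : 0 ≤ 1 - 2 * r := by linarith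
    have hkey : 0 ≤ 2 * a - 2 * a ^ 2 - r := by
      rcases le_or_gt a (1 / 2) with hc | hc
      · nlinarith [mul_nonneg ha0 (by linarith : (0:ℝ) ≤ 1 - 2 * a)]
      · nlinarith [mul_nonneg (by linarith : (0:ℝ) ≤ 2 * a - 1) (by linarith : (0:ℝ) ≤ 1 - a)]
    have hprod := mul_nonneg hr hkey
    have step : (1 - ((k : ℝ) + 1 + 2) * r) ^ 2 ≤ (1 - 2 * r) * (1 - a) ^ 2 := by nlinarith [hprod]
    calc (1 - ((k : ℝ) + 1 + 2) * r) ^ 2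
        ≤ (1 - 2 * r) * (1 - a) ^ 2 := step
      _ ≤ (1 - 2 * r) * (1 - 2 * r) ^ (k + 2) := by
          refine mul_le_mul_of_nonneg_left ?_ h2r
          rw [ha] at *; exact ih'
      _ = (1 - 2 * r) ^ (k + 1 + 2) := by ring

lemma key_ineq (m : ℕ) (r : ℝ) (hr : 0 ≤ r) (hr2 : r ≤ 1 / 2) :
    (max (1 - ((m : ℝ) + 1) * r) 0) ^ m ≤ (1 - 2 * r) ^ ((m + 1).choose 2) := by
  have h2r : 0 ≤ 1 - 2 * r := by linarith
  cases m with
  | zero => simp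
  | succ k =>
    have hcast : ((k + 1 : ℕ) : ℝ) = (k : ℝ) + 1 := by push_cast; ring
    rw [hcast]
    rcases le_or_gt (1 - ((k : ℝ) + 1 + 1) * r) 0 with h | h
    · rw [max_eq_right h]
      rw [zero_pow (Nat.succ_ne_zero k)]
      positivity
    · have h' : 0 ≤ 1 - ((k : ℝ) + 2) * r := by linarith
      rw [max_eq_left (by linarith : (0:ℝ) ≤ 1 - ((k : ℝ) + 1 + 1) * r)]
      have hsq := aux_sq k r hr h'
      have hch : (k + 2).choose 2 * 2 = (k + 2) * (k + 1) := by
        rw [Nat.choose_two_right]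
        have he : Even ((k + 2) * (k + 2 - 1)) := by
          simpa [Nat.mul_comm] using (Nat.even_mul_succ_self (k + 1))
        exact Nat.div_mul_cancel he.two_dvd
    -- rewrite the choose exponent
      have hC : (k + 1 + 1).choose 2 = (k + 2).choose 2 := by norm_num
      rw [show (k + 1 + 1) = k + 2 from rfl]
      set b : ℝ := 1 - ((k : ℝ) + 1 + 1) * r with hb
      have hb' : b = 1 - ((k : ℝ) + 2) * r := by rw [hb]; ring
      have hb0 : 0 ≤ b := by rw [hb']; exact h'
      have ht : 0 ≤ (1 - 2 * r) ^ ((k + 2).choose 2) := pow_nonneg h2r _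
      have hsqs : (b ^ (k + 1)) ^ 2 ≤ ((1 - 2 * r) ^ ((k + 2).choose 2)) ^ 2 := by
        have e1 : (b ^ (k + 1)) ^ 2 = (b ^ 2) ^ (k + 1) := by rw [← pow_mul, ← pow_mul, Nat.mul_comm]
        have e2 : ((1 - 2 * r) ^ ((k + 2).choose 2)) ^ 2
            = ((1 - 2 * r) ^ (k + 2)) ^ (k + 1) := by
          rw [← pow_mul, ← pow_mul, hch]
        rw [e1, e2]
        refine pow_le_pow_left₀ (sq_nonneg _) ?_ (k + 1)
        rw [hb']; exact hsq
      exact (pow_le_pow_iff_left₀ (pow_nonneg hb0 _) ht two_ne_zero).mp hsqs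
lemma pi_restrict_eq (m : ℕ) {I : Set ℝ} (hI : MeasurableSet I) :
    (Measure.pi fun _ : Fin m => volume.restrict I)
      = (volume : Measure (Fin m → ℝ)).restrict (Set.pi univ fun _ => I) := by
  refine (Measure.pi_eq fun s hs => ?_)
  rw [Measure.restrict_apply (MeasurableSet.univ_pi hs)]
  have h1 : univ.pi s ∩ univ.pi (fun _ : Fin m => I) = univ.pi fun i => s i ∩ I := by
    ext x
    simp only [mem_inter_iff, mem_pi, mem_univ, forall_true_left, mem_inter_iff]
    exact ⟨fun ⟨h1, h2⟩ i => ⟨h1 i, h2 i⟩, fun h => ⟨fun i => (h i).1, fun i => (h i).2⟩⟩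
  rw [h1, volume_pi, Measure.pi_pi]
  exact Finset.prod_congr rfl fun i _ => (Measure.restrict_apply (hs i)).symm
lemma fmeas (m : ℕ) (r : ℝ) : MeasurableSet
    {y : Fin m → UnitAddCircle | (∀ j, r < dist (y j) 0) ∧
      ∀ i j, i < j → r < dist (y i) (y j)} := by
  have h1 : {y : Fin m → UnitAddCircle | (∀ j, r < dist (y j) 0) ∧
      ∀ i j, i < j → r < dist (y i) (y j)}
      = (⋂ j, {y : Fin m → UnitAddCircle | r < dist (y j) 0}) ∩
        ⋂ (i) (j) (_ : i < j), {y : Fin m → UnitAddCircle | r < dist (y i) (y j)} := by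
    ext y; simp only [mem_setOf_eq, mem_inter_iff, mem_iInter]
  rw [h1]
  exact (MeasurableSet.iInter fun j => measurableSet_lt measurable_const
      ((measurable_pi_apply j).dist measurable_const)).inter
    (MeasurableSet.iInter fun i => MeasurableSet.iInter fun j => MeasurableSet.iInter fun _ =>
      measurableSet_lt measurable_const ((measurable_pi_apply i).dist (measurable_pi_apply j)))

lemma e2meas (m : ℕ) (r : ℝ) : MeasurableSet
    {p : UnitAddCircle × (Fin m → UnitAddCircle) | (∀ j, r < dist p.1 (p.2 j)) ∧
      ∀ i j, i < j → r < dist (p.2 i) (p.2 j)} := by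
  have h1 : {p : UnitAddCircle × (Fin m → UnitAddCircle) | (∀ j, r < dist p.1 (p.2 j)) ∧
      ∀ i j, i < j → r < dist (p.2 i) (p.2 j)}
      = (⋂ j, {p : UnitAddCircle × (Fin m → UnitAddCircle) | r < dist p.1 (p.2 j)}) ∩
        ⋂ (i) (j) (_ : i < j),
          {p : UnitAddCircle × (Fin m → UnitAddCircle) | r < dist (p.2 i) (p.2 j)} := by
    ext p; simp only [mem_setOf_eq, mem_inter_iff, mem_iInter]
  rw [h1]
  exact (MeasurableSet.iInter fun j => measurableSet_lt measurable_const
      (measurable_fst.dist ((measurable_pi_apply j).comp measurable_snd))).inter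
    (MeasurableSet.iInter fun i => MeasurableSet.iInter fun j => MeasurableSet.iInter fun _ =>
      measurableSet_lt measurable_const (((measurable_pi_apply i).comp measurable_snd).dist
        ((measurable_pi_apply j).comp measurable_snd)))

/-- **Birthday inequality on the circle.**  Let `X_1, …, X_n` be independent uniform random
points on the circle of circumference 1 (`ℝ/ℤ` with its quotient metric and Haar probability
measure) and let `0 ≤ r ≤ 1/2`.  Then the probability that all pairwise distances exceed `r`
is at most `(1 - 2r)^(n choose 2)`, where `2r` is the probability that two independent
uniform points are at distance at most `r`. -/
theorem circle_birthday_inequality (n : ℕ) (r : ℝ) (hr : 0 ≤ r) (hr2 : r ≤ 1 / 2) :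
    ((Measure.pi fun _ : Fin n => (volume : Measure UnitAddCircle))
        {X : Fin n → UnitAddCircle | ∀ i j : Fin n, i < j → dist (X i) (X j) > r}).toReal
      ≤ (1 - 2 * r) ^ n.choose 2 := by
  have h2r : (0:ℝ) ≤ 1 - 2 * r := by linarith
  have htriv : ((Measure.pi fun _ : Fin n => (volume : Measure UnitAddCircle))
      {X : Fin n → UnitAddCircle | ∀ i j : Fin n, i < j → dist (X i) (X j) > r}).toReal ≤ 1 := by
    have huniv : (Measure.pi fun _ : Fin n => (volume : Measure UnitAddCircle)) univ = 1 := by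
      rw [Measure.pi_univ]
      simp [UnitAddCircle.measure_univ]
    have hle : (Measure.pi fun _ : Fin n => (volume : Measure UnitAddCircle))
        {X : Fin n → UnitAddCircle | ∀ i j : Fin n, i < j → dist (X i) (X j) > r} ≤ 1 :=
      (measure_mono (subset_univ _)).trans_eq huniv
    exact ENNReal.toReal_le_of_le_ofReal zero_le_one (by simpa using hle)
  rcases Nat.lt_or_ge n 2 with hn | hn
  · rw [Nat.choose_eq_zero_of_lt hn, pow_zero]; exact htriv
  rcases eq_or_lt_of_le hr with hr0 | hrpos
  · have hone : (1 - 2 * r : ℝ) ^ n.choose 2 = 1 := by rw [← hr0]; norm_num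
    rw [hone]; exact htriv
  obtain ⟨m, rfl⟩ : ∃ m, n = m + 1 := ⟨n - 1, by omega⟩
  have hm1 : 1 ≤ m := by omega
  set ν := Measure.pi fun _ : Fin m => (volume : Measure UnitAddCircle) with hν
  set F : Set (Fin m → UnitAddCircle) :=
    {y | (∀ j, r < dist (y j) 0) ∧ ∀ i j, i < j → r < dist (y i) (y j)} with hF
  have hFmeas : MeasurableSet F := fmeas m r
  set E2 : Set (UnitAddCircle × (Fin m → UnitAddCircle)) :=
    {p | (∀ j, r < dist p.1 (p.2 j)) ∧ ∀ i j, i < j → r < dist (p.2 i) (p.2 j)} with hE2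
  have hE2meas : MeasurableSet E2 := e2meas m r
  have hpre : {X : Fin (m+1) → UnitAddCircle | ∀ i j : Fin (m+1), i < j → dist (X i) (X j) > r}
      = (MeasurableEquiv.piFinSuccAbove (fun _ : Fin (m+1) => UnitAddCircle) 0) ⁻¹' E2 := by
    ext x
    simp only [mem_setOf_eq, mem_preimage, MeasurableEquiv.piFinSuccAbove_apply, hE2,
      Fin.zero_succAbove, gt_iff_lt]
    constructor
    · intro h
      exact ⟨fun j => h 0 j.succ (Fin.succ_pos j),
        fun i j hij => h i.succ j.succ (Fin.succ_lt_succ_iff.mpr hij)⟩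
    · rintro ⟨h1, h2⟩ i j hij
      rcases Fin.eq_zero_or_eq_succ j with rfl | ⟨j', rfl⟩
      · exact absurd hij (by simp)
      rcases Fin.eq_zero_or_eq_succ i with rfl | ⟨i', rfl⟩
      · exact h1 j'
      · exact h2 i' j' (Fin.succ_lt_succ_iff.mp hij)
  have h1 : (Measure.pi fun _ : Fin (m+1) => (volume : Measure UnitAddCircle))
      {X : Fin (m+1) → UnitAddCircle | ∀ i j : Fin (m+1), i < j → dist (X i) (X j) > r}
      = ((volume : Measure UnitAddCircle).prod ν) E2 := by
    rw [hpre]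
    exact (measurePreserving_piFinSuccAbove
      (fun _ : Fin (m+1) => (volume : Measure UnitAddCircle)) 0).measure_preimage
      hE2meas.nullMeasurableSet
  have hslice : ∀ a : UnitAddCircle, ν (Prod.mk a ⁻¹' E2) = ν F := by
    intro a
    have hpre2 : Prod.mk a ⁻¹' E2
        = (fun y : Fin m → UnitAddCircle => y + fun _ => -a) ⁻¹' F := by
      ext y
      have d1 : ∀ u : UnitAddCircle, dist (u + -a) 0 = dist a u := by
        intro u
        rw [dist_eq_norm, dist_eq_norm, sub_zero, ← neg_sub u a, norm_neg]
        congr 1; abel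
      have d2 : ∀ u v : UnitAddCircle, dist (u + -a) (v + -a) = dist u v := by
        intro u v
        rw [dist_eq_norm, dist_eq_norm]; congr 1; abel
      simp only [mem_preimage, hE2, hF, mem_setOf_eq, Pi.add_apply]
      constructor
      · rintro ⟨g1, g2⟩
        exact ⟨fun j => by rw [d1]; exact g1 j, fun i j hij => by rw [d2]; exact g2 i j hij⟩
      · rintro ⟨g1, g2⟩
        refine ⟨fun j => ?_, fun i j hij => ?_⟩
        · have := g1 j; rwa [d1] at this
        · have := g2 i j hij; rwa [d2] at this
    rw [hpre2]
    exact (measurePreserving_add_right ν _).measure_preimage hFmeas.nullMeasurableSet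
  have h2 : ((volume : Measure UnitAddCircle).prod ν) E2 = ν F := by
    rw [Measure.prod_apply hE2meas]
    simp_rw [hslice]
    rw [lintegral_const, UnitAddCircle.measure_univ, mul_one]
  set Q : (Fin m → ℝ) → (Fin m → UnitAddCircle) := fun y j => ((y j : ℝ) : UnitAddCircle)
    with hQ
  have hQmp : MeasurePreserving Q
      (Measure.pi fun _ : Fin m => volume.restrict (Ioc (0:ℝ) (0+1))) ν :=
    measurePreserving_pi _ _ (fun _ => UnitAddCircle.measurePreserving_mk 0)
  have h3 : ν F = volume (Q ⁻¹' F ∩ Set.pi univ fun _ : Fin m => Ioc (0:ℝ) (0+1)) := by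
    rw [← hQmp.measure_preimage hFmeas.nullMeasurableSet, pi_restrict_eq m measurableSet_Ioc,
      Measure.restrict_apply (hQmp.measurable hFmeas)]
  have hsub : Q ⁻¹' F ∩ (Set.pi univ fun _ : Fin m => Ioc (0:ℝ) (0+1))
      ⊆ {x : Fin m → ℝ | (∀ i, x i ∈ Ioo r (1 - r)) ∧ ∀ i j, i ≠ j → r < |x i - x j|} := by
    rintro x ⟨hxF, hxbox⟩
    have hbox : ∀ i, x i ∈ Ioc (0:ℝ) 1 := by
      intro i; have := hxbox i (mem_univ i); simpa using this
    have nb : ∀ u : ℝ, ‖(u : UnitAddCircle)‖ ≤ |u| := fun u => by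
      simpa using QuotientAddGroup.norm_mk_le_norm (m := u)
    have distle : ∀ u v : ℝ,
        dist ((u : ℝ) : UnitAddCircle) ((v : ℝ) : UnitAddCircle) ≤ |u - v| := by
      intro u v
      rw [dist_eq_norm, ← QuotientAddGroup.mk_sub]
      exact nb (u - v)
    have distle0 : ∀ u : ℝ, dist ((u : ℝ) : UnitAddCircle) (0 : UnitAddCircle) ≤ |u| := by
      intro u
      have := distle u 0
      simpa using this
    obtain ⟨hxF1, hxF2⟩ := hxF
    have key1 : ∀ i, x i ∈ Ioo r (1 - r) := by
      intro i
      have hpos := (hbox i).1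
      have hle1 := (hbox i).2
      have hd : r < dist ((x i : ℝ) : UnitAddCircle) (0 : UnitAddCircle) := hxF1 i
      constructor
      · have := lt_of_lt_of_le hd (distle0 (x i))
        rwa [abs_of_pos hpos] at this
      · have hcoe : ((x i : ℝ) : UnitAddCircle) = ((x i - 1 : ℝ) : UnitAddCircle) := by
          calc ((x i : ℝ) : UnitAddCircle) = ((x i - 1 + 1 : ℝ) : UnitAddCircle) := by norm_num
            _ = ((x i - 1 : ℝ) : UnitAddCircle) := AddCircle.coe_add_period 1 (x i - 1)
        have hd2 : r < dist ((x i - 1 : ℝ) : UnitAddCircle) (0 : UnitAddCircle) := by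
          rwa [hcoe] at hd
        have := lt_of_lt_of_le hd2 (distle0 (x i - 1))
        rw [abs_of_nonpos (by linarith)] at this
        linarith
    refine ⟨key1, fun i j hij => ?_⟩
    rcases lt_or_gt_of_ne hij with h | h
    · exact lt_of_lt_of_le (hxF2 i j h) (distle (x i) (x j))
    · have := lt_of_lt_of_le (hxF2 j i h) (distle (x j) (x i))
      rwa [abs_sub_comm] at this
  have h4 := vol_separated_le m r r (1 - r) hrpos
  have h5 : volume (Q ⁻¹' F ∩ Set.pi univ fun _ : Fin m => Ioc (0:ℝ) (0+1))
      ≤ ENNReal.ofReal ((max (1 - ((m:ℝ) + 1) * r) 0) ^ m) := by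
    refine (measure_mono hsub).trans (h4.trans_eq ?_)
    have hc : ((m - 1 : ℕ) : ℝ) = (m : ℝ) - 1 := by
      rw [Nat.cast_sub hm1]; norm_num
    have : 1 - r - r - ((m - 1 : ℕ) : ℝ) * r = 1 - ((m:ℝ) + 1) * r := by
      rw [hc]; ring
    rw [this]
  have hfin : (Measure.pi fun _ : Fin (m+1) => (volume : Measure UnitAddCircle))
      {X : Fin (m+1) → UnitAddCircle | ∀ i j : Fin (m+1), i < j → dist (X i) (X j) > r}
      ≤ ENNReal.ofReal ((max (1 - ((m:ℝ) + 1) * r) 0) ^ m) := by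
    rw [h1, h2, h3]; exact h5
  have hnn : (0:ℝ) ≤ (max (1 - ((m:ℝ) + 1) * r) 0) ^ m := pow_nonneg (le_max_right _ _) m
  have hto := ENNReal.toReal_le_of_le_ofReal hnn hfin
  exact hto.trans (key_ineq m r hr hr2)
end

section
/- Cell-model lower bound: let d ≥ 1 and suppose y_1, …, y_n are points of the unit torus 𝕋^d with d(y_i, y_j) > 2·r_p for all i < j, where 0 < r_p < 1/2 (a packing of n disjoint balls of radius r_p). Then for every t with 0 < t < 1, the probability that n independent uniformly random points X_1, …, X_n in 𝕋^d satisfy d(X_i, X_j) > 2·t·r_p for all i < j is at least n! · (v_d · ((1−t)·r_p)^d)^n. -/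
open MeasureTheory

noncomputable section

/-- The quotient metric on the unit torus `𝕋^d = ℝ^d/ℤ^d`, expressed on representatives in
`ℝ^d`: the distance between two classes is the minimum over integer-lattice translates of the
Euclidean distance. -/
def torusDist {d : ℕ} (x y : Fin d → ℝ) : ℝ :=
  ⨅ z : Fin d → ℤ, Real.sqrt (∑ i, (x i - (y i + (z i : ℝ))) ^ 2)

/-- The Haar probability (uniform) measure on the unit torus, realized as Lebesgue measure
restricted to the fundamental domain `[0,1)^d`. -/
def torusMeasure (d : ℕ) : Measure (Fin d → ℝ) :=
  volume.restrict (Set.univ.pi fun _ : Fin d => Set.Ico (0 : ℝ) 1)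

/-- `v_d`, the Lebesgue volume of the unit ball in `ℝ^d`. -/
def unitBallVol (d : ℕ) : ℝ :=
  (volume {x : Fin d → ℝ | ∑ i, x i ^ 2 ≤ 1}).toReal

/-- The distribution of `k` points chosen independently and uniformly at random in the unit
torus `𝕋^d`. -/
def configMeasure (d k : ℕ) : Measure (Fin k → (Fin d → ℝ)) :=
  Measure.pi fun _ : Fin k => torusMeasure d

/-- `E_k`: the event that the `k` points are at pairwise (torus) distance greater than `r`. -/
def repelEvent (d : ℕ) (r : ℝ) (k : ℕ) : Set (Fin k → (Fin d → ℝ)) :=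
  {X | ∀ i j : Fin k, i ≠ j → torusDist (X i) (X j) > r}

/-- `V_k`: the (torus) measure of the union of the closed balls of radius `r` centered at the
`k` given points. -/
def coveredVol (d : ℕ) (r : ℝ) {k : ℕ} (X : Fin k → (Fin d → ℝ)) : ℝ :=
  (torusMeasure d {y | ∃ i : Fin k, torusDist y (X i) ≤ r}).toReal

end

open Set Pointwise

noncomputable section

namespace CellAux
variable {d : ℕ}

def ed (x y : Fin d → ℝ) : ℝ := Real.sqrt (∑ i, (x i - y i) ^ 2)

def eu (x : Fin d → ℝ) : EuclideanSpace ℝ (Fin d) := (WithLp.equiv 2 _).symm x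

lemma ed_eq_dist (x y : Fin d → ℝ) : ed x y = dist (eu x) (eu y) := by
  rw [EuclideanSpace.dist_eq]
  unfold ed
  congr 1
  refine Finset.sum_congr rfl fun i _ => ?_
  rw [Real.dist_eq, sq_abs]
  rfl

lemma ed_congr {x y x' y' : Fin d → ℝ} (h : ∀ i, (x i - y i) ^ 2 = (x' i - y' i) ^ 2) :
    ed x y = ed x' y' := by
  unfold ed; congr 1; exact Finset.sum_congr rfl fun i _ => h i

lemma ed_nonneg (x y : Fin d → ℝ) : 0 ≤ ed x y := Real.sqrt_nonneg _

lemma torusDist_eq (x y : Fin d → ℝ) :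
    torusDist x y = ⨅ z : Fin d → ℤ, ed x (fun i => y i + (z i : ℝ)) := rfl

lemma torus_bdd (x y : Fin d → ℝ) :
    BddBelow (Set.range fun z : Fin d → ℤ => ed x (fun i => y i + (z i : ℝ))) :=
  ⟨0, by rintro r ⟨z, rfl⟩; exact ed_nonneg _ _⟩

lemma torusDist_le (x y : Fin d → ℝ) (z : Fin d → ℤ) :
    torusDist x y ≤ ed x (fun i => y i + (z i : ℝ)) := by
  rw [torusDist_eq]; exact ciInf_le (torus_bdd x y) z

lemma torusDist_nonneg (x y : Fin d → ℝ) : 0 ≤ torusDist x y :=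
  Real.iInf_nonneg fun _ => Real.sqrt_nonneg _

lemma torusDist_symm (x y : Fin d → ℝ) : torusDist x y = torusDist y x := by
  have key : ∀ a b : Fin d → ℝ, torusDist a b ≤ torusDist b a := by
    intro a b
    rw [torusDist_eq b a]
    exact le_ciInf fun z =>
      (torusDist_le a b (-z)).trans_eq (ed_congr fun i => by simp only [Pi.neg_apply]; push_cast; ring)
  exact le_antisymm (key x y) (key y x)

lemma torusDist_triangle (x y z : Fin d → ℝ) :
    torusDist x z ≤ torusDist x y + torusDist y z := by
  have key : ∀ a b : Fin d → ℤ,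
      torusDist x z ≤ ed x (fun i => y i + (a i : ℝ)) + ed y (fun i => z i + (b i : ℝ)) := by
    intro a b
    refine (torusDist_le x z (a + b)).trans ?_
    have h1 : ed x (fun i => z i + (((a + b) i : ℤ) : ℝ)) ≤
        ed x (fun i => y i + (a i : ℝ)) +
          ed (fun i => y i + (a i : ℝ)) (fun i => z i + (((a + b) i : ℤ) : ℝ)) := by
      rw [ed_eq_dist, ed_eq_dist, ed_eq_dist]; exact dist_triangle _ _ _
    refine h1.trans ?_
    have h2 : ed (fun i => y i + (a i : ℝ)) (fun i => z i + (((a + b) i : ℤ) : ℝ)) =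
        ed y (fun i => z i + (b i : ℝ)) := ed_congr fun i => by
      simp only [Pi.add_apply]; push_cast; ring
    linarith
  have h2 : ∀ a : Fin d → ℤ,
      torusDist x z - ed x (fun i => y i + (a i : ℝ)) ≤ torusDist y z := by
    intro a
    rw [torusDist_eq y z]
    refine le_ciInf fun b => sub_le_iff_le_add.2 ?_
    have := key a b
    linarith
  have h3 : torusDist x z - torusDist y z ≤ torusDist x y := by
    rw [torusDist_eq x y]
    refine le_ciInf fun a => sub_le_iff_le_add.2 ?_
    have := h2 a
    linarith
  linarith

lemma measurable_ed (c : Fin d → ℝ) : Measurable fun z : Fin d → ℝ => ed z c := by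
  unfold ed; fun_prop

lemma measurable_torusDist (c : Fin d → ℝ) :
    Measurable fun z : Fin d → ℝ => torusDist z c := by
  have h : ∀ w : Fin d → ℤ, Measurable fun z : Fin d → ℝ =>
      ed z (fun i => c i + (w i : ℝ)) := fun w => measurable_ed _
  exact Measurable.iInf h

lemma measurableSet_torusBall (c : Fin d → ℝ) (s : ℝ) :
    MeasurableSet {z : Fin d → ℝ | torusDist z c ≤ s} :=
  measurableSet_le (measurable_torusDist c) measurable_const

def cube (d : ℕ) : Set (Fin d → ℝ) := Set.univ.pi fun _ : Fin d => Set.Ico (0 : ℝ) 1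

lemma cube_meas : MeasurableSet (cube d) := MeasurableSet.univ_pi fun _ => measurableSet_Ico

lemma unitBall_meas : MeasurableSet {x : Fin d → ℝ | ∑ i, x i ^ 2 ≤ 1} :=
  measurableSet_le (by fun_prop) measurable_const

lemma unitBall_vol_ne_top : volume {x : Fin d → ℝ | ∑ i, x i ^ 2 ≤ 1} ≠ ⊤ := by
  have hsub : {x : Fin d → ℝ | ∑ i, x i ^ 2 ≤ 1} ⊆
      Set.univ.pi fun _ : Fin d => Set.Icc (-1 : ℝ) 1 := by
    intro x hx i _
    have h1 : x i ^ 2 ≤ 1 :=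
      (Finset.single_le_sum (f := fun i => x i ^ 2) (fun i _ => sq_nonneg _)
        (Finset.mem_univ i)).trans hx
    constructor
    · nlinarith [sq_nonneg (x i + 1)]
    · nlinarith [sq_nonneg (x i - 1)]
  refine ne_top_of_le_ne_top ?_ (measure_mono hsub)
  rw [volume_pi_pi]
  simp only [Real.volume_Icc]
  rw [Finset.prod_const]
  exact ENNReal.pow_ne_top ENNReal.ofReal_ne_top

lemma ball_lb (c : Fin d → ℝ) {s : ℝ} (hs : 0 < s) (hs2 : 2 * s < 1) :
    ENNReal.ofReal (unitBallVol d * s ^ d) ≤ torusMeasure d {z | torusDist z c ≤ s} := by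
  classical
  set U : Set (Fin d → ℝ) := {x | ∑ i, x i ^ 2 ≤ 1} with hU
  set B0 : Set (Fin d → ℝ) := {z | ed z c ≤ s} with hB0
  have hB0m : MeasurableSet B0 := measurableSet_le (measurable_ed c) measurable_const
  set B : (Fin d → ℤ) → Set (Fin d → ℝ) :=
    fun w => {z | ed z (fun i => c i + (w i : ℝ)) ≤ s} with hB
  have hBm : ∀ w, MeasurableSet (B w) :=
    fun w => measurableSet_le (measurable_ed _) measurable_const
  set C : (Fin d → ℤ) → Set (Fin d → ℝ) :=
    fun w => (fun z => (fun i => (w i : ℝ)) + z) ⁻¹' cube d with hC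
  have hCm : ∀ w, MeasurableSet (C w) :=
    fun w => cube_meas.preimage (measurable_const.add measurable_id)
  have htrans : ∀ w, volume (B w ∩ cube d) = volume (B0 ∩ C w) := by
    intro w
    rw [← measure_preimage_add (volume : Measure (Fin d → ℝ)) (fun i => (w i : ℝ))
      (B w ∩ cube d)]
    congr 1
    ext z
    have hed : ed ((fun i => (w i : ℝ)) + z) (fun i => c i + (w i : ℝ)) = ed z c :=
      ed_congr fun i => by simp only [Pi.add_apply]; ring
    simp only [Set.mem_preimage, Set.mem_inter_iff, hB, hB0, hC, Set.mem_setOf_eq, hed]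
  have hBdisj : Pairwise (Function.onFun Disjoint B) := by
    intro w1 w2 hne
    rw [Function.onFun, Set.disjoint_left]
    intro z hz1 hz2
    obtain ⟨i0, hi0⟩ : ∃ i, w1 i ≠ w2 i := by
      by_contra h; push_neg at h; exact hne (funext h)
    have hz1' : ed z (fun i => c i + (w1 i : ℝ)) ≤ s := hz1
    have hz2' : ed z (fun i => c i + (w2 i : ℝ)) ≤ s := hz2
    have hlow : (1 : ℝ) ≤ ed (fun i => c i + (w1 i : ℝ)) (fun i => c i + (w2 i : ℝ)) := by
      unfold ed
      rw [show (1 : ℝ) = Real.sqrt 1 by simp]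
      apply Real.sqrt_le_sqrt
      have hcast : ((c i0 + (w1 i0 : ℝ)) - (c i0 + (w2 i0 : ℝ))) = ((w1 i0 - w2 i0 : ℤ) : ℝ) := by
        push_cast; ring
      have h1 : (1 : ℤ) ≤ |w1 i0 - w2 i0| := Int.one_le_abs (sub_ne_zero.2 hi0)
      have h2 : (1 : ℝ) ≤ |((w1 i0 - w2 i0 : ℤ) : ℝ)| := by
        rw [← Int.cast_abs]; exact_mod_cast h1
      have hterm : (1 : ℝ) ≤ ((c i0 + (w1 i0 : ℝ)) - (c i0 + (w2 i0 : ℝ))) ^ 2 := by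
        rw [hcast]
        nlinarith [sq_abs ((w1 i0 - w2 i0 : ℤ) : ℝ)]
      exact hterm.trans (Finset.single_le_sum (f := fun i => ((c i + (w1 i : ℝ)) - (c i + (w2 i : ℝ))) ^ 2)
        (fun i _ => sq_nonneg _) (Finset.mem_univ i0))
    have hup : ed (fun i => c i + (w1 i : ℝ)) (fun i => c i + (w2 i : ℝ)) ≤ 2 * s := by
      rw [ed_eq_dist]
      have tri := dist_triangle (eu fun i => c i + (w1 i : ℝ)) (eu z)
        (eu fun i => c i + (w2 i : ℝ))
      have e1 : dist (eu fun i => c i + (w1 i : ℝ)) (eu z) =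
          ed z (fun i => c i + (w1 i : ℝ)) := by rw [dist_comm, ← ed_eq_dist]
      have e2 : dist (eu z) (eu fun i => c i + (w2 i : ℝ)) =
          ed z (fun i => c i + (w2 i : ℝ)) := (ed_eq_dist _ _).symm
      rw [e1, e2] at tri
      linarith
    linarith
  have hCdisj : Pairwise (Function.onFun Disjoint C) := by
    intro w1 w2 hne
    rw [Function.onFun, Set.disjoint_left]
    intro z hz1 hz2
    obtain ⟨i0, hi0⟩ : ∃ i, w1 i ≠ w2 i := by
      by_contra h; push_neg at h; exact hne (funext h)
    have h1 := hz1 i0 (Set.mem_univ i0)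
    have h2 := hz2 i0 (Set.mem_univ i0)
    simp only [Pi.add_apply, Set.mem_Ico] at h1 h2
    have ha : (w1 i0 : ℝ) - (w2 i0 : ℝ) < 1 := by linarith
    have hb : (w2 i0 : ℝ) - (w1 i0 : ℝ) < 1 := by linarith
    have ha' : w1 i0 - w2 i0 < 1 := by exact_mod_cast (by push_cast; linarith : ((w1 i0 - w2 i0 : ℤ) : ℝ) < 1)
    have hb' : w2 i0 - w1 i0 < 1 := by exact_mod_cast (by push_cast; linarith : ((w2 i0 - w1 i0 : ℤ) : ℝ) < 1)
    omega
  have hCcover : (⋃ w, C w) = Set.univ := by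
    ext z
    simp only [Set.mem_iUnion, Set.mem_univ, iff_true]
    refine ⟨fun i => -⌊z i⌋, fun i _ => ?_⟩
    simp only [Pi.add_apply, Set.mem_Ico]
    constructor
    · push_cast; linarith [Int.floor_le (z i)]
    · push_cast; linarith [Int.lt_floor_add_one (z i)]
  have hvolB0 : volume B0 = ENNReal.ofReal (unitBallVol d * s ^ d) := by
    have h1 : volume B0 = volume ((fun z : Fin d → ℝ => c + z) ⁻¹' B0) :=
      (measure_preimage_add (volume : Measure (Fin d → ℝ)) c B0).symm
    have h2 : (fun z : Fin d → ℝ => c + z) ⁻¹' B0 = s • U := by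
      ext z
      rw [Set.mem_preimage, Set.mem_smul_set_iff_inv_smul_mem₀ hs.ne']
      have e1 : ed (c + z) c = Real.sqrt (∑ i, z i ^ 2) := by
        unfold ed
        congr 1
        exact Finset.sum_congr rfl fun i _ => by simp only [Pi.add_apply]; ring
      have hsumeq : ∑ i, (s⁻¹ • z) i ^ 2 = (∑ i, z i ^ 2) / s ^ 2 := by
        rw [Finset.sum_div]
        refine Finset.sum_congr rfl fun i _ => ?_
        simp only [Pi.smul_apply, smul_eq_mul]
        rw [mul_pow, div_eq_mul_inv, inv_pow, mul_comm]
      have hzsum : (0:ℝ) ≤ ∑ i, z i ^ 2 := Finset.sum_nonneg fun i _ => sq_nonneg _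
      constructor
      · intro h
        have h' : ed (c + z) c ≤ s := h
        rw [e1] at h'
        have h'' : ∑ i, z i ^ 2 ≤ s ^ 2 := by
          nlinarith [Real.sq_sqrt hzsum, Real.sqrt_nonneg (∑ i, z i ^ 2)]
        show ∑ i, (s⁻¹ • z) i ^ 2 ≤ 1
        rw [hsumeq, div_le_one (pow_pos hs 2)]
        exact h''
      · intro h
        have h' : ∑ i, (s⁻¹ • z) i ^ 2 ≤ 1 := h
        rw [hsumeq, div_le_one (pow_pos hs 2)] at h'
        show ed (c + z) c ≤ s
        rw [e1, show s = Real.sqrt (s ^ 2) by rw [Real.sqrt_sq hs.le]]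
        exact Real.sqrt_le_sqrt h'
    have h3 : volume (s • U) = ENNReal.ofReal (s ^ d) * volume U := by
      rw [Measure.addHaar_smul, Module.finrank_fin_fun, abs_of_nonneg (pow_nonneg hs.le d)]
    have h4 : volume U = ENNReal.ofReal (unitBallVol d) :=
      (ENNReal.ofReal_toReal unitBall_vol_ne_top).symm
    rw [h1, h2, h3, h4, ← ENNReal.ofReal_mul (pow_nonneg hs.le d), mul_comm]
  have hmono : (⋃ w, B w ∩ cube d) ⊆ {z | torusDist z c ≤ s} ∩ cube d := by
    refine Set.iUnion_subset fun w => ?_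
    rintro z ⟨hz1, hz2⟩
    exact ⟨(torusDist_le z c w).trans hz1, hz2⟩
  calc ENNReal.ofReal (unitBallVol d * s ^ d) = volume B0 := hvolB0.symm
    _ = volume (⋃ w, B0 ∩ C w) := by rw [← Set.inter_iUnion, hCcover, Set.inter_univ]
    _ = ∑' w, volume (B0 ∩ C w) := measure_iUnion
        (hCdisj.mono fun w1 w2 h => h.mono Set.inter_subset_right Set.inter_subset_right)
        (fun w => hB0m.inter (hCm w))
    _ = ∑' w, volume (B w ∩ cube d) := tsum_congr fun w => (htrans w).symm
    _ = volume (⋃ w, B w ∩ cube d) := (measure_iUnion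
        (hBdisj.mono fun w1 w2 h => h.mono Set.inter_subset_left Set.inter_subset_left)
        (fun w => (hBm w).inter cube_meas)).symm
    _ ≤ volume ({z | torusDist z c ≤ s} ∩ cube d) := measure_mono hmono
    _ = torusMeasure d {z | torusDist z c ≤ s} :=
        (Measure.restrict_apply (measurableSet_torusBall c s)).symm

lemma torusMeasure_univ : torusMeasure d Set.univ = 1 := by
  rw [torusMeasure, Measure.restrict_apply_univ, volume_pi_pi]
  simp [Real.volume_Ico]

instance : IsProbabilityMeasure (torusMeasure d) := ⟨torusMeasure_univ⟩

end CellAux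

end

/-- **Cell-model lower bound.**  Suppose `y_1, …, y_n` are points of the unit torus `𝕋^d`
at pairwise distance greater than `2·r_p` (a packing of `n` disjoint balls of radius `r_p`,
`0 < r_p < 1/2`).  Then for every `0 < t < 1`, the probability that `n` independent uniform
points of `𝕋^d` are at pairwise distance greater than `2·t·r_p` is at least
`n! · (v_d · ((1−t)·r_p)^d)^n`. -/
theorem cell_model_lower_bound (d : ℕ) (hd : 1 ≤ d) (n : ℕ) (rp : ℝ) (hrp : 0 < rp)
    (hrp2 : rp < 1 / 2) (y : Fin n → (Fin d → ℝ))
    (hy : ∀ i j : Fin n, i ≠ j → torusDist (y i) (y j) > 2 * rp)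
    (t : ℝ) (ht : 0 < t) (ht2 : t < 1) :
    (configMeasure d n (repelEvent d (2 * t * rp) n)).toReal ≥
      (n.factorial : ℝ) * (unitBallVol d * ((1 - t) * rp) ^ d) ^ n := by
  classical
  set s := (1 - t) * rp with hsdef
  have hs : 0 < s := mul_pos (by linarith) hrp
  have hs2 : 2 * s < 1 := by nlinarith
  have hsrp : 2 * s < 2 * rp := by rw [hsdef]; nlinarith
  set S : Fin n → Set (Fin d → ℝ) := fun j => {z | torusDist z (y j) ≤ s} with hS
  set A : Equiv.Perm (Fin n) → Set (Fin n → Fin d → ℝ) :=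
    fun σ => Set.univ.pi fun i => S (σ i) with hA
  have hSm : ∀ j, MeasurableSet (S j) := fun j => CellAux.measurableSet_torusBall _ _
  have hAm : ∀ σ, MeasurableSet (A σ) := fun σ =>
    MeasurableSet.univ_pi fun i => hSm (σ i)
  have hAsub : ∀ σ, A σ ⊆ repelEvent d (2 * t * rp) n := by
    intro σ X hX i j hij
    have hXi : torusDist (X i) (y (σ i)) ≤ s := hX i (Set.mem_univ i)
    have hXj : torusDist (X j) (y (σ j)) ≤ s := hX j (Set.mem_univ j)
    have hyy := hy (σ i) (σ j) (fun h => hij (σ.injective h))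
    have tri1 : torusDist (y (σ i)) (y (σ j)) ≤
        torusDist (y (σ i)) (X i) + torusDist (X i) (y (σ j)) :=
      CellAux.torusDist_triangle _ _ _
    have tri2 : torusDist (X i) (y (σ j)) ≤
        torusDist (X i) (X j) + torusDist (X j) (y (σ j)) :=
      CellAux.torusDist_triangle _ _ _
    have hsymm : torusDist (y (σ i)) (X i) = torusDist (X i) (y (σ i)) :=
      CellAux.torusDist_symm _ _
    have hkey : 2 * rp - 2 * s = 2 * t * rp := by rw [hsdef]; ring
    show torusDist (X i) (X j) > 2 * t * rp
    linarith
  have hAdisj : Pairwise (Function.onFun Disjoint A) := by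
    intro σ τ hne
    rw [Function.onFun, Set.disjoint_left]
    intro X h1 h2
    obtain ⟨i, hi⟩ : ∃ i, σ i ≠ τ i := by
      by_contra h; push_neg at h; exact hne (Equiv.ext h)
    have hXi : torusDist (X i) (y (σ i)) ≤ s := h1 i (Set.mem_univ i)
    have hXi' : torusDist (X i) (y (τ i)) ≤ s := h2 i (Set.mem_univ i)
    have hyy := hy (σ i) (τ i) hi
    have tri : torusDist (y (σ i)) (y (τ i)) ≤
        torusDist (y (σ i)) (X i) + torusDist (X i) (y (τ i)) :=
      CellAux.torusDist_triangle _ _ _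
    have hsymm : torusDist (y (σ i)) (X i) = torusDist (X i) (y (σ i)) :=
      CellAux.torusDist_symm _ _
    linarith
  set V : ENNReal := ENNReal.ofReal (unitBallVol d * s ^ d) with hV
  have hAvol : ∀ σ, V ^ n ≤ configMeasure d n (A σ) := by
    intro σ
    rw [hA, configMeasure, Measure.pi_pi]
    calc V ^ n = ∏ _i : Fin n, V := by
          rw [Finset.prod_const, Finset.card_univ, Fintype.card_fin]
      _ ≤ ∏ i, torusMeasure d (S (σ i)) := Finset.prod_le_prod' fun i _ =>
          CellAux.ball_lb (y (σ i)) hs hs2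
  have hunion : (Nat.factorial n : ENNReal) * V ^ n ≤
      configMeasure d n (repelEvent d (2 * t * rp) n) := by
    have h1 : configMeasure d n (⋃ σ, A σ) = ∑' σ, configMeasure d n (A σ) :=
      measure_iUnion hAdisj hAm
    have h2 : (⋃ σ, A σ) ⊆ repelEvent d (2 * t * rp) n := Set.iUnion_subset hAsub
    calc (Nat.factorial n : ENNReal) * V ^ n
        = ∑' _σ : Equiv.Perm (Fin n), V ^ n := by
          rw [tsum_fintype, Finset.sum_const, Finset.card_univ, Fintype.card_perm,
            Fintype.card_fin, nsmul_eq_mul]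
      _ ≤ ∑' σ, configMeasure d n (A σ) := ENNReal.tsum_le_tsum fun σ => hAvol σ
      _ = configMeasure d n (⋃ σ, A σ) := h1.symm
      _ ≤ _ := measure_mono h2
  have hprob : configMeasure d n Set.univ = 1 := by
    rw [configMeasure, Measure.pi_univ]
    simp [CellAux.torusMeasure_univ]
  have hne : configMeasure d n (repelEvent d (2 * t * rp) n) ≠ ⊤ := by
    refine ne_top_of_le_ne_top ?_ (measure_mono (Set.subset_univ _))
    rw [hprob]; exact ENNReal.one_ne_top
  rw [ge_iff_le, ← ENNReal.ofReal_le_iff_le_toReal hne]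
  refine le_trans (le_of_eq ?_) hunion
  have hnn : 0 ≤ unitBallVol d * s ^ d :=
    mul_nonneg ENNReal.toReal_nonneg (pow_nonneg hs.le _)
  rw [ENNReal.ofReal_mul (by positivity), ENNReal.ofReal_natCast, ENNReal.ofReal_pow hnn]
end

section
/- Let G be a d-regular simple graph on n vertices and let k ≥ 1 satisfy k·(d+1)² ≤ n. Then the repulsion inequality holds for the hard-core model on G: E[V_k · 1_{E_k}] ≥ E[V_k] · Pr[E_k]; equivalently, since Pr[E_k] > 0, E[V_k | E_k] ≥ E[V_k]. -/
open Finset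

/-- `V_k`: the fraction of vertices of `G` that are equal or adjacent to one of the `k`
chosen vertices `X 0, …, X (k-1)`. -/
noncomputable def coveredFrac {V : Type*} [Fintype V] [DecidableEq V] (G : SimpleGraph V)
    [DecidableRel G.Adj] {k : ℕ} (X : Fin k → V) : ℝ :=
  ((Finset.univ.filter fun v : V => ∃ i : Fin k, v = X i ∨ G.Adj v (X i)).card : ℝ) /
    (Fintype.card V : ℝ)

/-- `E_k`: the event (as a set of outcomes) that the `k` chosen vertices are pairwise
distinct and pairwise non-adjacent, i.e. form an independent set of size `k`. -/
def indepEvent {V : Type*} [Fintype V] [DecidableEq V] (G : SimpleGraph V)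
    [DecidableRel G.Adj] (k : ℕ) : Finset (Fin k → V) :=
  Finset.univ.filter fun X : Fin k → V =>
    ∀ i j : Fin k, i ≠ j → X i ≠ X j ∧ ¬ G.Adj (X i) (X j)

section HardcoreAux

variable {V : Type*} [Fintype V] [DecidableEq V] (G : SimpleGraph V) [DecidableRel G.Adj]

/-- The closed neighborhood of a vertex, as a `Finset`. -/
def cnbr (x : V) : Finset V := Finset.univ.filter fun u => x = u ∨ G.Adj x u

lemma mem_cnbr {x u : V} : u ∈ cnbr G x ↔ (x = u ∨ G.Adj x u) := by simp [cnbr]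

lemma cnbr_symm {x u : V} : u ∈ cnbr G x ↔ x ∈ cnbr G u := by
  simp [mem_cnbr, eq_comm, G.adj_comm]

lemma not_mem_cnbr_iff {x u : V} : u ∉ cnbr G x ↔ (x ≠ u ∧ ¬ G.Adj x u) := by
  simp [mem_cnbr, not_or]

lemma cnbr_eq_insert (x : V) : cnbr G x = insert x (G.neighborFinset x) := by
  ext u; simp [mem_cnbr, eq_comm (a := x) (b := u), G.adj_comm]

lemma card_cnbr {d : ℕ} (hreg : G.IsRegularOfDegree d) (x : V) :
    (cnbr G x).card = d + 1 := by
  rw [cnbr_eq_insert, card_insert_of_notMem (by simp)]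
  rw [G.card_neighborFinset_eq_degree, hreg x]

lemma sum_inter_cnbr {d : ℕ} (hreg : G.IsRegularOfDegree d) (A : Finset V) :
    ∑ y : V, (A ∩ cnbr G y).card = A.card * (d + 1) := by
  have h1 : ∀ y : V, (A ∩ cnbr G y).card = ∑ w ∈ A, if w ∈ cnbr G y then 1 else 0 := by
    intro y
    rw [← Finset.filter_mem_eq_inter, Finset.card_filter]
  simp_rw [h1]
  rw [Finset.sum_comm]
  have h2 : ∀ w : V, ∑ y : V, (if w ∈ cnbr G y then 1 else 0) = d + 1 := by
    intro w
    rw [← Finset.sum_filter, Finset.sum_const, smul_eq_mul, mul_one]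
    have : (Finset.univ.filter fun y => w ∈ cnbr G y) = cnbr G w := by
      ext y; simp [mem_filter, ← cnbr_symm]
    rw [this, card_cnbr G hreg]
  simp_rw [h2]
  simp [mul_comm]

lemma sum_inter_off_cnbr {d : ℕ} (hreg : G.IsRegularOfDegree d) (x : V) :
    ∑ y ∈ (cnbr G x)ᶜ, (cnbr G x ∩ cnbr G y).card ≤ d * d - d := by
  have htot : ∑ y ∈ cnbr G x, (cnbr G x ∩ cnbr G y).card
      + ∑ y ∈ (cnbr G x)ᶜ, (cnbr G x ∩ cnbr G y).card = (d+1) * (d+1) := by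
    rw [Finset.sum_add_sum_compl]
    have := sum_inter_cnbr G hreg (cnbr G x)
    rw [card_cnbr G hreg] at this
    exact this
  have hlow : 3 * d + 1 ≤ ∑ y ∈ cnbr G x, (cnbr G x ∩ cnbr G y).card := by
    nth_rewrite 1 [cnbr_eq_insert]
    rw [Finset.sum_insert (by simp)]
    have h1 : (cnbr G x ∩ cnbr G x).card = d + 1 := by
      rw [Finset.inter_self, card_cnbr G hreg]
    have h2 : ∀ y ∈ G.neighborFinset x, 2 ≤ (cnbr G x ∩ cnbr G y).card := by
      intro y hy
      rw [SimpleGraph.mem_neighborFinset] at hy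
      have hsub : ({x, y} : Finset V) ⊆ cnbr G x ∩ cnbr G y := by
        intro u hu
        simp only [Finset.mem_insert, Finset.mem_singleton] at hu
        rcases hu with rfl | rfl <;>
          simp [Finset.mem_inter, mem_cnbr, hy, hy.symm]
      calc 2 = ({x, y} : Finset V).card := by
                rw [Finset.card_insert_of_notMem (by simp [hy.ne]), Finset.card_singleton]
        _ ≤ _ := Finset.card_le_card hsub
    have h3 : ∑ y ∈ G.neighborFinset x, 2 ≤ ∑ y ∈ G.neighborFinset x, (cnbr G x ∩ cnbr G y).card :=
      Finset.sum_le_sum h2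
    rw [Finset.sum_const, smul_eq_mul, G.card_neighborFinset_eq_degree, hreg x] at h3
    omega
  have hd : (d+1) * (d+1) = d*d + 2*d + 1 := by ring
  omega

lemma mem_indepEvent {k : ℕ} {X : Fin k → V} :
    X ∈ indepEvent G k ↔ ∀ i j : Fin k, i ≠ j → X i ≠ X j ∧ ¬ G.Adj (X i) (X j) := by
  simp [indepEvent]

lemma indep_comp_perm {k : ℕ} (σ : Equiv.Perm (Fin k)) {X : Fin k → V}
    (hX : X ∈ indepEvent G k) : X ∘ σ ∈ indepEvent G k := by
  rw [mem_indepEvent] at hX ⊢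
  intro i j hij
  exact hX (σ i) (σ j) (fun h => hij (σ.injective h))

lemma card_tuples_in (S : Finset V) (k : ℕ) :
    (Finset.univ.filter fun X : Fin k → V => ∀ i, X i ∈ S).card = S.card ^ k := by
  have : (Finset.univ.filter fun X : Fin k → V => ∀ i, X i ∈ S)
      = Fintype.piFinset (fun _ : Fin k => S) := by
    ext X; simp [Fintype.mem_piFinset]
  rw [this, Fintype.card_piFinset]
  simp

lemma ext_count {d : ℕ} (hreg : G.IsRegularOfDegree d) (m : ℕ) :
    (Fintype.card V - m * (d + 1)) * (indepEvent G m).card ≤ (indepEvent G (m+1)).card := by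
  classical
  have hmap : ∀ X ∈ indepEvent G (m+1), (X ∘ Fin.castSucc) ∈ indepEvent G m := by
    intro X hX
    rw [mem_indepEvent] at hX ⊢
    intro i j hij
    exact hX _ _ (fun h => hij (Fin.castSucc_injective m h))
  rw [Finset.card_eq_sum_card_fiberwise hmap]
  have key : ∀ Y ∈ indepEvent G m, Fintype.card V - m * (d+1) ≤
      ((indepEvent G (m+1)).filter fun X => X ∘ Fin.castSucc = Y).card := by
    intro Y hY
    set A : Finset V := Finset.univ \ Finset.univ.biUnion (fun i => cnbr G (Y i)) with hA
    have hcardA : Fintype.card V - m * (d+1) ≤ A.card := by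
      rw [hA, Finset.card_sdiff_of_subset (Finset.subset_univ _), Finset.card_univ]
      apply Nat.sub_le_sub_left
      calc (Finset.univ.biUnion fun i => cnbr G (Y i)).card
          ≤ ∑ i : Fin m, (cnbr G (Y i)).card := Finset.card_biUnion_le
        _ = m * (d+1) := by
            simp [card_cnbr G hreg, Finset.sum_const, mul_comm]
    have himg : A.image (fun x => Fin.snoc Y x : V → Fin (m+1) → V)
        ⊆ (indepEvent G (m+1)).filter fun X => X ∘ Fin.castSucc = Y := by
      intro X hX
      rw [Finset.mem_image] at hX
      obtain ⟨x, hxA, rfl⟩ := hX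
      have hxn : ∀ i : Fin m, x ∉ cnbr G (Y i) := by
        intro i hi
        rw [hA, Finset.mem_sdiff] at hxA
        exact hxA.2 (Finset.mem_biUnion.mpr ⟨i, Finset.mem_univ i, hi⟩)
      rw [Finset.mem_filter]
      constructor
      · rw [mem_indepEvent]
        intro i j hij
        induction i using Fin.lastCases with
        | last =>
          induction j using Fin.lastCases with
          | last => exact absurd rfl hij
          | cast j' =>
            rw [Fin.snoc_last, Fin.snoc_castSucc]
            have := (not_mem_cnbr_iff G).mp (hxn j')
            exact ⟨Ne.symm this.1, fun h => this.2 h.symm⟩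
        | cast i' =>
          induction j using Fin.lastCases with
          | last =>
            rw [Fin.snoc_last, Fin.snoc_castSucc]
            have := (not_mem_cnbr_iff G).mp (hxn i')
            exact this
          | cast j' =>
            rw [Fin.snoc_castSucc, Fin.snoc_castSucc]
            have hij' : i' ≠ j' := fun h => hij (by rw [h])
            exact (mem_indepEvent G).mp hY i' j' hij'
      · funext i
        simp [Fin.snoc_castSucc]
    have hinj : Set.InjOn (fun x => Fin.snoc Y x : V → Fin (m+1) → V) A := by
      intro x _ y _ h
      have := congrFun h (Fin.last m)
      simpa [Fin.snoc_last] using this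
    calc Fintype.card V - m * (d+1) ≤ A.card := hcardA
      _ = (A.image (fun x => Fin.snoc Y x : V → Fin (m+1) → V)).card :=
          (Finset.card_image_of_injOn hinj).symm
      _ ≤ _ := Finset.card_le_card himg
  calc (Fintype.card V - m * (d + 1)) * (indepEvent G m).card
      = ∑ _Y ∈ indepEvent G m, (Fintype.card V - m * (d+1)) := by
        rw [Finset.sum_const, smul_eq_mul, mul_comm]
    _ ≤ _ := Finset.sum_le_sum key

lemma pair_sum_bound {d : ℕ} (hreg : G.IsRegularOfDegree d) (m : ℕ) :
    ∑ X ∈ indepEvent G (m+2), (cnbr G (X 0) ∩ cnbr G (X 1)).card ≤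
      Fintype.card V * (d * d - d) * (indepEvent G m).card := by
  classical
  set e : (Fin (m+2) → V) → (V × V) × (Fin m → V) :=
    fun X => ((X 0, X 1), fun a => X a.succ.succ) with he
  have hinj : Function.Injective e := by
    intro X X' h
    rw [he] at h
    simp only [Prod.mk.injEq] at h
    funext i
    induction i using Fin.cases with
    | zero => exact h.1.1
    | succ i' =>
      induction i' using Fin.cases with
      | zero => exact h.1.2
      | succ a => exact congrFun h.2 a
  set B : Finset (V × V) := Finset.univ.filter fun p : V × V => p.2 ∉ cnbr G p.1 with hB
  have himg : (indepEvent G (m+2)).image e ⊆ B ×ˢ indepEvent G m := by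
    intro p hp
    rw [Finset.mem_image] at hp
    obtain ⟨X, hX, rfl⟩ := hp
    rw [mem_indepEvent] at hX
    rw [Finset.mem_product]
    constructor
    · rw [hB, Finset.mem_filter]
      refine ⟨Finset.mem_univ _, ?_⟩
      rw [not_mem_cnbr_iff]
      exact hX 0 1 (by simp [Fin.ext_iff])
    · rw [mem_indepEvent]
      intro i j hij
      exact hX _ _ (fun h => hij (Fin.succ_injective _ (Fin.succ_injective _ h)))
  calc ∑ X ∈ indepEvent G (m+2), (cnbr G (X 0) ∩ cnbr G (X 1)).card
      = ∑ p ∈ (indepEvent G (m+2)).image e, (cnbr G p.1.1 ∩ cnbr G p.1.2).card := by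
        rw [Finset.sum_image (fun x _ y _ h => hinj h)]
    _ ≤ ∑ p ∈ B ×ˢ indepEvent G m, (cnbr G p.1.1 ∩ cnbr G p.1.2).card :=
        Finset.sum_le_sum_of_subset himg
    _ = ∑ b ∈ B, ∑ _Y ∈ indepEvent G m, (cnbr G b.1 ∩ cnbr G b.2).card := by
        rw [Finset.sum_product]
    _ = (∑ b ∈ B, (cnbr G b.1 ∩ cnbr G b.2).card) * (indepEvent G m).card := by
        simp [Finset.sum_const, mul_comm, Finset.sum_mul]
    _ ≤ (Fintype.card V * (d * d - d)) * (indepEvent G m).card := by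
        apply Nat.mul_le_mul_right
        calc ∑ b ∈ B, (cnbr G b.1 ∩ cnbr G b.2).card
            = ∑ x : V, ∑ y ∈ (cnbr G x)ᶜ, (cnbr G x ∩ cnbr G y).card := by
              rw [hB]
              rw [Finset.sum_filter]
              rw [Fintype.sum_prod_type]
              apply Finset.sum_congr rfl
              intro x _
              rw [← Finset.sum_filter]
              congr 1
              ext y; simp
          _ ≤ ∑ _x : V, (d * d - d) := Finset.sum_le_sum (fun x _ => sum_inter_off_cnbr G hreg x)
          _ = Fintype.card V * (d * d - d) := by simp [Finset.sum_const, Finset.card_univ]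

/-- The set of covered vertices. -/
def coverSet {k : ℕ} (X : Fin k → V) : Finset V :=
  Finset.univ.filter fun v : V => ∃ i : Fin k, v = X i ∨ G.Adj v (X i)

lemma coveredFrac_eq {k : ℕ} (X : Fin k → V) :
    coveredFrac G X = ((coverSet G X).card : ℝ) / (Fintype.card V : ℝ) := rfl

lemma coverSet_eq_biUnion {k : ℕ} (X : Fin k → V) :
    coverSet G X = Finset.univ.biUnion fun i => cnbr G (X i) := by
  ext v
  simp only [coverSet, Finset.mem_filter, Finset.mem_univ, true_and, Finset.mem_biUnion,
    mem_cnbr]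
  constructor
  · rintro ⟨i, h | h⟩
    · exact ⟨i, Or.inl h.symm⟩
    · exact ⟨i, Or.inr h.symm⟩
  · rintro ⟨i, h | h⟩
    · exact ⟨i, Or.inl h.symm⟩
    · exact ⟨i, Or.inr h.symm⟩

lemma sum_coverSet_card {d : ℕ} (hreg : G.IsRegularOfDegree d) (k : ℕ) :
    ∑ X : Fin k → V, (coverSet G X).card
      + Fintype.card V * (Fintype.card V - (d+1)) ^ k
      = Fintype.card V ^ k * Fintype.card V := by
  classical
  have hsplit : ∀ X : Fin k → V, (coverSet G X).card
      + (Finset.univ.filter fun v : V => ∀ i, X i ∈ (cnbr G v)ᶜ).card = Fintype.card V := by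
    intro X
    have : (Finset.univ.filter fun v : V => ∀ i, X i ∈ (cnbr G v)ᶜ)
        = Finset.univ.filter fun v : V => ¬ ∃ i : Fin k, v = X i ∨ G.Adj v (X i) := by
      apply Finset.filter_congr
      intro v _
      simp [mem_cnbr, not_or]
    rw [this, coverSet]
    rw [Finset.card_filter_add_card_filter_not]
    exact Finset.card_univ
  have hswap : ∑ X : Fin k → V, (Finset.univ.filter fun v : V => ∀ i, X i ∈ (cnbr G v)ᶜ).card
      = Fintype.card V * (Fintype.card V - (d+1)) ^ k := by
    have h1 : ∀ X : Fin k → V, (Finset.univ.filter fun v : V => ∀ i, X i ∈ (cnbr G v)ᶜ).card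
        = ∑ v : V, if (∀ i, X i ∈ (cnbr G v)ᶜ) then 1 else 0 := fun X => Finset.card_filter _ _
    simp_rw [h1]
    rw [Finset.sum_comm]
    have h2 : ∀ v : V, ∑ X : Fin k → V, (if (∀ i, X i ∈ (cnbr G v)ᶜ) then 1 else 0)
        = (Fintype.card V - (d+1)) ^ k := by
      intro v
      rw [← Finset.card_filter, card_tuples_in, Finset.card_compl, card_cnbr G hreg]
    simp_rw [h2]
    simp [Finset.sum_const, Finset.card_univ]
  calc ∑ X : Fin k → V, (coverSet G X).card
        + Fintype.card V * (Fintype.card V - (d+1)) ^ k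
      = ∑ X : Fin k → V, ((coverSet G X).card
          + (Finset.univ.filter fun v : V => ∀ i, X i ∈ (cnbr G v)ᶜ).card) := by
        rw [Finset.sum_add_distrib, hswap]
    _ = ∑ _X : Fin k → V, Fintype.card V := Finset.sum_congr rfl (fun X _ => hsplit X)
    _ = Fintype.card V ^ k * Fintype.card V := by
        simp [Finset.sum_const, Finset.card_univ, Fintype.card_pi]

lemma pair_transport (m : ℕ) (i0 j0 : Fin (m+2)) (hij : i0 ≠ j0) :
    ∑ X ∈ indepEvent G (m+2), (cnbr G (X i0) ∩ cnbr G (X j0)).card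
      = ∑ X ∈ indepEvent G (m+2), (cnbr G (X 0) ∩ cnbr G (X 1)).card := by
  classical
  set σ : Equiv.Perm (Fin (m+2)) :=
    (Equiv.swap 1 (Equiv.swap 0 i0 j0)).trans (Equiv.swap 0 i0) with hσ
  have h01 : (0 : Fin (m+2)) ≠ 1 := by simp [Fin.ext_iff]
  have hj2 : (Equiv.swap 0 i0 j0) ≠ 0 := by
    intro h
    apply hij
    have := congrArg (Equiv.swap 0 i0) h
    rw [Equiv.swap_apply_self, Equiv.swap_apply_left] at this
    exact this.symm
  have e1 : Equiv.swap 1 (Equiv.swap 0 i0 j0) 0 = 0 :=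
    Equiv.swap_apply_of_ne_of_ne h01 (fun h => hj2 h.symm)
  have hσ0 : σ 0 = i0 := by
    rw [hσ]
    simp only [Equiv.trans_apply, e1, Equiv.swap_apply_left]
  have hσ1 : σ 1 = j0 := by
    rw [hσ]
    simp only [Equiv.trans_apply]
    rw [Equiv.swap_apply_left, Equiv.swap_apply_self]
  apply Finset.sum_nbij' (i := fun X => X ∘ σ) (j := fun X => X ∘ σ.symm)
  · intro X hX; exact indep_comp_perm G σ hX
  · intro X hX; exact indep_comp_perm G σ.symm hX
  · intro X _; funext i; simp
  · intro X _; funext i; simp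
  · intro X _
    rw [← hσ0, ← hσ1]
    rfl

end HardcoreAux


lemma union_lower {V : Type*} [DecidableEq V] {ι : Type*} [DecidableEq ι]
    (t : ι → Finset V) (s : Finset ι) :
    3 * (∑ i ∈ s, ((t i).card : ℝ)) ≤
      2 * ((s.biUnion t).card : ℝ) + ∑ i ∈ s, ∑ j ∈ s, ((t i ∩ t j).card : ℝ) := by
  classical
  induction s using Finset.induction_on with
  | empty => simp
  | @insert a s ha ih =>
    rw [Finset.biUnion_insert]
    have hover : ((t a ∩ s.biUnion t).card : ℝ) ≤ ∑ j ∈ s, ((t a ∩ t j).card : ℝ) := by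
      have h1 : t a ∩ s.biUnion t = s.biUnion fun j => t a ∩ t j := by
        ext v; simp only [Finset.mem_inter, Finset.mem_biUnion]; tauto
      rw [h1]
      calc ((s.biUnion fun j => t a ∩ t j).card : ℝ)
          ≤ ((∑ j ∈ s, (t a ∩ t j).card : ℕ) : ℝ) := by
            exact_mod_cast Nat.cast_le.mpr (Finset.card_biUnion_le)
        _ = ∑ j ∈ s, ((t a ∩ t j).card : ℝ) := by push_cast; ring
    have hcu : ((t a ∪ s.biUnion t).card : ℝ) + ((t a ∩ s.biUnion t).card : ℝ)
        = ((t a).card : ℝ) + ((s.biUnion t).card : ℝ) := by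
      exact_mod_cast congrArg (Nat.cast (R := ℝ)) (Finset.card_union_add_card_inter _ _)
    rw [Finset.sum_insert ha, Finset.sum_insert ha]
    have hsyminner : ∀ i ∈ s, ∑ j ∈ insert a s, ((t i ∩ t j).card : ℝ)
        = ((t i ∩ t a).card : ℝ) + ∑ j ∈ s, ((t i ∩ t j).card : ℝ) := by
      intro i _; rw [Finset.sum_insert ha]
    rw [Finset.sum_congr rfl hsyminner, Finset.sum_insert ha, Finset.sum_add_distrib]
    have hsym : ∑ i ∈ s, ((t i ∩ t a).card : ℝ) = ∑ j ∈ s, ((t a ∩ t j).card : ℝ) := by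
      apply Finset.sum_congr rfl; intro i _; rw [Finset.inter_comm]
    rw [hsym]
    have hself : ((t a ∩ t a).card : ℝ) = ((t a).card : ℝ) := by rw [Finset.inter_self]
    rw [hself]
    linarith


lemma cubic_bound (x : ℝ) (h0 : 0 ≤ x) (h1 : x ≤ 1) (k : ℕ) :
    1 - k * x + k * (k - 1) / 2 * x ^ 2 - k * (k - 1) * (k - 2) / 6 * x ^ 3
      ≤ (1 - x) ^ k := by
  induction k with
  | zero => norm_num
  | succ k ih =>
    have hc : (0:ℝ) ≤ (k:ℝ) * ((k:ℝ) - 1) * ((k:ℝ) - 2) := by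
      rcases k with _ | _ | m
      · norm_num
      · norm_num
      · have hm : (0:ℝ) ≤ (m:ℝ) := Nat.cast_nonneg m
        have hp : (0:ℝ) ≤ ((m:ℝ)+2) * ((m:ℝ)+1) * (m:ℝ) :=
          mul_nonneg (mul_nonneg (by linarith) (by linarith)) hm
        push_cast
        nlinarith [hp]
    have hx : (0:ℝ) ≤ 1 - x := by linarith
    have step : (1 - x * 1) * (1 - k * x + k * (k - 1) / 2 * x ^ 2 - k * (k - 1) * (k - 2) / 6 * x ^ 3)
        ≤ (1 - x) ^ (k + 1) := by
      rw [pow_succ (1-x) k, mul_one]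
      calc (1 - x) * (1 - k * x + k * (k - 1) / 2 * x ^ 2 - k * (k - 1) * (k - 2) / 6 * x ^ 3)
          ≤ (1 - x) * (1-x)^k := mul_le_mul_of_nonneg_left ih hx
        _ = (1-x)^k * (1-x) := by ring
    push_cast
    nlinarith [mul_nonneg hc (pow_nonneg h0 4), step]

lemma num_core (N D M : ℝ) (hD : 1 ≤ D) (hM : 0 ≤ M) (hdens : (M+2)*D^2 ≤ N) :
    N*((D-1)*(D-2)) ≤ (D^2/N - M/3*(D^3/N^2))*(N-(M+2)*D)^2 := by
  have hN : 0 < N := by nlinarith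
  have h1 : M*D^3 ≤ N*D := by nlinarith
  have h2 : N*(D-1) ≤ D*(N - (M+2)*D) := by nlinarith
  have h3 : 0 ≤ N - (M+2)*D := by nlinarith
  have h2l : 0 ≤ N*(D-1) := by nlinarith
  have hB : N^2*(D-1)^2 ≤ D^2*(N-(M+2)*D)^2 := by nlinarith [mul_self_le_mul_self h2l h2]
  have hA : 0 ≤ 3*N*D^2 - M*D^3 := by nlinarith
  have hA' : N*D*(3*D-1) ≤ 3*N*D^2 - M*D^3 := by nlinarith
  have hBnn : 0 ≤ N^2*(D-1)^2 := by positivity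
  have hC : (N*D*(3*D-1)) * (N^2*(D-1)^2) ≤ (3*N*D^2 - M*D^3) * (D^2*(N-(M+2)*D)^2) :=
    mul_le_mul hA' hB hBnn hA
  have hfin : 3*N^3*(D-1)*(D-2)*D^2 ≤ (3*N*D^2 - M*D^3) * (D^2*(N-(M+2)*D)^2) := by
    nlinarith [hC, mul_nonneg (mul_nonneg (pow_nonneg hN.le 3) (sub_nonneg.mpr hD)) hN.le,
      pow_nonneg hN.le 3]
  have hD2 : (0:ℝ) < D^2 := by positivity
  have key : 3*N^3*(D-1)*(D-2) ≤ (3*N*D^2 - M*D^3) * (N-(M+2)*D)^2 := by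
    nlinarith [hfin, hD2]
  have heq : (D^2/N - M/3*(D^3/N^2))*(N-(M+2)*D)^2
      = ((3*N*D^2 - M*D^3) * (N-(M+2)*D)^2) / (3*N^2) := by
    field_simp
  rw [heq, le_div_iff₀ (by positivity)]
  nlinarith [key, hN]

/-- the pure real-arithmetic assembly -/
lemma final_ineq (m : ℕ) (N D I I2 W : ℝ)
    (hD : 1 ≤ D) (hdens : ((m:ℝ)+2)*D^2 ≤ N)
    (hI0 : 0 ≤ I) (hI20 : 0 ≤ I2)
    (hWlow : ((m:ℝ)+2) * D * I
        - (((m:ℝ)+2) * ((m:ℝ)+1) / 2) * (N * ((D-1)*(D-2)) * I2) ≤ W)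
    (hIlow : (N - ((m:ℝ)+2)*D)^2 * I2 ≤ I) :
    (N^(m+2) - (N-D)^(m+2)) * I * N ≤ W * N^(m+2) := by
  have hM0 : (0:ℝ) ≤ (m:ℝ) := Nat.cast_nonneg m
  have hN : 0 < N := by nlinarith
  have hDN : D ≤ N := by nlinarith
  -- coefficient nonnegativity and the core numeric inequality
  have hcoefeq : D^2/N - (m:ℝ)/3*(D^3/N^2) = (3*N*D^2 - (m:ℝ)*D^3)/(3*N^2) := by
    field_simp
  have hMD : (m:ℝ)*D^3 ≤ N*D := by nlinarith
  have hND3 : N*D ≤ 3*N*D^2 := by nlinarith [mul_le_mul_of_nonneg_left (by nlinarith : D ≤ 3*D^2) hN.le]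
  have hcoef : 0 ≤ D^2/N - (m:ℝ)/3*(D^3/N^2) := by
    rw [hcoefeq]
    apply div_nonneg _ (by positivity)
    linarith
  have hnum := num_core N D (m:ℝ) hD hM0 hdens
  have core : N*((D-1)*(D-2))*I2 ≤ (D^2/N - (m:ℝ)/3*(D^3/N^2))*I := by
    calc N*((D-1)*(D-2))*I2
        ≤ ((D^2/N - (m:ℝ)/3*(D^3/N^2))*(N-((m:ℝ)+2)*D)^2)*I2 :=
          mul_le_mul_of_nonneg_right hnum hI20
      _ = (D^2/N - (m:ℝ)/3*(D^3/N^2))*((N-((m:ℝ)+2)*D)^2*I2) := by ring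
      _ ≤ (D^2/N - (m:ℝ)/3*(D^3/N^2))*I := mul_le_mul_of_nonneg_left hIlow hcoef
  have c2nn : (0:ℝ) ≤ ((m:ℝ)+2)*((m:ℝ)+1)/2 := by positivity
  have hcore2 := mul_le_mul_of_nonneg_left core c2nn
  have stepB : (((m:ℝ)+2)*D - (((m:ℝ)+2)*((m:ℝ)+1)/2)*(D^2/N)
      + (((m:ℝ)+2)*((m:ℝ)+1)*(m:ℝ)/6)*(D^3/N^2)) * I ≤ W := by
    linarith [hWlow, hcore2]
  -- cubic lower bound for (1-x)^(m+2)
  have hx0 : 0 ≤ D/N := by positivity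
  have hx1 : D/N ≤ 1 := by rw [div_le_one hN]; exact hDN
  have hcubic := cubic_bound (D/N) hx0 hx1 (m+2)
  push_cast at hcubic
  have hND : N - D = N * (1 - D/N) := by field_simp
  have hpow : (N-D)^(m+2) = N^(m+2) * (1 - D/N)^(m+2) := by rw [hND, mul_pow]
  have hNp : (0:ℝ) ≤ N^(m+2) * N := by positivity
  have stepA : (N^(m+2) - (N-D)^(m+2)) * N
      ≤ (((m:ℝ)+2)*D - (((m:ℝ)+2)*((m:ℝ)+1)/2)*(D^2/N)
          + (((m:ℝ)+2)*((m:ℝ)+1)*(m:ℝ)/6)*(D^3/N^2)) * N^(m+2) := by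
    have h1 : (N^(m+2) - (N-D)^(m+2)) * N
        = N^(m+2) * N * (1 - (1 - D/N)^(m+2)) := by rw [hpow]; ring
    have h2 : 1 - (1 - D/N)^(m+2)
        ≤ ((m:ℝ)+2)*(D/N) - (((m:ℝ)+2)*(((m:ℝ)+2)-1)/2)*(D/N)^2
          + (((m:ℝ)+2)*(((m:ℝ)+2)-1)*(((m:ℝ)+2)-2)/6)*(D/N)^3 := by
      linarith [hcubic]
    have h3 := mul_le_mul_of_nonneg_left h2 hNp
    calc (N^(m+2) - (N-D)^(m+2)) * N
        = N^(m+2) * N * (1 - (1 - D/N)^(m+2)) := h1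
      _ ≤ N^(m+2) * N * (((m:ℝ)+2)*(D/N) - (((m:ℝ)+2)*(((m:ℝ)+2)-1)/2)*(D/N)^2
          + (((m:ℝ)+2)*(((m:ℝ)+2)-1)*(((m:ℝ)+2)-2)/6)*(D/N)^3) := h3
      _ = (((m:ℝ)+2)*D - (((m:ℝ)+2)*((m:ℝ)+1)/2)*(D^2/N)
          + (((m:ℝ)+2)*((m:ℝ)+1)*(m:ℝ)/6)*(D^3/N^2)) * N^(m+2) := by
          field_simp
          ring
  have h1 := mul_le_mul_of_nonneg_right stepA hI0
  have h2 := mul_le_mul_of_nonneg_right stepB (pow_nonneg hN.le (m+2))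
  have heq : (((m:ℝ)+2)*D - (((m:ℝ)+2)*((m:ℝ)+1)/2)*(D^2/N)
      + (((m:ℝ)+2)*((m:ℝ)+1)*(m:ℝ)/6)*(D^3/N^2)) * N^(m+2) * I
      = (((m:ℝ)+2)*D - (((m:ℝ)+2)*((m:ℝ)+1)/2)*(D^2/N)
      + (((m:ℝ)+2)*((m:ℝ)+1)*(m:ℝ)/6)*(D^3/N^2)) * I * N^(m+2) := by ring
  linarith [h1, h2, heq]

/-- **Repulsion inequality for the hard-core model on `d`-regular graphs**
(`thm:bipartite`).  Let `G` be a `d`-regular graph on `n` vertices and let `k ≥ 1` satisfy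
`k·(d+1)² ≤ n`.  Choosing `k` vertices independently and uniformly at random (with
replacement), we have `E[V_k · 1_{E_k}] ≥ E[V_k] · Pr[E_k]`. -/
theorem hardcore_repulsion {V : Type*} [Fintype V] [DecidableEq V] (G : SimpleGraph V)
    [DecidableRel G.Adj] (d k : ℕ) (hreg : G.IsRegularOfDegree d) (hk : 1 ≤ k)
    (hdens : k * (d + 1) ^ 2 ≤ Fintype.card V) :
    (∑ X ∈ indepEvent G k, coveredFrac G X) / (Fintype.card V : ℝ) ^ k ≥
      ((∑ X : Fin k → V, coveredFrac G X) / (Fintype.card V : ℝ) ^ k) *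
        (((indepEvent G k).card : ℝ) / (Fintype.card V : ℝ) ^ k) := by
  classical
  have hn1 : 1 ≤ Fintype.card V := by
    refine le_trans ?_ hdens
    calc 1 ≤ (d+1)^2 := Nat.one_le_pow _ _ (by omega)
      _ ≤ k * (d+1)^2 := Nat.le_mul_of_pos_left _ (by omega)
  have hNpos : (0:ℝ) < (Fintype.card V : ℝ) := by exact_mod_cast hn1
  match k, hk, hdens with
  | 1, _, hdens =>
    have hE : indepEvent G 1 = Finset.univ := by
      ext X
      simp only [indepEvent, Finset.mem_filter, Finset.mem_univ, true_and, iff_true]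
      intro i j hij
      exact absurd (Subsingleton.elim i j) hij
    rw [hE, Finset.card_univ]
    have hcard : ((Fintype.card (Fin 1 → V) : ℕ) : ℝ) = (Fintype.card V : ℝ) ^ 1 := by
      rw [Fintype.card_fun]
      simp
    rw [hcard, div_self (by positivity), mul_one]
  | (m+2), _, hdens =>
    have hD1 : (1:ℝ) ≤ (d:ℝ) + 1 := by
      have : (0:ℝ) ≤ (d:ℝ) := Nat.cast_nonneg d
      linarith
    have hdensR : ((m:ℝ)+2) * ((d:ℝ)+1)^2 ≤ (Fintype.card V:ℝ) := by
      exact_mod_cast Nat.cast_le.mpr hdens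
    have hM0 : (0:ℝ) ≤ (m:ℝ) := Nat.cast_nonneg m
    have hI0 : (0:ℝ) ≤ ((indepEvent G (m+2)).card : ℝ) := Nat.cast_nonneg _
    have hI20 : (0:ℝ) ≤ ((indepEvent G m).card : ℝ) := Nat.cast_nonneg _
    -- (A) identity for the unconditioned sum
    have hd1n : d + 1 ≤ Fintype.card V := by
      refine le_trans ?_ hdens
      calc d + 1 ≤ (d+1)^2 := Nat.le_self_pow (by omega) _
        _ ≤ (m+2) * (d+1)^2 := Nat.le_mul_of_pos_left _ (by omega)
    have hsub : ((Fintype.card V - (d+1) : ℕ):ℝ) = (Fintype.card V:ℝ) - ((d:ℝ)+1) := by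
      rw [Nat.cast_sub hd1n]; push_cast; ring
    have hSall : ∑ X : Fin (m+2) → V, coveredFrac G X
        = (Fintype.card V:ℝ)^(m+2) - ((Fintype.card V:ℝ) - ((d:ℝ)+1))^(m+2) := by
      have h0 := sum_coverSet_card G hreg (m+2)
      have hcast := congrArg (Nat.cast (R := ℝ)) h0
      push_cast at hcast
      rw [hsub] at hcast
      have hsum : ∑ X : Fin (m+2) → V, coveredFrac G X
          = (∑ X : Fin (m+2) → V, ((coverSet G X).card : ℝ)) / (Fintype.card V:ℝ) := by
        simp_rw [coveredFrac_eq G]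
        rw [Finset.sum_div]
      rw [hsum, div_eq_iff (ne_of_gt hNpos)]
      linear_combination hcast
    -- (B) extension lower bound, in ℝ
    have hm1 : (m+1)*(d+1) ≤ Fintype.card V := by
      refine le_trans ?_ hdens
      calc (m+1)*(d+1) ≤ (m+2)*(d+1) := Nat.mul_le_mul_right _ (by omega)
        _ ≤ (m+2)*(d+1)^2 := Nat.mul_le_mul_left _ (Nat.le_self_pow (by omega) _)
    have hm0 : m*(d+1) ≤ Fintype.card V := le_trans (Nat.mul_le_mul_right _ (by omega)) hm1
    have hext : (Fintype.card V - (m+1)*(d+1)) * ((Fintype.card V - m*(d+1)) * (indepEvent G m).card)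
        ≤ (indepEvent G (m+2)).card := by
      calc (Fintype.card V - (m+1)*(d+1)) * ((Fintype.card V - m*(d+1)) * (indepEvent G m).card)
          ≤ (Fintype.card V - (m+1)*(d+1)) * (indepEvent G (m+1)).card :=
            Nat.mul_le_mul_left _ (ext_count G hreg m)
        _ ≤ (indepEvent G (m+2)).card := ext_count G hreg (m+1)
    have hc1 : ((Fintype.card V - (m+1)*(d+1) : ℕ):ℝ)
        = (Fintype.card V:ℝ) - ((m:ℝ)+1)*((d:ℝ)+1) := by
      rw [Nat.cast_sub hm1]; push_cast; ring
    have hc0 : ((Fintype.card V - m*(d+1) : ℕ):ℝ)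
        = (Fintype.card V:ℝ) - (m:ℝ)*((d:ℝ)+1) := by
      rw [Nat.cast_sub hm0]; push_cast; ring
    have hextR : ((Fintype.card V:ℝ) - ((m:ℝ)+1)*((d:ℝ)+1)) *
        (((Fintype.card V:ℝ) - (m:ℝ)*((d:ℝ)+1)) * ((indepEvent G m).card : ℝ))
        ≤ ((indepEvent G (m+2)).card : ℝ) := by
      have := Nat.cast_le (α := ℝ).mpr hext
      push_cast at this
      rw [hc1, hc0] at this
      exact this
    have hKD : ((m:ℝ)+2)*((d:ℝ)+1) ≤ (Fintype.card V:ℝ) := by nlinarith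
    have hIlowR : ((Fintype.card V:ℝ) - ((m:ℝ)+2)*((d:ℝ)+1))^2 * ((indepEvent G m).card : ℝ)
        ≤ ((indepEvent G (m+2)).card : ℝ) := by
      have ha : (0:ℝ) ≤ (Fintype.card V:ℝ) - ((m:ℝ)+2)*((d:ℝ)+1) := by linarith
      have hD0 : (0:ℝ) ≤ (d:ℝ)+1 := by linarith
      nlinarith [hextR, mul_nonneg (mul_nonneg ha hD0) hI20,
        mul_nonneg (mul_nonneg hD0 hD0) hI20]
    -- (C) lower bound on the conditioned covered sum
    have hperX : ∀ X ∈ indepEvent G (m+2),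
        ((m:ℝ)+2) * ((d:ℝ)+1) - (∑ i : Fin (m+2), ∑ j ∈ Finset.univ.erase i,
          ((cnbr G (X i) ∩ cnbr G (X j)).card : ℝ)) / 2 ≤ ((coverSet G X).card : ℝ) := by
      intro X _
      have hu := union_lower (fun i => cnbr G (X i)) (Finset.univ : Finset (Fin (m+2)))
      rw [← coverSet_eq_biUnion G X] at hu
      have hcardsum : ∑ i : Fin (m+2), ((cnbr G (X i)).card : ℝ) = ((m:ℝ)+2) * ((d:ℝ)+1) := by
        simp_rw [card_cnbr G hreg]
        rw [Finset.sum_const, Finset.card_univ, Fintype.card_fin, nsmul_eq_mul]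
        push_cast; ring
      have hdiag : ∀ i : Fin (m+2), ∑ j : Fin (m+2), ((cnbr G (X i) ∩ cnbr G (X j)).card : ℝ)
          = ((d:ℝ)+1) + ∑ j ∈ Finset.univ.erase i, ((cnbr G (X i) ∩ cnbr G (X j)).card : ℝ) := by
        intro i
        rw [← Finset.add_sum_erase _ _ (Finset.mem_univ i)]
        congr 1
        rw [Finset.inter_self, card_cnbr G hreg]
        push_cast; ring
      have hsum2 : ∑ i : Fin (m+2), ∑ j : Fin (m+2), ((cnbr G (X i) ∩ cnbr G (X j)).card : ℝ)
          = ((m:ℝ)+2)*((d:ℝ)+1) + ∑ i : Fin (m+2), ∑ j ∈ Finset.univ.erase i,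
            ((cnbr G (X i) ∩ cnbr G (X j)).card : ℝ) := by
        calc ∑ i : Fin (m+2), ∑ j : Fin (m+2), ((cnbr G (X i) ∩ cnbr G (X j)).card : ℝ)
            = ∑ i : Fin (m+2), (((d:ℝ)+1) + ∑ j ∈ Finset.univ.erase i,
              ((cnbr G (X i) ∩ cnbr G (X j)).card : ℝ)) :=
              Finset.sum_congr rfl (fun i _ => hdiag i)
          _ = _ := by
              rw [Finset.sum_add_distrib, Finset.sum_const, Finset.card_univ, Fintype.card_fin,
                nsmul_eq_mul]
              push_cast; ring
      rw [hcardsum, hsum2] at hu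
      linarith
    have hdd : ((d*d - d : ℕ):ℝ) = (((d:ℝ)+1) - 1) * (((d:ℝ)+1) - 2) := by
      have hled : d ≤ d * d := by
        rcases d with _ | e
        · simp
        · exact Nat.le_mul_of_pos_left _ (by omega)
      rw [Nat.cast_sub hled]; push_cast; ring
    have hoffb : ∑ X ∈ indepEvent G (m+2), (∑ i : Fin (m+2), ∑ j ∈ Finset.univ.erase i,
          ((cnbr G (X i) ∩ cnbr G (X j)).card : ℝ))
        ≤ (((m:ℝ)+2) * ((m:ℝ)+1)) * ((Fintype.card V:ℝ) * ((((d:ℝ)+1)-1)*(((d:ℝ)+1)-2))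
            * ((indepEvent G m).card : ℝ)) := by
      rw [Finset.sum_comm]
      have hib : ∀ i : Fin (m+2), ∑ X ∈ indepEvent G (m+2), ∑ j ∈ Finset.univ.erase i,
          ((cnbr G (X i) ∩ cnbr G (X j)).card : ℝ)
          ≤ ((m:ℝ)+1) * ((Fintype.card V:ℝ) * ((((d:ℝ)+1)-1)*(((d:ℝ)+1)-2))
              * ((indepEvent G m).card : ℝ)) := by
        intro i
        rw [Finset.sum_comm]
        have hjb : ∀ j ∈ Finset.univ.erase i, ∑ X ∈ indepEvent G (m+2),
            ((cnbr G (X i) ∩ cnbr G (X j)).card : ℝ)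
            ≤ (Fintype.card V:ℝ) * ((((d:ℝ)+1)-1)*(((d:ℝ)+1)-2)) * ((indepEvent G m).card : ℝ) := by
          intro j hj
          have hij : i ≠ j := fun h => (Finset.mem_erase.mp hj).1 h.symm
          have htrans := pair_transport G m i j hij
          have hb := pair_sum_bound G hreg m
          calc ∑ X ∈ indepEvent G (m+2), ((cnbr G (X i) ∩ cnbr G (X j)).card : ℝ)
              = ((∑ X ∈ indepEvent G (m+2), (cnbr G (X i) ∩ cnbr G (X j)).card : ℕ) : ℝ) := by
                push_cast; ring
            _ = ((∑ X ∈ indepEvent G (m+2), (cnbr G (X 0) ∩ cnbr G (X 1)).card : ℕ) : ℝ) := by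
                exact_mod_cast congrArg (Nat.cast (R := ℝ)) htrans
            _ ≤ ((Fintype.card V * (d*d - d) * (indepEvent G m).card : ℕ) : ℝ) :=
                Nat.cast_le.mpr hb
            _ = (Fintype.card V:ℝ) * ((((d:ℝ)+1)-1)*(((d:ℝ)+1)-2)) * ((indepEvent G m).card : ℝ) := by
                rw [Nat.cast_mul, Nat.cast_mul, hdd]
        calc ∑ j ∈ Finset.univ.erase i, ∑ X ∈ indepEvent G (m+2),
              ((cnbr G (X i) ∩ cnbr G (X j)).card : ℝ)
            ≤ ∑ _j ∈ Finset.univ.erase i, ((Fintype.card V:ℝ) * ((((d:ℝ)+1)-1)*(((d:ℝ)+1)-2))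
                * ((indepEvent G m).card : ℝ)) := Finset.sum_le_sum hjb
          _ = ((m:ℝ)+1) * ((Fintype.card V:ℝ) * ((((d:ℝ)+1)-1)*(((d:ℝ)+1)-2))
                * ((indepEvent G m).card : ℝ)) := by
              rw [Finset.sum_const, Finset.card_erase_of_mem (Finset.mem_univ i),
                Finset.card_univ, Fintype.card_fin, nsmul_eq_mul]
              push_cast; ring
      calc ∑ i : Fin (m+2), ∑ X ∈ indepEvent G (m+2), ∑ j ∈ Finset.univ.erase i,
            ((cnbr G (X i) ∩ cnbr G (X j)).card : ℝ)
          ≤ ∑ _i : Fin (m+2), ((m:ℝ)+1) * ((Fintype.card V:ℝ)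
              * ((((d:ℝ)+1)-1)*(((d:ℝ)+1)-2)) * ((indepEvent G m).card : ℝ)) :=
            Finset.sum_le_sum (fun i _ => hib i)
        _ = _ := by
            rw [Finset.sum_const, Finset.card_univ, Fintype.card_fin, nsmul_eq_mul]
            push_cast; ring
    have hWlow : ((m:ℝ)+2) * ((d:ℝ)+1) * ((indepEvent G (m+2)).card : ℝ)
        - (((m:ℝ)+2) * ((m:ℝ)+1) / 2) * ((Fintype.card V:ℝ)
            * ((((d:ℝ)+1)-1)*(((d:ℝ)+1)-2)) * ((indepEvent G m).card : ℝ))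
        ≤ ∑ X ∈ indepEvent G (m+2), ((coverSet G X).card : ℝ) := by
      have h1 := Finset.sum_le_sum hperX
      rw [Finset.sum_sub_distrib, Finset.sum_const, nsmul_eq_mul, ← Finset.sum_div] at h1
      linarith [h1, hoffb]
    -- final assembly
    have key := final_ineq m (Fintype.card V:ℝ) ((d:ℝ)+1)
      ((indepEvent G (m+2)).card : ℝ) ((indepEvent G m).card : ℝ)
      (∑ X ∈ indepEvent G (m+2), ((coverSet G X).card : ℝ))
      hD1 hdensR hI0 hI20 hWlow hIlowR
    have hEsum : ∑ X ∈ indepEvent G (m+2), coveredFrac G X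
        = (∑ X ∈ indepEvent G (m+2), ((coverSet G X).card : ℝ)) / (Fintype.card V:ℝ) := by
      simp_rw [coveredFrac_eq G]
      rw [Finset.sum_div]
    rw [ge_iff_le, hSall, hEsum, div_mul_div_comm, div_div,
      div_le_div_iff₀ (by positivity) (by positivity)]
    have h2 := mul_le_mul_of_nonneg_right key (pow_nonneg hNpos.le (m+2))
    calc ((Fintype.card V:ℝ)^(m+2) - ((Fintype.card V:ℝ) - ((d:ℝ)+1))^(m+2))
          * ((indepEvent G (m+2)).card : ℝ) * ((Fintype.card V:ℝ) * (Fintype.card V:ℝ)^(m+2))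
        = ((Fintype.card V:ℝ)^(m+2) - ((Fintype.card V:ℝ) - ((d:ℝ)+1))^(m+2))
          * ((indepEvent G (m+2)).card : ℝ) * (Fintype.card V:ℝ) * (Fintype.card V:ℝ)^(m+2) := by
          ring
      _ ≤ (∑ X ∈ indepEvent G (m+2), ((coverSet G X).card : ℝ)) * (Fintype.card V:ℝ)^(m+2)
          * (Fintype.card V:ℝ)^(m+2) := h2
      _ = (∑ X ∈ indepEvent G (m+2), ((coverSet G X).card : ℝ))
          * ((Fintype.card V:ℝ)^(m+2) * (Fintype.card V:ℝ)^(m+2)) := by ring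
end

section
/- Let G be a d-regular simple graph on n vertices and let k satisfy k·(d+1)² ≤ n. Then the number IS(k) of independent sets of size k in G satisfies IS(k) ≤ (n^k / k!) · (1 − (d+1)/n)^(k choose 2). -/
open Finset

namespace IndepCount

variable {V : Type*} [Fintype V] [DecidableEq V] (G : SimpleGraph V) [DecidableRel G.Adj]

def good {i : ℕ} (t : Fin i → V) : Prop :=
  ∀ p q : Fin i, p ≠ q → t p ≠ t q ∧ ¬ G.Adj (t p) (t q)

instance {i : ℕ} : DecidablePred (good (V := V) G (i := i)) := by
  unfold good; infer_instance

def tupF (i : ℕ) : Finset (Fin i → V) := univ.filter (good G)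

def f (i : ℕ) : ℕ := (tupF G i).card

lemma good_comp {i j : ℕ} {t : Fin i → V} (ht : good G t) {e : Fin j → Fin i}
    (he : Function.Injective e) : good G (t ∘ e) := by
  intro p q hpq; exact ht (e p) (e q) fun h => hpq (he h)

lemma good_inj {i : ℕ} {t : Fin i → V} (ht : good G t) : Function.Injective t := by
  intro p q h
  by_contra hpq
  exact (ht p q hpq).1 h

lemma f_zero : f G 0 = 1 := by
  have : tupF G 0 = univ := by
    apply filter_true_of_mem
    intro t _ p q h
    exact p.elim0
  rw [f, this, card_univ]
  simp

/-- orderings: each independent `k`-set gives `k!` good tuples -/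
lemma indep_mul_factorial_le (k : ℕ) :
    (((univ : Finset V).powersetCard k).filter
        (fun s : Finset V => ∀ v ∈ s, ∀ w ∈ s, ¬ G.Adj v w)).card * k.factorial ≤ f G k := by
  classical
  set A := (((univ : Finset V).powersetCard k).filter
      (fun s : Finset V => ∀ v ∈ s, ∀ w ∈ s, ¬ G.Adj v w)) with hA
  have hmaps : ∀ t ∈ tupF G k, (univ.image t : Finset V) ∈ A := by
    intro t ht
    rw [tupF, mem_filter] at ht
    have hinj := good_inj G ht.2
    rw [hA, mem_filter, mem_powersetCard]
    refine ⟨⟨subset_univ _, ?_⟩, ?_⟩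
    · rw [card_image_of_injective _ hinj, card_univ, Fintype.card_fin]
    · intro v hv w hw hadj
      obtain ⟨p, -, rfl⟩ := mem_image.1 hv
      obtain ⟨q, -, rfl⟩ := mem_image.1 hw
      rcases eq_or_ne p q with rfl | hpq
      · exact G.irrefl hadj
      · exact (ht.2 p q hpq).2 hadj
  have hsum : f G k = ∑ s ∈ A, ((tupF G k).filter (fun t => univ.image t = s)).card :=
    card_eq_sum_card_fiberwise hmaps
  have hfiber : ∀ s ∈ A, k.factorial ≤ ((tupF G k).filter (fun t => univ.image t = s)).card := by
    intro s hs
    rw [hA, mem_filter, mem_powersetCard] at hs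
    obtain ⟨⟨-, hcard⟩, hindep⟩ := hs
    -- injection from permutations
    have hfc : Fintype.card {x // x ∈ s} = k := by rw [Fintype.card_coe, hcard]
    set E : Fin k ≃ {x // x ∈ s} := (Fintype.equivFinOfCardEq hfc).symm with hE
    have hcp : k.factorial = (univ : Finset (Equiv.Perm (Fin k))).card := by
      rw [card_univ, Fintype.card_perm, Fintype.card_fin]
    rw [hcp]
    apply Finset.card_le_card_of_injOn
      (fun σ : Equiv.Perm (Fin k) => (fun p => (E (σ p) : V)))
    · intro σ _
      have hin : ∀ p : Fin k, (E (σ p) : V) ∈ s := fun p => coe_mem _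
      have hinj : Function.Injective (fun p => (E (σ p) : V)) := by
        intro p q h
        exact σ.injective (E.injective (Subtype.coe_injective h))
      simp only [mem_coe, mem_filter]
      constructor
      · rw [tupF, mem_filter]
        refine ⟨mem_univ _, fun p q hpq => ⟨fun h => hpq (hinj h), hindep _ (hin p) _ (hin q)⟩⟩
      · apply eq_of_subset_of_card_le
        · intro v hv
          obtain ⟨p, -, rfl⟩ := mem_image.1 hv
          exact hin p
        · rw [card_image_of_injective _ hinj, card_univ, Fintype.card_fin, hcard]
    · intro σ _ τ _ h
      refine Equiv.ext fun p => ?_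
      have h2 := congrFun h p
      simpa using E.injective (Subtype.coe_injective h2)
  calc A.card * k.factorial = ∑ _s ∈ A, k.factorial := by rw [sum_const, smul_eq_mul]
    _ ≤ ∑ s ∈ A, ((tupF G k).filter (fun t => univ.image t = s)).card := sum_le_sum hfiber
    _ = f G k := hsum.symm

/-! ### closed neighborhoods and the extension recursion -/

def cl (v : V) : Finset V := insert v (G.neighborFinset v)

lemma card_cl {d : ℕ} (hreg : G.IsRegularOfDegree d) (v : V) : (cl G v).card = d + 1 := by
  rw [cl, card_insert_of_notMem (G.notMem_neighborFinset_self v),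
    G.card_neighborFinset_eq_degree, hreg v]

lemma mem_cl {v w : V} : w ∈ cl G v ↔ w = v ∨ G.Adj v w := by
  rw [cl, mem_insert, SimpleGraph.mem_neighborFinset]

def Un {i : ℕ} (t : Fin i → V) : Finset V := univ.biUnion (fun p => cl G (t p))

def extF {i : ℕ} (t : Fin i → V) : Finset V := (Un G t)ᶜ

lemma card_extF_add {i : ℕ} (t : Fin i → V) :
    (extF G t).card + (Un G t).card = Fintype.card V := by
  rw [extF, add_comm]
  exact card_add_card_compl _

lemma card_Un_le {d i : ℕ} (hreg : G.IsRegularOfDegree d) (t : Fin i → V) :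
    (Un G t).card ≤ i * (d + 1) := by
  calc (Un G t).card ≤ ∑ p : Fin i, (cl G (t p)).card := card_biUnion_le
    _ = i * (d+1) := by
        simp only [card_cl G hreg]
        rw [sum_const, card_univ, Fintype.card_fin, smul_eq_mul]

/-- the fiberwise decomposition of `(i+1)`-tuples over `i`-tuples -/
lemma f_succ (i : ℕ) :
    f G (i + 1) = ∑ t ∈ tupF G i, (extF G t).card := by
  have hmaps : ∀ T ∈ tupF G (i+1), (T ∘ Fin.castSucc) ∈ tupF G i := by
    intro T hT
    rw [tupF, mem_filter] at hT ⊢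
    exact ⟨mem_univ _, good_comp G hT.2 (Fin.castSucc_injective i)⟩
  rw [f, card_eq_sum_card_fiberwise hmaps]
  apply sum_congr rfl
  intro t ht
  rw [tupF, mem_filter] at ht
  refine card_bij' (fun T _ => T (Fin.last i)) (fun v _ => Fin.snoc t v) ?hi ?hj ?li ?ri
  case hi =>
    intro T hT
    beta_reduce
    rw [mem_filter] at hT
    obtain ⟨hT1, hT2⟩ := hT
    rw [tupF, mem_filter] at hT1
    rw [extF, mem_compl, Un, mem_biUnion]
    rintro ⟨p, -, hp⟩
    rw [mem_cl] at hp
    have hne : Fin.castSucc p ≠ Fin.last i := Fin.ne_of_lt (Fin.castSucc_lt_last p)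
    have := hT1.2 (Fin.castSucc p) (Fin.last i) hne
    have htp : t p = T (Fin.castSucc p) := by rw [← hT2]; rfl
    rcases hp with h | h
    · exact this.1 (h.trans htp).symm
    · rw [htp] at h
      exact this.2 h
  case hj =>
    intro v hv
    beta_reduce
    rw [extF, mem_compl, Un, mem_biUnion] at hv
    push_neg at hv
    have hv' : ∀ p : Fin i, v ≠ t p ∧ ¬ G.Adj (t p) v := by
      intro p
      have := hv p (mem_univ p)
      rw [mem_cl] at this
      push_neg at this
      exact this
    rw [mem_filter]
    constructor
    · rw [tupF, mem_filter]
      refine ⟨mem_univ _, ?_⟩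
      intro p q hpq
      induction p using Fin.lastCases with
      | last =>
        induction q using Fin.lastCases with
        | last => exact absurd rfl hpq
        | cast q =>
          rw [Fin.snoc_last, Fin.snoc_castSucc]
          exact ⟨(hv' q).1, fun h => (hv' q).2 h.symm⟩
      | cast p =>
        induction q using Fin.lastCases with
        | last =>
          rw [Fin.snoc_last, Fin.snoc_castSucc]
          refine ⟨fun h => (hv' p).1 h.symm, fun h => (hv' p).2 h⟩
        | cast q =>
          rw [Fin.snoc_castSucc, Fin.snoc_castSucc]
          exact ht.2 p q (fun h => hpq (congrArg Fin.castSucc h))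
    · funext p
      simp [Fin.snoc_castSucc]
  case li =>
    intro T hT
    beta_reduce
    rw [mem_filter] at hT
    rw [← hT.2]
    exact Fin.snoc_init_self T
  case ri =>
    intro v hv
    exact Fin.snoc_last _ _

/-! ### Bonferroni-type inequality -/

lemma bonferroni {ι : Type*} [DecidableEq ι] (s : Finset ι) (A : ι → Finset V) :
    2 * ∑ p ∈ s, (A p).card ≤
      2 * (s.biUnion A).card + ∑ pq ∈ s.offDiag, ((A pq.1) ∩ (A pq.2)).card := by
  induction s using Finset.induction_on with
  | empty => simp
  | @insert a s ha ih =>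
    rw [sum_insert ha, offDiag_insert ha, biUnion_insert]
    have hdisj1 : Disjoint (s.offDiag ∪ {a} ×ˢ s) (s ×ˢ {a}) := by
      rw [disjoint_right]
      rintro ⟨x, y⟩ hxy hmem
      rw [mem_product, mem_singleton] at hxy
      rw [mem_union] at hmem
      rcases hmem with h | h
      · rw [mem_offDiag] at h
        exact ha (hxy.2 ▸ h.2.1)
      · rw [mem_product, mem_singleton] at h
        exact ha (h.1 ▸ hxy.1)
    have hdisj2 : Disjoint s.offDiag ({a} ×ˢ s) := by
      rw [disjoint_right]
      rintro ⟨x, y⟩ hxy hmem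
      rw [mem_product, mem_singleton] at hxy
      rw [mem_offDiag] at hmem
      exact ha (hxy.1 ▸ hmem.1)
    rw [sum_union hdisj1, sum_union hdisj2]
    have hAcap : (A a) ∩ (s.biUnion A) = s.biUnion (fun p => A a ∩ A p) := by
      ext v; simp [mem_biUnion, mem_inter]; tauto
    have hkey : (A a).card + (s.biUnion A).card
        = ((A a) ∪ s.biUnion A).card + ((A a) ∩ s.biUnion A).card :=
      (card_union_add_card_inter _ _).symm
    have hcap_le : ((A a) ∩ s.biUnion A).card ≤ ∑ p ∈ s, (A a ∩ A p).card := by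
      rw [hAcap]; exact card_biUnion_le
    have h1 : ∑ pq ∈ {a} ×ˢ s, ((A pq.1) ∩ (A pq.2)).card = ∑ p ∈ s, (A a ∩ A p).card := by
      rw [Finset.sum_product, sum_singleton]
    have h2 : ∑ pq ∈ s ×ˢ {a}, ((A pq.1) ∩ (A pq.2)).card = ∑ p ∈ s, (A p ∩ A a).card := by
      rw [Finset.sum_product]
      apply sum_congr rfl
      intro p _
      rw [sum_singleton]
    have h3 : ∀ p, (A p ∩ A a).card = (A a ∩ A p).card := by
      intro p; rw [inter_comm]
    rw [h1, h2]
    simp only [h3]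
    omega
  done

/-! ### codegree counting -/

lemma codeg_sum_le {d : ℕ} (hreg : G.IsRegularOfDegree d) :
    ∑ uw ∈ (univ : Finset V).offDiag,
        ((G.neighborFinset uw.1) ∩ (G.neighborFinset uw.2)).card
      ≤ Fintype.card V * (d * d - d) := by
  have hcard : ∀ (u w : V), ((G.neighborFinset u) ∩ (G.neighborFinset w)).card
      = ∑ m : V, if G.Adj u m ∧ G.Adj w m then 1 else 0 := by
    intro u w
    rw [← sum_filter]
    rw [sum_const, smul_eq_mul, mul_one]
    congr 1
    ext m
    simp [SimpleGraph.mem_neighborFinset]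
  calc ∑ uw ∈ (univ : Finset V).offDiag,
        ((G.neighborFinset uw.1) ∩ (G.neighborFinset uw.2)).card
      = ∑ uw ∈ (univ : Finset V).offDiag, ∑ m : V, if G.Adj uw.1 m ∧ G.Adj uw.2 m then 1 else 0 := by
        apply sum_congr rfl; intro uw _; exact hcard uw.1 uw.2
    _ = ∑ m : V, ∑ uw ∈ (univ : Finset V).offDiag, if G.Adj uw.1 m ∧ G.Adj uw.2 m then 1 else 0 :=
        sum_comm
    _ = ∑ m : V, ((G.neighborFinset m).offDiag).card := by
        apply sum_congr rfl
        intro m _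
        rw [← sum_filter, sum_const, smul_eq_mul, mul_one]
        congr 1
        ext uw
        simp only [mem_filter, mem_offDiag, mem_univ, true_and, SimpleGraph.mem_neighborFinset]
        constructor
        · rintro ⟨hne, h1, h2⟩
          exact ⟨h1.symm, h2.symm, hne⟩
        · rintro ⟨h1, h2, hne⟩
          exact ⟨hne, h1.symm, h2.symm⟩
    _ = Fintype.card V * (d * d - d) := by
        rw [← card_univ, ← smul_eq_mul, ← sum_const]
        apply sum_congr rfl
        intro m _
        rw [offDiag_card, G.card_neighborFinset_eq_degree, hreg m]
    _ ≤ Fintype.card V * (d * d - d) := le_rfl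

/-! ### the codegree weight of a tuple -/

def ctup {i : ℕ} (t : Fin i → V) : ℕ :=
  ∑ pq ∈ (univ : Finset (Fin i)).offDiag,
    ((G.neighborFinset (t pq.1)) ∩ (G.neighborFinset (t pq.2))).card

lemma ctup_small {i : ℕ} (hi : i ≤ 1) (t : Fin i → V) : ctup G t = 0 := by
  rw [ctup]
  apply sum_eq_zero
  rintro ⟨p, q⟩ hpq
  rw [mem_offDiag] at hpq
  exact absurd (Fin.ext (by omega : p.val = q.val)) hpq.2.2

lemma cl_inter_subset {u w : V} (hne : u ≠ w) (hadj : ¬ G.Adj u w) :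
    cl G u ∩ cl G w ⊆ (G.neighborFinset u) ∩ (G.neighborFinset w) := by
  intro m hm
  rw [mem_inter, mem_cl, mem_cl] at hm
  rw [mem_inter, SimpleGraph.mem_neighborFinset, SimpleGraph.mem_neighborFinset]
  obtain ⟨h1, h2⟩ := hm
  rcases h1 with rfl | h1
  · rcases h2 with rfl | h2
    · exact absurd rfl hne
    · exact absurd h2.symm hadj
  · rcases h2 with rfl | h2
    · exact absurd h1 hadj
    · exact ⟨h1, h2⟩

/-- fixed-positions codegree sum bound -/
lemma pos_sum_le (j : ℕ) {p q : Fin (j+2)} (hpq : p ≠ q) :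
    ∑ t ∈ tupF G (j+2), ((G.neighborFinset (t p)) ∩ (G.neighborFinset (t q))).card
      ≤ (∑ uw ∈ (univ : Finset V).offDiag,
          ((G.neighborFinset uw.1) ∩ (G.neighborFinset uw.2)).card) * f G j := by
  classical
  have hmaps : ∀ t ∈ tupF G (j+2), ((t p, t q) : V × V) ∈ (univ : Finset V).offDiag := by
    intro t ht
    rw [tupF, mem_filter] at ht
    rw [mem_offDiag]
    exact ⟨mem_univ _, mem_univ _, (ht.2 p q hpq).1⟩
  rw [← sum_fiberwise_of_maps_to hmaps
    (fun t => ((G.neighborFinset (t p)) ∩ (G.neighborFinset (t q))).card)]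
  have hfiber : ∀ uw ∈ (univ : Finset V).offDiag,
      ((tupF G (j+2)).filter (fun t => ((t p, t q) : V × V) = uw)).card ≤ f G j := by
    intro uw _
    -- embed by forgetting coordinates p and q
    have hsub : ({p, q} : Finset (Fin (j+2))) ⊆ univ := subset_univ _
    have hc2 : ({p, q} : Finset (Fin (j+2))).card = 2 := card_pair hpq
    have hcard : ((univ : Finset (Fin (j+2))) \ {p, q}).card = j := by
      rw [card_sdiff_of_subset hsub, hc2, card_univ, Fintype.card_fin]
      omega
    set e := ((univ : Finset (Fin (j+2))) \ {p, q}).orderEmbOfFin hcard with he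
    apply card_le_card_of_injOn (fun t => t ∘ e)
    · intro t ht
      beta_reduce
      rw [mem_coe, mem_filter] at ht
      have htg : good G t := by
        have h1 := ht.1
        rw [tupF, mem_filter] at h1
        exact h1.2
      rw [mem_coe, tupF, mem_filter]
      exact ⟨mem_univ _, good_comp G htg e.injective⟩
    · intro t ht t' ht' hee
      simp only [mem_coe, mem_filter] at ht ht'
      have hpair : ((t p, t q) : V × V) = (t' p, t' q) := ht.2.trans ht'.2.symm
      have hp : t p = t' p := congrArg Prod.fst hpair
      have hq : t q = t' q := congrArg Prod.snd hpair
      funext r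
      by_cases hr : r ∈ ((univ : Finset (Fin (j+2))) \ {p, q})
      · have : r ∈ Set.range (e : Fin j → Fin (j+2)) := by
          rw [he, range_orderEmbOfFin]
          exact hr
        obtain ⟨y, hy⟩ := this
        have := congrFun hee y
        simpa [hy] using this
      · rw [mem_sdiff, not_and, not_not] at hr
        have := hr (mem_univ r)
        rw [mem_insert, mem_singleton] at this
        rcases this with rfl | rfl
        · exact hp
        · exact hq
  calc ∑ uw ∈ (univ : Finset V).offDiag, ∑ t ∈ (tupF G (j+2)).filter
          (fun t => ((t p, t q) : V × V) = uw),
          ((G.neighborFinset (t p)) ∩ (G.neighborFinset (t q))).card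
      ≤ ∑ uw ∈ (univ : Finset V).offDiag,
          ((G.neighborFinset uw.1) ∩ (G.neighborFinset uw.2)).card * f G j := by
        apply sum_le_sum
        intro uw huw
        have : ∑ t ∈ (tupF G (j+2)).filter (fun t => ((t p, t q) : V × V) = uw),
            ((G.neighborFinset (t p)) ∩ (G.neighborFinset (t q))).card
            = ∑ _t ∈ (tupF G (j+2)).filter (fun t => ((t p, t q) : V × V) = uw),
            ((G.neighborFinset uw.1) ∩ (G.neighborFinset uw.2)).card := by
          apply sum_congr rfl
          intro t ht
          rw [mem_filter] at ht
          rw [← ht.2]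
        rw [this, sum_const, smul_eq_mul, mul_comm]
        exact Nat.mul_le_mul_left _ (hfiber uw huw)
    _ = (∑ uw ∈ (univ : Finset V).offDiag,
          ((G.neighborFinset uw.1) ∩ (G.neighborFinset uw.2)).card) * f G j := by
        rw [sum_mul]

/-- total codegree bound -/
lemma C_le {d : ℕ} (hreg : G.IsRegularOfDegree d) (j : ℕ) :
    ∑ t ∈ tupF G (j+2), ctup G t
      ≤ ((j+2)*(j+2) - (j+2)) * (Fintype.card V * (d * d - d) * f G j) := by
  unfold ctup
  rw [sum_comm]
  calc ∑ pq ∈ (univ : Finset (Fin (j+2))).offDiag, ∑ t ∈ tupF G (j+2),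
        ((G.neighborFinset (t pq.1)) ∩ (G.neighborFinset (t pq.2))).card
      ≤ ∑ pq ∈ (univ : Finset (Fin (j+2))).offDiag,
          (Fintype.card V * (d * d - d) * f G j) := by
        apply sum_le_sum
        rintro ⟨p, q⟩ hpq
        rw [mem_offDiag] at hpq
        calc ∑ t ∈ tupF G (j+2), ((G.neighborFinset (t p)) ∩ (G.neighborFinset (t q))).card
            ≤ (∑ uw ∈ (univ : Finset V).offDiag,
                ((G.neighborFinset uw.1) ∩ (G.neighborFinset uw.2)).card) * f G j :=
              pos_sum_le G j hpq.2.2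
          _ ≤ Fintype.card V * (d * d - d) * f G j :=
              Nat.mul_le_mul_right _ (codeg_sum_le G hreg)
    _ = ((j+2)*(j+2) - (j+2)) * (Fintype.card V * (d * d - d) * f G j) := by
        rw [sum_const, smul_eq_mul, offDiag_card, card_univ, Fintype.card_fin]

/-- lower recursion -/
lemma key_lower {d : ℕ} (hreg : G.IsRegularOfDegree d) (i : ℕ) :
    Fintype.card V * f G i ≤ f G (i+1) + i*(d+1) * f G i := by
  rw [f_succ]
  have : ∀ t ∈ tupF G i, Fintype.card V ≤ (extF G t).card + i*(d+1) := by
    intro t _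
    have h1 := card_extF_add G t
    have h2 := card_Un_le G hreg t
    omega
  calc Fintype.card V * f G i = ∑ _t ∈ tupF G i, Fintype.card V := by
        rw [sum_const, smul_eq_mul, mul_comm]
        rfl
    _ ≤ ∑ t ∈ tupF G i, ((extF G t).card + i*(d+1)) := sum_le_sum this
    _ = (∑ t ∈ tupF G i, (extF G t).card) + i*(d+1) * f G i := by
        rw [sum_add_distrib, sum_const, smul_eq_mul]
        simp only [f]
        ring

/-- upper recursion with codegree error term -/
lemma key_upper {d : ℕ} (hreg : G.IsRegularOfDegree d) (i : ℕ) :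
    2 * f G (i+1) + 2 * (i*(d+1)) * f G i
      ≤ 2 * Fintype.card V * f G i + ∑ t ∈ tupF G i, ctup G t := by
  rw [f_succ]
  have hpt : ∀ t ∈ tupF G i,
      2 * (extF G t).card + 2 * (i*(d+1)) ≤ 2 * Fintype.card V + ctup G t := by
    intro t ht
    rw [tupF, mem_filter] at ht
    have hbon := bonferroni (univ : Finset (Fin i)) (fun p => cl G (t p))
    have hsum1 : ∑ p : Fin i, (cl G (t p)).card = i * (d+1) := by
      simp only [card_cl G hreg]
      rw [sum_const, card_univ, Fintype.card_fin, smul_eq_mul]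
    have hcc : ∑ pq ∈ (univ : Finset (Fin i)).offDiag,
        ((cl G (t pq.1)) ∩ (cl G (t pq.2))).card ≤ ctup G t := by
      apply sum_le_sum
      rintro ⟨p, q⟩ hpq
      rw [mem_offDiag] at hpq
      have hgood := ht.2 p q hpq.2.2
      exact card_le_card (cl_inter_subset G hgood.1 hgood.2)
    have hun : (univ : Finset (Fin i)).biUnion (fun p => cl G (t p)) = Un G t := rfl
    rw [hsum1, hun] at hbon
    have h1 := card_extF_add G t
    omega
  calc 2 * (∑ t ∈ tupF G i, (extF G t).card) + 2 * (i*(d+1)) * f G i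
      = ∑ t ∈ tupF G i, (2 * (extF G t).card + 2 * (i*(d+1))) := by
        rw [sum_add_distrib, ← mul_sum, sum_const, smul_eq_mul]
        simp only [f]
        ring
    _ ≤ ∑ t ∈ tupF G i, (2 * Fintype.card V + ctup G t) := sum_le_sum hpt
    _ = 2 * Fintype.card V * f G i + ∑ t ∈ tupF G i, ctup G t := by
        rw [sum_add_distrib, sum_const, smul_eq_mul]
        simp only [f]
        ring

/-! ### the analytic inequality -/

lemma analytic {d k n : ℕ} (hk : 1 ≤ k) (hdens : k * (d+1)^2 ≤ n) :
    ∀ i : ℕ, i ≤ k →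
      1 - (i:ℝ) * (((d:ℝ)+1)/(n:ℝ))
          + (i:ℝ)*((i:ℝ)-1)/2 * ((d:ℝ)*((d:ℝ)+1)/(n:ℝ)^2)
        ≤ (1 - ((d:ℝ)+1)/(n:ℝ))^i := by
  have hn1 : (d+1)^2 ≤ n := le_trans (by nlinarith) hdens
  have hnR : (0:ℝ) < (n:ℝ) := by
    have : 0 < n := lt_of_lt_of_le (by positivity) hn1
    exact_mod_cast this
  have hd1n : ((d:ℝ)+1) ≤ (n:ℝ) := by
    have : (d+1) ≤ n := le_trans (Nat.le_of_lt_succ (by nlinarith)) hn1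
    have h2 : ((d+1:ℕ):ℝ) ≤ (n:ℝ) := by exact_mod_cast this
    push_cast at h2
    linarith
  have hx1 : (0:ℝ) ≤ 1 - ((d:ℝ)+1)/(n:ℝ) := by
    rw [sub_nonneg, div_le_one hnR]
    exact hd1n
  have hkey : ∀ i : ℕ, i ≤ k → ((i:ℝ)-1) * ((d:ℝ)*((d:ℝ)+1)) ≤ 2*(n:ℝ) := by
    intro i hi
    have h1 : (i:ℝ) ≤ (k:ℝ) := by exact_mod_cast hi
    have h2 : (k:ℝ)*((d:ℝ)+1)^2 ≤ (n:ℝ) := by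
      have := hdens
      have h3 : ((k * (d+1)^2 : ℕ) : ℝ) ≤ (n:ℝ) := by exact_mod_cast this
      push_cast at h3
      linarith
    nlinarith [sq_nonneg ((d:ℝ)+1), Nat.cast_nonneg (α := ℝ) d, Nat.cast_nonneg (α := ℝ) k]
  intro i
  induction i with
  | zero => intro _; norm_num
  | succ i ih =>
    intro hik
    have hik' : i ≤ k := le_trans (Nat.le_succ i) hik
    have hIH := ih hik'
    set x : ℝ := ((d:ℝ)+1)/(n:ℝ) with hxdef
    set y : ℝ := (d:ℝ)*((d:ℝ)+1)/(n:ℝ)^2 with hydef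
    have hmul : (1 - (i:ℝ)*x + (i:ℝ)*((i:ℝ)-1)/2 * y) * (1-x) ≤ (1-x)^(i+1) := by
      rw [pow_succ]
      exact mul_le_mul_of_nonneg_right hIH hx1
    have hdiff : (1 - (i:ℝ)*x + (i:ℝ)*((i:ℝ)-1)/2 * y) * (1-x)
        - (1 - ((i:ℝ)+1)*x + ((i:ℝ)+1)*(((i:ℝ)+1)-1)/2 * y)
        = ((i:ℝ)*((d:ℝ)+1)*(2*(n:ℝ) - ((i:ℝ)-1)*((d:ℝ)*((d:ℝ)+1))))/(2*(n:ℝ)^3) := by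
      rw [hxdef, hydef]
      field_simp
      ring
    have hnum : (0:ℝ) ≤ ((i:ℝ)*((d:ℝ)+1)*(2*(n:ℝ) - ((i:ℝ)-1)*((d:ℝ)*((d:ℝ)+1))))/(2*(n:ℝ)^3) := by
      apply div_nonneg
      · have h1 := hkey i hik'
        have h2 : (0:ℝ) ≤ (i:ℝ) := Nat.cast_nonneg i
        exact mul_nonneg (mul_nonneg h2 (by positivity))
          (by linarith : (0:ℝ) ≤ 2*(n:ℝ) - ((i:ℝ)-1)*((d:ℝ)*((d:ℝ)+1)))
      · positivity
    have hcast : ((i+1 : ℕ):ℝ) = (i:ℝ)+1 := by push_cast; ring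
    rw [hcast]
    linarith

/-! ### the main recursion step over ℝ -/

lemma f_nonneg (i : ℕ) : (0:ℝ) ≤ (f G i : ℝ) := Nat.cast_nonneg _

/-- total codegree bound over ℝ, uniform in `i` -/
lemma Ctot_le {d k : ℕ} (hreg : G.IsRegularOfDegree d) (hk : 1 ≤ k)
    (hdens : k * (d + 1) ^ 2 ≤ Fintype.card V) (i : ℕ) (hik : i ≤ k) :
    ((∑ t ∈ tupF G i, ctup G t : ℕ) : ℝ)
      ≤ (i:ℝ)*((i:ℝ)-1)*((d:ℝ)*((d:ℝ)+1)/(Fintype.card V : ℝ))*(f G i : ℝ) := by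
  have hn1 : (d+1)^2 ≤ Fintype.card V := le_trans (by nlinarith) hdens
  have hnR : (0:ℝ) < (Fintype.card V : ℝ) := by
    have : 0 < Fintype.card V := lt_of_lt_of_le (by positivity) hn1
    exact_mod_cast this
  have hD0 : (0:ℝ) ≤ (d:ℝ) := Nat.cast_nonneg d
  have hkdens : (k:ℝ) * ((d:ℝ)+1)^2 ≤ (Fintype.card V : ℝ) := by
    have h3 : ((k * (d+1)^2 : ℕ) : ℝ) ≤ (Fintype.card V : ℝ) := by exact_mod_cast hdens
    push_cast at h3
    nlinarith [h3]
  match i, hik with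
  | 0, _ =>
    have h0 : ∑ t ∈ tupF G 0, ctup G t = 0 :=
      sum_eq_zero fun t _ => ctup_small G (by norm_num) t
    rw [h0]
    norm_num
  | 1, _ =>
    have h0 : ∑ t ∈ tupF G 1, ctup G t = 0 :=
      sum_eq_zero fun t _ => ctup_small G (by norm_num) t
    rw [h0]
    norm_num
  | (j+2), hj =>
    have hCle := C_le G hreg j
    have hjk : (j:ℝ) + 2 ≤ (k:ℝ) := by exact_mod_cast hj
    have e1 : (j+2) ≤ (j+2)*(j+2) := by nlinarith
    have e2 : d ≤ d*d := by nlinarith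
    have hCleR : ((∑ t ∈ tupF G (j+2), ctup G t : ℕ) : ℝ)
        ≤ (((j:ℝ)+2)*((j:ℝ)+2) - ((j:ℝ)+2)) *
          ((Fintype.card V : ℝ) * ((d:ℝ)*(d:ℝ) - (d:ℝ)) * (f G j : ℝ)) := by
      have h := (Nat.cast_le (α := ℝ)).2 hCle
      refine h.trans_eq ?_
      push_cast [Nat.cast_sub e1, Nat.cast_sub e2]
      ring
    refine le_trans hCleR ?_
    have hij : (0:ℝ) ≤ ((j:ℝ)+2)*((j:ℝ)+2) - ((j:ℝ)+2) := by
      nlinarith [Nat.cast_nonneg (α := ℝ) j]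
    rcases Nat.eq_zero_or_pos d with hd0 | hd1
    · -- d = 0 : left side is zero
      subst hd0
      push_cast
      exact le_of_eq (by ring)
    · -- d ≥ 1
      have hD1 : (1:ℝ) ≤ (d:ℝ) := by exact_mod_cast hd1
      have hM2 : (Fintype.card V : ℝ)*(d:ℝ)
          ≤ ((Fintype.card V : ℝ) - (k:ℝ)*((d:ℝ)+1))*((d:ℝ)+1) := by
        linarith only [hkdens]
      have hM0 : (0:ℝ) ≤ (Fintype.card V : ℝ) - (k:ℝ)*((d:ℝ)+1) := by
        have hprod : (0:ℝ) ≤ (k:ℝ)*((d:ℝ)+1)*(d:ℝ) := by positivity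
        linarith only [hkdens, hprod]
      -- growth of f
      have hgrow : ∀ m : ℕ,
          ((Fintype.card V : ℝ) - (m:ℝ)*((d:ℝ)+1)) * (f G m : ℝ) ≤ (f G (m+1) : ℝ) := by
        intro m
        have hl := key_lower G hreg m
        have hlR : ((Fintype.card V * f G m : ℕ) : ℝ)
            ≤ ((f G (m+1) + m*(d+1) * f G m : ℕ) : ℝ) := by exact_mod_cast hl
        push_cast at hlR
        linarith only [hlR]
      have hMle1 : (Fintype.card V : ℝ) - (k:ℝ)*((d:ℝ)+1)
          ≤ (Fintype.card V : ℝ) - (j:ℝ)*((d:ℝ)+1) := by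
        have h1 : (j:ℝ) ≤ (k:ℝ) := by linarith only [hjk]
        have h2 := mul_le_mul_of_nonneg_right h1 (by positivity : (0:ℝ) ≤ (d:ℝ)+1)
        linarith only [h2]
      have hMle2 : (Fintype.card V : ℝ) - (k:ℝ)*((d:ℝ)+1)
          ≤ (Fintype.card V : ℝ) - ((j:ℝ)+1)*((d:ℝ)+1) := by
        have h1 : (j:ℝ)+1 ≤ (k:ℝ) := by linarith only [hjk]
        have h2 := mul_le_mul_of_nonneg_right h1 (by positivity : (0:ℝ) ≤ (d:ℝ)+1)
        linarith only [h2]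
      have hstep1 : ((Fintype.card V : ℝ) - (k:ℝ)*((d:ℝ)+1)) * (f G j : ℝ)
          ≤ (f G (j+1) : ℝ) := by
        have h0 := hgrow j
        have h1 : ((Fintype.card V : ℝ) - (k:ℝ)*((d:ℝ)+1)) * (f G j : ℝ)
            ≤ ((Fintype.card V : ℝ) - (j:ℝ)*((d:ℝ)+1)) * (f G j : ℝ) :=
          mul_le_mul_of_nonneg_right hMle1 (f_nonneg G j)
        linarith
      have hstep2 : ((Fintype.card V : ℝ) - (k:ℝ)*((d:ℝ)+1)) * (f G (j+1) : ℝ)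
          ≤ (f G (j+2) : ℝ) := by
        have h0 := hgrow (j+1)
        push_cast at h0
        have h1 : ((Fintype.card V : ℝ) - (k:ℝ)*((d:ℝ)+1)) * (f G (j+1) : ℝ)
            ≤ ((Fintype.card V : ℝ) - ((j:ℝ)+1)*((d:ℝ)+1)) * (f G (j+1) : ℝ) :=
          mul_le_mul_of_nonneg_right hMle2 (f_nonneg G (j+1))
        linarith
      have hfige : ((Fintype.card V : ℝ) - (k:ℝ)*((d:ℝ)+1))^2 * (f G j : ℝ)
          ≤ (f G (j+2) : ℝ) := by
        have h0 : ((Fintype.card V : ℝ) - (k:ℝ)*((d:ℝ)+1)) *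
            (((Fintype.card V : ℝ) - (k:ℝ)*((d:ℝ)+1)) * (f G j : ℝ))
            ≤ ((Fintype.card V : ℝ) - (k:ℝ)*((d:ℝ)+1)) * (f G (j+1) : ℝ) :=
          mul_le_mul_of_nonneg_left hstep1 hM0
        have hexp : ((Fintype.card V : ℝ) - (k:ℝ)*((d:ℝ)+1))^2 * (f G j : ℝ)
            = ((Fintype.card V : ℝ) - (k:ℝ)*((d:ℝ)+1)) *
              (((Fintype.card V : ℝ) - (k:ℝ)*((d:ℝ)+1)) * (f G j : ℝ)) := by ring
        linarith only [hstep2, h0, hexp.le, hexp.ge]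
      -- the key polynomial inequality
      have hsq : (Fintype.card V : ℝ)^2*(d:ℝ)^2
          ≤ ((Fintype.card V : ℝ) - (k:ℝ)*((d:ℝ)+1))^2*((d:ℝ)+1)^2 := by
        have hnd : (0:ℝ) ≤ (Fintype.card V : ℝ)*(d:ℝ) := by positivity
        have h2 := mul_self_le_mul_self hnd hM2
        linarith only [h2]
      have h5 : (Fintype.card V : ℝ)^2*((d:ℝ)*(d:ℝ)-(d:ℝ))
          ≤ (d:ℝ)*((d:ℝ)+1)*((Fintype.card V : ℝ) - (k:ℝ)*((d:ℝ)+1))^2 := by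
        have hd1p : (0:ℝ) < (d:ℝ)+1 := by positivity
        apply le_of_mul_le_mul_right _ hd1p
        have h6 := mul_le_mul_of_nonneg_left hsq hD0
        have h7 : (0:ℝ) ≤ (Fintype.card V : ℝ)^2*(d:ℝ) := by positivity
        linarith only [h6, h7]
      have e0 : (Fintype.card V : ℝ)*((d:ℝ)*(d:ℝ)-(d:ℝ))
          ≤ (d:ℝ)*((d:ℝ)+1)*((Fintype.card V : ℝ) - (k:ℝ)*((d:ℝ)+1))^2/(Fintype.card V : ℝ) := by
        rw [le_div_iff₀ hnR]
        linarith only [h5]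
      have e1 : (Fintype.card V : ℝ)*((d:ℝ)*(d:ℝ)-(d:ℝ))*(f G j : ℝ)
          ≤ ((d:ℝ)*((d:ℝ)+1)/(Fintype.card V : ℝ)) *
            (((Fintype.card V : ℝ) - (k:ℝ)*((d:ℝ)+1))^2*(f G j : ℝ)) := by
        have h6 := mul_le_mul_of_nonneg_right e0 (f_nonneg G j)
        calc (Fintype.card V : ℝ)*((d:ℝ)*(d:ℝ)-(d:ℝ))*(f G j : ℝ)
            ≤ ((d:ℝ)*((d:ℝ)+1)*((Fintype.card V : ℝ) - (k:ℝ)*((d:ℝ)+1))^2/(Fintype.card V : ℝ))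
              *(f G j : ℝ) := h6
          _ = ((d:ℝ)*((d:ℝ)+1)/(Fintype.card V : ℝ)) *
            (((Fintype.card V : ℝ) - (k:ℝ)*((d:ℝ)+1))^2*(f G j : ℝ)) := by ring
      have e2 : ((d:ℝ)*((d:ℝ)+1)/(Fintype.card V : ℝ)) *
            (((Fintype.card V : ℝ) - (k:ℝ)*((d:ℝ)+1))^2*(f G j : ℝ))
          ≤ ((d:ℝ)*((d:ℝ)+1)/(Fintype.card V : ℝ)) * (f G (j+2) : ℝ) := by
        apply mul_le_mul_of_nonneg_left hfige
        positivity
      calc (((j:ℝ)+2)*((j:ℝ)+2) - ((j:ℝ)+2)) *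
            ((Fintype.card V : ℝ) * ((d:ℝ)*(d:ℝ) - (d:ℝ)) * (f G j : ℝ))
          ≤ (((j:ℝ)+2)*((j:ℝ)+2) - ((j:ℝ)+2)) *
            (((d:ℝ)*((d:ℝ)+1)/(Fintype.card V : ℝ)) * (f G (j+2) : ℝ)) := by
            apply mul_le_mul_of_nonneg_left _ hij
            calc (Fintype.card V : ℝ) * ((d:ℝ)*(d:ℝ) - (d:ℝ)) * (f G j : ℝ)
                ≤ ((d:ℝ)*((d:ℝ)+1)/(Fintype.card V : ℝ)) *
                  (((Fintype.card V : ℝ) - (k:ℝ)*((d:ℝ)+1))^2*(f G j : ℝ)) := e1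
              _ ≤ ((d:ℝ)*((d:ℝ)+1)/(Fintype.card V : ℝ)) * (f G (j+2) : ℝ) := e2
        _ = ((j+2:ℕ):ℝ)*(((j+2:ℕ):ℝ)-1)*((d:ℝ)*((d:ℝ)+1)/(Fintype.card V : ℝ))
              *(f G (j+2) : ℝ) := by
            push_cast
            ring

/-- main recursion step over ℝ -/
lemma step_bound {d k : ℕ} (hreg : G.IsRegularOfDegree d) (hk : 1 ≤ k)
    (hdens : k * (d + 1) ^ 2 ≤ Fintype.card V) :
    ∀ i < k, (f G (i+1) : ℝ)
      ≤ (f G i : ℝ) *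
        ((Fintype.card V : ℝ) * (1 - ((d:ℝ)+1)/(Fintype.card V : ℝ))^i) := by
  intro i hik
  have hik' : i ≤ k := le_of_lt hik
  have hn1 : (d+1)^2 ≤ Fintype.card V := le_trans (by nlinarith) hdens
  have hnR : (0:ℝ) < (Fintype.card V : ℝ) := by
    have : 0 < Fintype.card V := lt_of_lt_of_le (by positivity) hn1
    exact_mod_cast this
  have hCtot := Ctot_le G hreg hk hdens i hik'
  push_cast at hCtot
  have hup := key_upper G hreg i
  have hupR : 2 * (f G (i+1) : ℝ) + 2*((i:ℝ)*((d:ℝ)+1)) * (f G i : ℝ)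
      ≤ 2 * (Fintype.card V : ℝ) * (f G i : ℝ) + ∑ t ∈ tupF G i, ((ctup G t : ℕ) : ℝ) := by
    have h := (Nat.cast_le (α := ℝ)).2 hup
    push_cast at h
    linarith only [h]
  have hmaster : (f G (i+1) : ℝ)
      ≤ (f G i : ℝ) * ((Fintype.card V : ℝ) - (i:ℝ)*((d:ℝ)+1)
          + (i:ℝ)*((i:ℝ)-1)/2 * ((d:ℝ)*((d:ℝ)+1)/(Fintype.card V : ℝ))) := by
    linarith only [hCtot, hupR]
  have hA := analytic (d:=d) (k:=k) (n:=Fintype.card V) hk hdens i hik'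
  have hid : (Fintype.card V : ℝ) - (i:ℝ)*((d:ℝ)+1)
        + (i:ℝ)*((i:ℝ)-1)/2 * ((d:ℝ)*((d:ℝ)+1)/(Fintype.card V : ℝ))
      = (Fintype.card V : ℝ) * (1 - (i:ℝ) * (((d:ℝ)+1)/(Fintype.card V : ℝ))
          + (i:ℝ)*((i:ℝ)-1)/2 * ((d:ℝ)*((d:ℝ)+1)/(Fintype.card V : ℝ)^2)) := by
    field_simp
  have hfinal : (f G i : ℝ) * ((Fintype.card V : ℝ) - (i:ℝ)*((d:ℝ)+1)
        + (i:ℝ)*((i:ℝ)-1)/2 * ((d:ℝ)*((d:ℝ)+1)/(Fintype.card V : ℝ)))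
      ≤ (f G i : ℝ) * ((Fintype.card V : ℝ) * (1 - ((d:ℝ)+1)/(Fintype.card V : ℝ))^i) := by
    rw [hid]
    apply mul_le_mul_of_nonneg_left _ (f_nonneg G i)
    apply mul_le_mul_of_nonneg_left _ (le_of_lt hnR)
    exact hA
  linarith only [hmaster, hfinal]

/-- iterate the step bound -/
lemma f_le_pow {d k : ℕ} (hreg : G.IsRegularOfDegree d) (hk : 1 ≤ k)
    (hdens : k * (d + 1) ^ 2 ≤ Fintype.card V) :
    ∀ i ≤ k, (f G i : ℝ) ≤ (Fintype.card V : ℝ)^i *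
      (1 - ((d:ℝ)+1)/(Fintype.card V : ℝ))^(i.choose 2) := by
  have hn1 : (d+1)^2 ≤ Fintype.card V := le_trans (by nlinarith) hdens
  have hnR : (0:ℝ) < (Fintype.card V : ℝ) := by
    have : 0 < Fintype.card V := lt_of_lt_of_le (by positivity) hn1
    exact_mod_cast this
  have hd1n : ((d:ℝ)+1) ≤ (Fintype.card V : ℝ) := by
    have h1 : (d+1) ≤ Fintype.card V := le_trans (Nat.le_of_lt_succ (by nlinarith)) hn1
    have h2 : ((d+1:ℕ):ℝ) ≤ (Fintype.card V : ℝ) := by exact_mod_cast h1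
    push_cast at h2
    linarith only [h2]
  have hx1 : (0:ℝ) ≤ 1 - ((d:ℝ)+1)/(Fintype.card V : ℝ) := by
    rw [sub_nonneg, div_le_one hnR]
    exact hd1n
  intro i
  induction i with
  | zero =>
    intro _
    rw [f_zero]
    norm_num
  | succ i ih =>
    intro hik
    have hik' : i < k := hik
    have hchoose : (i+1).choose 2 = i.choose 2 + i := by
      rw [Nat.choose_succ_succ i 1, Nat.choose_one_right, add_comm]
    calc (f G (i+1) : ℝ)
        ≤ (f G i : ℝ) * ((Fintype.card V : ℝ) *
            (1 - ((d:ℝ)+1)/(Fintype.card V : ℝ))^i) := step_bound G hreg hk hdens i hik'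
      _ ≤ ((Fintype.card V : ℝ)^i * (1 - ((d:ℝ)+1)/(Fintype.card V : ℝ))^(i.choose 2)) *
            ((Fintype.card V : ℝ) * (1 - ((d:ℝ)+1)/(Fintype.card V : ℝ))^i) := by
          apply mul_le_mul_of_nonneg_right (ih (le_of_lt hik'))
          exact mul_nonneg (le_of_lt hnR) (pow_nonneg hx1 i)
      _ = (Fintype.card V : ℝ)^(i+1) *
            (1 - ((d:ℝ)+1)/(Fintype.card V : ℝ))^((i+1).choose 2) := by
          rw [hchoose, pow_succ, pow_add]
          ring

end IndepCount

open IndepCount in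
/-- **Upper bound on the number of independent sets of a given size in `d`-regular graphs**
(`cor:bipartite`).  Let `G` be a `d`-regular graph on `n` vertices and let `k` satisfy
`k·(d+1)² ≤ n`.  Then the number of independent sets of size `k` in `G` satisfies
`IS(k) ≤ (n^k / k!) · (1 − (d+1)/n)^(k choose 2)`. -/
theorem indep_set_count_bound {V : Type*} [Fintype V] [DecidableEq V] (G : SimpleGraph V)
    [DecidableRel G.Adj] (d k : ℕ) (hreg : G.IsRegularOfDegree d)
    (hdens : k * (d + 1) ^ 2 ≤ Fintype.card V) :
    ((((Finset.univ : Finset V).powersetCard k).filter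
        fun s : Finset V => ∀ v ∈ s, ∀ w ∈ s, ¬ G.Adj v w).card : ℝ)
      ≤ (Fintype.card V : ℝ) ^ k / (k.factorial : ℝ) *
          (1 - ((d : ℝ) + 1) / (Fintype.card V : ℝ)) ^ k.choose 2 := by
  rcases Nat.eq_zero_or_pos k with rfl | hk
  · have h := card_filter_le ({∅} : Finset (Finset V))
      (fun s => ∀ v ∈ s, ∀ w ∈ s, ¬ G.Adj v w)
    rw [card_singleton] at h
    rw [Finset.powersetCard_zero]
    have hc : ((filter (fun s => ∀ v ∈ s, ∀ w ∈ s, ¬ G.Adj v w)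
        ({∅} : Finset (Finset V))).card : ℝ) ≤ (1:ℝ) := by exact_mod_cast h
    refine le_trans hc (le_of_eq ?_)
    norm_num [Nat.choose]
  have h1 := indep_mul_factorial_le G k
  have h2 := f_le_pow G hreg hk hdens k le_rfl
  have hfact : (0:ℝ) < (k.factorial : ℝ) := by exact_mod_cast k.factorial_pos
  rw [div_mul_eq_mul_div, le_div_iff₀ hfact]
  calc ((((Finset.univ : Finset V).powersetCard k).filter
        fun s : Finset V => ∀ v ∈ s, ∀ w ∈ s, ¬ G.Adj v w).card : ℝ) * (k.factorial : ℝ)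
      = (((((Finset.univ : Finset V).powersetCard k).filter
        fun s : Finset V => ∀ v ∈ s, ∀ w ∈ s, ¬ G.Adj v w).card * k.factorial : ℕ) : ℝ) := by
        push_cast
        ring
    _ ≤ (f G k : ℝ) := by exact_mod_cast h1
    _ ≤ (Fintype.card V : ℝ)^k * (1 - ((d:ℝ)+1)/(Fintype.card V : ℝ))^(k.choose 2) := h2
end

section
/- Let G be a d-regular simple graph on n vertices with m = n·d/2 edges, and let k ≥ 1 satisfy 56·k ≤ 3·n (i.e., the matching density α = 2k/n is at most 3/28). Then the repulsion inequality holds for matchings: E[V_k · 1_{E_k}] ≥ E[V_k] · Pr[E_k]; equivalently, since Pr[E_k] > 0, E[V_k | E_k] ≥ E[V_k]. -/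
open Finset

/-- `V_k` for matchings: the fraction of edges of `G` equal to, or sharing a vertex with,
one of the `k` chosen edges. -/
noncomputable def edgeCoveredFrac {V : Type*} [Fintype V] [DecidableEq V] (G : SimpleGraph V)
    [DecidableRel G.Adj] {k : ℕ} (X : Fin k → {e : Sym2 V // e ∈ G.edgeFinset}) : ℝ :=
  ((G.edgeFinset.filter fun e : Sym2 V =>
      ∃ i : Fin k, e = (X i : Sym2 V) ∨ ∃ v : V, v ∈ e ∧ v ∈ (X i : Sym2 V)).card : ℝ) /
    (G.edgeFinset.card : ℝ)

/-- `E_k` for matchings: the event that the `k` chosen edges are pairwise distinct and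
pairwise vertex-disjoint, i.e. form a matching of size `k`. -/
def matchingEvent {V : Type*} [Fintype V] [DecidableEq V] (G : SimpleGraph V)
    [DecidableRel G.Adj] (k : ℕ) : Finset (Fin k → {e : Sym2 V // e ∈ G.edgeFinset}) :=
  Finset.univ.filter fun X =>
    ∀ i j : Fin k, i ≠ j →
      (X i : Sym2 V) ≠ (X j : Sym2 V) ∧
        ∀ v : V, ¬ (v ∈ (X i : Sym2 V) ∧ v ∈ (X j : Sym2 V))

set_option maxHeartbeats 1000000

section AuxRepulsion

variable {V : Type*} [Fintype V] [DecidableEq V] (G : SimpleGraph V) [DecidableRel G.Adj]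

/-- `g` covers `e`. -/
abbrev covs (g e : Sym2 V) : Prop := e = g ∨ ∃ v : V, v ∈ e ∧ v ∈ g

lemma mem_incFinset (w : V) (e : Sym2 V) :
    e ∈ G.incidenceFinset w ↔ e ∈ G.edgeFinset ∧ w ∈ e := by
  rw [SimpleGraph.mem_incidenceFinset]
  exact ⟨fun h => ⟨SimpleGraph.mem_edgeFinset.2 h.1, h.2⟩,
    fun h => ⟨SimpleGraph.mem_edgeFinset.1 h.1, h.2⟩⟩

lemma card_covs {d : ℕ} (hreg : G.IsRegularOfDegree d) {g : Sym2 V} (hg : g ∈ G.edgeFinset) :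
    (G.edgeFinset.filter (fun e => covs g e)).card = 2 * d - 1 := by
  induction g with
  | _ u v =>
    have huv : G.Adj u v := by rwa [SimpleGraph.mem_edgeFinset, SimpleGraph.mem_edgeSet] at hg
    have hne : u ≠ v := huv.ne
    have hfil : G.edgeFinset.filter (fun e => covs s(u,v) e)
        = G.incidenceFinset u ∪ G.incidenceFinset v := by
      ext e
      simp only [mem_filter, mem_union, mem_incFinset]
      constructor
      · rintro ⟨he, h | ⟨w, hwe, hw⟩⟩
        · subst h; exact Or.inl ⟨he, Sym2.mem_mk_left _ _⟩
        · rcases Sym2.mem_iff.1 hw with rfl | rfl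
          · exact Or.inl ⟨he, hwe⟩
          · exact Or.inr ⟨he, hwe⟩
      · rintro (⟨he, hu⟩ | ⟨he, hv⟩)
        · exact ⟨he, Or.inr ⟨u, hu, Sym2.mem_mk_left _ _⟩⟩
        · exact ⟨he, Or.inr ⟨v, hv, Sym2.mem_mk_right _ _⟩⟩
    have hinter : G.incidenceFinset u ∩ G.incidenceFinset v = {s(u,v)} := by
      ext e
      simp only [mem_inter, mem_incFinset, mem_singleton]
      constructor
      · rintro ⟨⟨he, hu⟩, ⟨_, hv⟩⟩
        exact (Sym2.mem_and_mem_iff hne).1 ⟨hu, hv⟩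
      · rintro rfl
        exact ⟨⟨hg, Sym2.mem_mk_left _ _⟩, ⟨hg, Sym2.mem_mk_right _ _⟩⟩
    have hcu := G.card_incidenceFinset_eq_degree (v := u)
    have hcv := G.card_incidenceFinset_eq_degree (v := v)
    have := Finset.card_union_add_card_inter (G.incidenceFinset u) (G.incidenceFinset v)
    rw [hinter, card_singleton, hcu, hcv, hreg u, hreg v] at this
    rw [hfil]
    omega

lemma card_filter_univ_subtype {α : Type*} [DecidableEq α] (s : Finset α)
    (p : α → Prop) [DecidablePred p] :
    ((univ : Finset {x // x ∈ s}).filter (fun a => p a.1)).card = (s.filter p).card := by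
  classical
  apply Finset.card_bij (fun (a : {x // x ∈ s}) _ => a.1)
  · intro a ha; simp only [mem_filter] at ha ⊢; exact ⟨a.2, ha.2⟩
  · intro a _ b _ h; exact Subtype.ext h
  · intro b hb
    simp only [mem_filter] at hb
    exact ⟨⟨b, hb.1⟩, by simp [hb.2], rfl⟩

lemma card_filter_pi {α : Type*} [Fintype α] [DecidableEq α] (k : ℕ) (p : α → Prop)
    [DecidablePred p] :
    ((univ : Finset (Fin k → α)).filter (fun X => ∀ i, p (X i))).card
      = ((univ : Finset α).filter p).card ^ k := by
  classical
  rw [← Fintype.card_subtype]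
  have e : {x : Fin k → α // ∀ i, p (x i)} ≃ (Fin k → {a // p a}) :=
    { toFun := fun x i => ⟨x.1 i, x.2 i⟩
      invFun := fun f => ⟨fun i => (f i).1, fun i => (f i).2⟩
      left_inv := fun x => rfl
      right_inv := fun f => rfl }
  rw [Fintype.card_congr e, Fintype.card_fun, Fintype.card_subtype, Fintype.card_fin]

/-- number of edges covered by the tuple `X`. -/
def covCard {k : ℕ} (X : Fin k → {e : Sym2 V // e ∈ G.edgeFinset}) : ℕ :=
  (G.edgeFinset.filter fun e => ∃ i, covs (X i).1 e).card

/-- number of indices covering `e`. -/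
def cnt {k : ℕ} (X : Fin k → {e : Sym2 V // e ∈ G.edgeFinset}) (e : Sym2 V) : ℕ :=
  ((univ : Finset (Fin k)).filter fun i => covs (X i).1 e).card

/-- number of edges covered at least twice. -/
def crossCard {k : ℕ} (X : Fin k → {e : Sym2 V // e ∈ G.edgeFinset}) : ℕ :=
  (G.edgeFinset.filter fun e => 2 ≤ cnt G X e).card

lemma card_cov_event {d : ℕ} (hreg : G.IsRegularOfDegree d) (k : ℕ) {e : Sym2 V} (he : e ∈ G.edgeFinset) :
    ((univ : Finset (Fin k → {e : Sym2 V // e ∈ G.edgeFinset})).filter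
        (fun X => ∃ i, covs (X i).1 e)).card
      + (G.edgeFinset.card - (2 * d - 1)) ^ k = G.edgeFinset.card ^ k := by
  classical
  have h1 : ((univ : Finset (Fin k → {e : Sym2 V // e ∈ G.edgeFinset})).filter
      (fun X => ¬ ∃ i, covs (X i).1 e)).card = (G.edgeFinset.card - (2 * d - 1)) ^ k := by
    have h2 : ((univ : Finset (Fin k → {e : Sym2 V // e ∈ G.edgeFinset})).filter
        (fun X => ¬ ∃ i, covs (X i).1 e)).card
        = ((univ : Finset (Fin k → {e : Sym2 V // e ∈ G.edgeFinset})).filter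
        (fun X => ∀ i, ¬ covs (X i).1 e)).card := by
      congr 1
      apply filter_congr
      intro X _
      simp [not_exists]
    rw [h2, card_filter_pi k (fun a : {e : Sym2 V // e ∈ G.edgeFinset} => ¬ covs a.1 e),
      card_filter_univ_subtype G.edgeFinset (fun f => ¬ covs f e)]
    congr 1
    have hsymm : (G.edgeFinset.filter (fun f => covs f e)).card
        = (G.edgeFinset.filter (fun f => covs e f)).card := by
      congr 1
      apply filter_congr
      intro f _
      constructor
      · rintro (h | ⟨v, hv1, hv2⟩)
        · exact Or.inl h.symm
        · exact Or.inr ⟨v, hv2, hv1⟩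
      · rintro (h | ⟨v, hv1, hv2⟩)
        · exact Or.inl h.symm
        · exact Or.inr ⟨v, hv2, hv1⟩
    have hc : (G.edgeFinset.filter (fun f => covs f e)).card = 2 * d - 1 := by
      rw [hsymm, card_covs G hreg he]
    have h3 := Finset.card_filter_add_card_filter_not
      (s := G.edgeFinset) (p := fun f => covs f e)
    rw [hc] at h3
    exact Nat.eq_sub_of_add_eq' h3
  have htot := Finset.card_filter_add_card_filter_not
    (s := (univ : Finset (Fin k → {e : Sym2 V // e ∈ G.edgeFinset})))
    (p := fun X => ∃ i, covs (X i).1 e)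
  rw [h1] at htot
  rw [htot, Finset.card_univ, Fintype.card_fun, Fintype.card_coe, Fintype.card_fin]

lemma sum_covCard_all {d : ℕ} (hreg : G.IsRegularOfDegree d) (k : ℕ) :
    (∑ X : Fin k → {e : Sym2 V // e ∈ G.edgeFinset}, covCard G X)
      + G.edgeFinset.card * (G.edgeFinset.card - (2 * d - 1)) ^ k
      = G.edgeFinset.card * G.edgeFinset.card ^ k := by
  classical
  have hswap : (∑ X : Fin k → {e : Sym2 V // e ∈ G.edgeFinset}, covCard G X)
      = ∑ e ∈ G.edgeFinset,
        ((univ : Finset (Fin k → {e : Sym2 V // e ∈ G.edgeFinset})).filter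
          (fun X => ∃ i, covs (X i).1 e)).card := by
    simp only [covCard, Finset.card_filter]
    exact Finset.sum_comm
  have hsum : ∑ e ∈ G.edgeFinset,
      (((univ : Finset (Fin k → {e : Sym2 V // e ∈ G.edgeFinset})).filter
          (fun X => ∃ i, covs (X i).1 e)).card
        + (G.edgeFinset.card - (2 * d - 1)) ^ k)
      = ∑ _e ∈ G.edgeFinset, G.edgeFinset.card ^ k :=
    Finset.sum_congr rfl fun e he => card_cov_event G hreg k he
  rw [Finset.sum_add_distrib, Finset.sum_const, Finset.sum_const, smul_eq_mul,
    smul_eq_mul] at hsum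
  rw [hswap]
  exact hsum

lemma covCard_add_crossCard {d : ℕ} (hreg : G.IsRegularOfDegree d) {k : ℕ}
    (X : Fin k → {e : Sym2 V // e ∈ G.edgeFinset}) (hX : X ∈ matchingEvent G k) :
    covCard G X + crossCard G X = k * (2 * d - 1) := by
  classical
  have hXm : ∀ i j : Fin k, i ≠ j → (X i).1 ≠ (X j).1 ∧
      ∀ v : V, ¬ (v ∈ (X i).1 ∧ v ∈ (X j).1) := (Finset.mem_filter.1 hX).2
  have hcnt2 : ∀ e ∈ G.edgeFinset, cnt G X e ≤ 2 := by
    intro e _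
    by_contra h
    push_neg at h
    obtain ⟨i, j, l, hi, hj, hl, hij, hil, hjl⟩ := Finset.two_lt_card_iff.1 h
    simp only [cnt, mem_filter, mem_univ, true_and] at hi hj hl
    have key : ∀ a b : Fin k, a ≠ b → covs (X a).1 e → covs (X b).1 e →
        ∃ va : V, va ∈ e ∧ va ∈ (X a).1 := by
      intro a b hab ha hb
      obtain ⟨hne, hdisj⟩ := hXm a b hab
      rcases ha with rfl | ⟨va, hva, hva'⟩
      · rcases hb with hb | ⟨vb, hvb, hvb'⟩
        · exact absurd hb hne
        · exact absurd ⟨hvb, hvb'⟩ (hdisj vb)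
      · exact ⟨va, hva, hva'⟩
    obtain ⟨vi, hvi, hvi'⟩ := key i j hij hi hj
    obtain ⟨vj, hvj, hvj'⟩ := key j i (Ne.symm hij) hj hi
    obtain ⟨vl, hvl, hvl'⟩ := key l i (Ne.symm hil) hl hi
    induction e with
    | _ x y =>
      simp only [Sym2.mem_iff] at hvi hvj hvl
      have hIJ : ∀ v : V, ¬ (v ∈ (X i).1 ∧ v ∈ (X j).1) := (hXm i j hij).2
      have hIL : ∀ v : V, ¬ (v ∈ (X i).1 ∧ v ∈ (X l).1) := (hXm i l hil).2
      have hJL : ∀ v : V, ¬ (v ∈ (X j).1 ∧ v ∈ (X l).1) := (hXm j l hjl).2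
      rcases hvi with rfl | rfl <;> rcases hvj with rfl | rfl <;> rcases hvl with rfl | rfl <;>
        first
          | exact hIJ _ ⟨hvi', hvj'⟩
          | exact hIL _ ⟨hvi', hvl'⟩
          | exact hJL _ ⟨hvj', hvl'⟩
  have hsumcnt : ∑ e ∈ G.edgeFinset, cnt G X e = k * (2 * d - 1) := by
    simp only [cnt, Finset.card_filter]
    rw [Finset.sum_comm]
    have : ∀ i : Fin k, (∑ e ∈ G.edgeFinset, if covs (X i).1 e then 1 else 0)
        = 2 * d - 1 := by
      intro i
      rw [← Finset.card_filter]
      exact card_covs G hreg (X i).2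
    rw [Finset.sum_congr rfl fun i _ => this i, Finset.sum_const, Finset.card_univ,
      Fintype.card_fin, smul_eq_mul]
  have hcov : covCard G X = ∑ e ∈ G.edgeFinset, if 1 ≤ cnt G X e then 1 else 0 := by
    rw [covCard, Finset.card_filter]
    apply Finset.sum_congr rfl
    intro e _
    by_cases h : ∃ i, covs (X i).1 e
    · obtain ⟨i, hi⟩ := h
      have h1 : 1 ≤ cnt G X e :=
        Finset.card_pos.2 ⟨i, Finset.mem_filter.2 ⟨Finset.mem_univ _, hi⟩⟩
      rw [if_pos ⟨i, hi⟩, if_pos h1]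
    · have h0 : cnt G X e = 0 := by
        rw [cnt, Finset.card_eq_zero, Finset.filter_eq_empty_iff]
        intro i _
        exact fun hc => h ⟨i, hc⟩
      simp [h, h0]
  have hcross : crossCard G X = ∑ e ∈ G.edgeFinset, if 2 ≤ cnt G X e then 1 else 0 := by
    rw [crossCard, Finset.card_filter]
  have hdecomp : ∀ e ∈ G.edgeFinset, cnt G X e
      = (if 1 ≤ cnt G X e then 1 else 0) + (if 2 ≤ cnt G X e then 1 else 0) := by
    intro e he
    have := hcnt2 e he
    generalize cnt G X e = c at *
    interval_cases c <;> simp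
  rw [hcov, hcross, ← Finset.sum_add_distrib, ← Finset.sum_congr rfl hdecomp, hsumcnt]

/-- number of edges covered by both `f` and `g`. -/
def pairCov (f g : Sym2 V) : ℕ :=
  (G.edgeFinset.filter fun e => covs f e ∧ covs g e).card

lemma cross_le_pairs {k : ℕ} (X : Fin k → {e : Sym2 V // e ∈ G.edgeFinset}) :
    2 * crossCard G X
      ≤ ∑ p ∈ (univ : Finset (Fin k)).offDiag, pairCov G (X p.1).1 (X p.2).1 := by
  classical
  have hswap : ∑ p ∈ (univ : Finset (Fin k)).offDiag, pairCov G (X p.1).1 (X p.2).1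
      = ∑ e ∈ G.edgeFinset, ((univ : Finset (Fin k)).offDiag.filter
          (fun p => covs (X p.1).1 e ∧ covs (X p.2).1 e)).card := by
    simp only [pairCov, Finset.card_filter]
    exact Finset.sum_comm
  rw [hswap, crossCard, Finset.card_filter, Finset.mul_sum]
  apply Finset.sum_le_sum
  intro e _
  by_cases h : 2 ≤ cnt G X e
  · rw [if_pos h]
    obtain ⟨i, hi, j, hj, hij⟩ := Finset.one_lt_card.1 h
    simp only [cnt, mem_filter, mem_univ, true_and] at hi hj
    have hmem1 : (i, j) ∈ (univ : Finset (Fin k)).offDiag.filter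
        (fun p => covs (X p.1).1 e ∧ covs (X p.2).1 e) := by
      simp [Finset.mem_offDiag, hij, hi, hj]
    have hmem2 : (j, i) ∈ (univ : Finset (Fin k)).offDiag.filter
        (fun p => covs (X p.1).1 e ∧ covs (X p.2).1 e) := by
      simp [Finset.mem_offDiag, hij.symm, hi, hj]
    have : 1 < ((univ : Finset (Fin k)).offDiag.filter
        (fun p => covs (X p.1).1 e ∧ covs (X p.2).1 e)).card :=
      Finset.one_lt_card.2 ⟨(i,j), hmem1, (j,i), hmem2, by simp [Prod.ext_iff, hij]⟩
    omega
  · rw [if_neg h]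
    omega

lemma sum_pairCov_le {d : ℕ} (hreg : G.IsRegularOfDegree d) :
    ∑ p ∈ ((univ : Finset ({e : Sym2 V // e ∈ G.edgeFinset} ×
        {e : Sym2 V // e ∈ G.edgeFinset})).filter
        (fun p => p.1.1 ≠ p.2.1 ∧ ∀ v : V, ¬ (v ∈ p.1.1 ∧ v ∈ p.2.1))),
      pairCov G p.1.1 p.2.1
    ≤ G.edgeFinset.card * (2 * (d - 1) ^ 2) := by
  classical
  set D := ((univ : Finset ({e : Sym2 V // e ∈ G.edgeFinset} ×
        {e : Sym2 V // e ∈ G.edgeFinset})).filter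
        (fun p => p.1.1 ≠ p.2.1 ∧ ∀ v : V, ¬ (v ∈ p.1.1 ∧ v ∈ p.2.1))) with hD
  have hswap : ∑ p ∈ D, pairCov G p.1.1 p.2.1
      = ∑ e ∈ G.edgeFinset, (D.filter (fun p => covs p.1.1 e ∧ covs p.2.1 e)).card := by
    simp only [pairCov, Finset.card_filter]
    exact Finset.sum_comm
  rw [hswap]
  have hper : ∀ e ∈ G.edgeFinset,
      (D.filter (fun p => covs p.1.1 e ∧ covs p.2.1 e)).card ≤ 2 * (d - 1) ^ 2 := by
    intro e he
    induction e with
    | _ u v =>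
      have huv : G.Adj u v := by
        rwa [SimpleGraph.mem_edgeFinset, SimpleGraph.mem_edgeSet] at he
      have hne : u ≠ v := huv.ne
      set Au := ((univ : Finset {e : Sym2 V // e ∈ G.edgeFinset}).filter
        (fun f => u ∈ f.1 ∧ f.1 ≠ s(u,v))) with hAu
      set Av := ((univ : Finset {e : Sym2 V // e ∈ G.edgeFinset}).filter
        (fun f => v ∈ f.1 ∧ f.1 ≠ s(u,v))) with hAv
      have hcardA : ∀ w : V, w ∈ s(u,v) →
          ((univ : Finset {e : Sym2 V // e ∈ G.edgeFinset}).filter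
            (fun f => w ∈ f.1 ∧ f.1 ≠ s(u,v))).card = d - 1 := by
        intro w hw
        rw [card_filter_univ_subtype G.edgeFinset (fun x => w ∈ x ∧ x ≠ s(u,v))]
        have hfeq : G.edgeFinset.filter (fun x => w ∈ x ∧ x ≠ s(u,v))
            = (G.incidenceFinset w).erase s(u,v) := by
          ext x
          simp only [mem_filter, Finset.mem_erase, mem_incFinset]
          tauto
        rw [hfeq, Finset.card_erase_of_mem, G.card_incidenceFinset_eq_degree, hreg w]
        rw [mem_incFinset]
        exact ⟨he, hw⟩
      have hsub : D.filter (fun p => covs p.1.1 s(u,v) ∧ covs p.2.1 s(u,v))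
          ⊆ (Au ×ˢ Av) ∪ (Av ×ˢ Au) := by
        intro p hp
        simp only [hD, mem_filter, mem_univ, true_and] at hp
        obtain ⟨⟨hpn, hpd⟩, hc1, hc2⟩ := hp
        have hne1 : p.1.1 ≠ s(u,v) := by
          rintro h
          rcases hc2 with h2 | ⟨w, hw1, hw2⟩
          · exact hpn (h.trans h2)
          · exact hpd w ⟨h ▸ hw1, hw2⟩
        have hne2 : p.2.1 ≠ s(u,v) := by
          rintro h
          rcases hc1 with h1 | ⟨w, hw1, hw2⟩
          · exact hpn ((h.trans h1).symm)
          · exact hpd w ⟨hw2, h ▸ hw1⟩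
        rcases hc1 with h1 | ⟨w1, hw11, hw12⟩
        · exact absurd h1.symm hne1
        rcases hc2 with h2 | ⟨w2, hw21, hw22⟩
        · exact absurd h2.symm hne2
        have hww : w1 ≠ w2 := by
          rintro rfl
          exact hpd w1 ⟨hw12, hw22⟩
        rw [Sym2.mem_iff] at hw11 hw21
        rcases hw11 with rfl | rfl <;> rcases hw21 with rfl | rfl
        · exact absurd rfl hww
        · exact Finset.mem_union_left _ (Finset.mem_product.2
            ⟨Finset.mem_filter.2 ⟨Finset.mem_univ _, hw12, hne1⟩,
             Finset.mem_filter.2 ⟨Finset.mem_univ _, hw22, hne2⟩⟩)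
        · exact Finset.mem_union_right _ (Finset.mem_product.2
            ⟨Finset.mem_filter.2 ⟨Finset.mem_univ _, hw12, hne1⟩,
             Finset.mem_filter.2 ⟨Finset.mem_univ _, hw22, hne2⟩⟩)
        · exact absurd rfl hww
      calc (D.filter (fun p => covs p.1.1 s(u,v) ∧ covs p.2.1 s(u,v))).card
          ≤ ((Au ×ˢ Av) ∪ (Av ×ˢ Au)).card := Finset.card_le_card hsub
        _ ≤ (Au ×ˢ Av).card + (Av ×ˢ Au).card := Finset.card_union_le _ _
        _ = 2 * (d - 1) ^ 2 := by
            rw [Finset.card_product, Finset.card_product, hcardA u (Sym2.mem_mk_left _ _),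
              hcardA v (Sym2.mem_mk_right _ _)]
            ring
  calc ∑ e ∈ G.edgeFinset, (D.filter (fun p => covs p.1.1 e ∧ covs p.2.1 e)).card
      ≤ ∑ _e ∈ G.edgeFinset, 2 * (d - 1) ^ 2 := Finset.sum_le_sum hper
    _ = G.edgeFinset.card * (2 * (d - 1) ^ 2) := by rw [Finset.sum_const, smul_eq_mul]

lemma fiber_card_le {k : ℕ} {i j : Fin k} (hij : i ≠ j)
    (f g : {e : Sym2 V // e ∈ G.edgeFinset}) :
    ((matchingEvent G k).filter (fun X => X i = f ∧ X j = g)).card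
      ≤ (matchingEvent G (k-2)).card := by
  classical
  have hs : (({i, j}ᶜ : Finset (Fin k))).card = k - 2 := by
    rw [Finset.card_compl, Finset.card_insert_of_notMem (by simp [hij]),
      Finset.card_singleton, Fintype.card_fin]
  apply Finset.card_le_card_of_injOn
    (fun X => fun a : Fin (k-2) => X (({i, j}ᶜ : Finset (Fin k)).orderEmbOfFin hs a))
  · intro X hX
    obtain ⟨hXu, hXi, hXj⟩ := Finset.mem_filter.1 hX
    have hXm := (Finset.mem_filter.1 hXu).2
    refine Finset.mem_filter.2 ⟨Finset.mem_univ _, fun a b hab => ?_⟩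
    exact hXm _ _ (fun h => hab ((({i, j}ᶜ : Finset (Fin k)).orderEmbOfFin hs).injective h))
  · intro X1 h1 X2 h2 heq
    obtain ⟨-, hX1i, hX1j⟩ := Finset.mem_filter.1 h1
    obtain ⟨-, hX2i, hX2j⟩ := Finset.mem_filter.1 h2
    funext x
    by_cases hxi : x = i
    · rw [hxi, hX1i, hX2i]
    by_cases hxj : x = j
    · rw [hxj, hX1j, hX2j]
    have hx : x ∈ ({i, j}ᶜ : Finset (Fin k)) := by simp [hxi, hxj]
    have hx' : x ∈ Set.range (({i, j}ᶜ : Finset (Fin k)).orderEmbOfFin hs) := by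
      rw [Finset.range_orderEmbOfFin]
      exact hx
    obtain ⟨a, rfl⟩ := hx'
    exact congrFun heq a

lemma sum_pairCov_event_le {d : ℕ} (hreg : G.IsRegularOfDegree d) {k : ℕ}
    {i j : Fin k} (hij : i ≠ j) :
    ∑ X ∈ matchingEvent G k, pairCov G (X i).1 (X j).1
      ≤ (matchingEvent G (k-2)).card * (G.edgeFinset.card * (2 * (d - 1) ^ 2)) := by
  classical
  set D := ((univ : Finset ({e : Sym2 V // e ∈ G.edgeFinset} ×
        {e : Sym2 V // e ∈ G.edgeFinset})).filter
        (fun p => p.1.1 ≠ p.2.1 ∧ ∀ v : V, ¬ (v ∈ p.1.1 ∧ v ∈ p.2.1))) with hD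
  have hmaps : ∀ X ∈ matchingEvent G k, (X i, X j) ∈ D := by
    intro X hX
    exact Finset.mem_filter.2 ⟨Finset.mem_univ _, (Finset.mem_filter.1 hX).2 i j hij⟩
  rw [← Finset.sum_fiberwise_of_maps_to hmaps (fun X => pairCov G (X i).1 (X j).1)]
  have hinner : ∀ p ∈ D,
      (∑ X ∈ (matchingEvent G k).filter (fun X => (X i, X j) = p),
        pairCov G (X i).1 (X j).1)
      ≤ (matchingEvent G (k-2)).card * pairCov G p.1.1 p.2.1 := by
    intro p hp
    have heq : ∀ X ∈ (matchingEvent G k).filter (fun X => (X i, X j) = p),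
        pairCov G (X i).1 (X j).1 = pairCov G p.1.1 p.2.1 := by
      intro X hX
      have := (Finset.mem_filter.1 hX).2
      rw [← this]
    rw [Finset.sum_congr rfl heq, Finset.sum_const, smul_eq_mul]
    apply Nat.mul_le_mul_right
    have : (matchingEvent G k).filter (fun X => (X i, X j) = p)
        = (matchingEvent G k).filter (fun X => X i = p.1 ∧ X j = p.2) := by
      apply Finset.filter_congr
      intro X _
      rw [Prod.ext_iff]
    rw [this]
    exact fiber_card_le G hij p.1 p.2
  calc ∑ p ∈ D, ∑ X ∈ (matchingEvent G k).filter (fun X => (X i, X j) = p),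
        pairCov G (X i).1 (X j).1
      ≤ ∑ p ∈ D, (matchingEvent G (k-2)).card * pairCov G p.1.1 p.2.1 :=
        Finset.sum_le_sum hinner
    _ = (matchingEvent G (k-2)).card * ∑ p ∈ D, pairCov G p.1.1 p.2.1 := by
        rw [Finset.mul_sum]
    _ ≤ (matchingEvent G (k-2)).card * (G.edgeFinset.card * (2 * (d - 1) ^ 2)) :=
        Nat.mul_le_mul_left _ (sum_pairCov_le G hreg)

lemma extension_le {d : ℕ} (hreg : G.IsRegularOfDegree d) (j : ℕ) :
    (matchingEvent G j).card * (G.edgeFinset.card - j * (2 * d - 1))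
      ≤ (matchingEvent G (j + 1)).card := by
  classical
  set compat : (Fin j → {e : Sym2 V // e ∈ G.edgeFinset}) →
      Finset {e : Sym2 V // e ∈ G.edgeFinset} :=
    fun Y => (univ : Finset {e : Sym2 V // e ∈ G.edgeFinset}).filter
      (fun a => ∀ l : Fin j, ¬ covs (Y l).1 a.1) with hcompat
  have hcompat_card : ∀ Y ∈ matchingEvent G j,
      G.edgeFinset.card - j * (2 * d - 1) ≤ (compat Y).card := by
    intro Y _
    have hsplit := Finset.card_filter_add_card_filter_not
      (s := (univ : Finset {e : Sym2 V // e ∈ G.edgeFinset}))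
      (p := fun a => ∀ l : Fin j, ¬ covs (Y l).1 a.1)
    have hnon : ((univ : Finset {e : Sym2 V // e ∈ G.edgeFinset}).filter
        (fun a => ¬ ∀ l : Fin j, ¬ covs (Y l).1 a.1)).card ≤ j * (2 * d - 1) := by
      have hsub : ((univ : Finset {e : Sym2 V // e ∈ G.edgeFinset}).filter
          (fun a => ¬ ∀ l : Fin j, ¬ covs (Y l).1 a.1))
          ⊆ (univ : Finset (Fin j)).biUnion (fun l =>
            (univ : Finset {e : Sym2 V // e ∈ G.edgeFinset}).filter
              (fun a => covs (Y l).1 a.1)) := by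
        intro a ha
        obtain ⟨-, ha⟩ := Finset.mem_filter.1 ha
        push_neg at ha
        obtain ⟨l, hl⟩ := ha
        exact Finset.mem_biUnion.2 ⟨l, Finset.mem_univ _,
          Finset.mem_filter.2 ⟨Finset.mem_univ _, hl⟩⟩
      calc ((univ : Finset {e : Sym2 V // e ∈ G.edgeFinset}).filter
          (fun a => ¬ ∀ l : Fin j, ¬ covs (Y l).1 a.1)).card
          ≤ ∑ l : Fin j, ((univ : Finset {e : Sym2 V // e ∈ G.edgeFinset}).filter
              (fun a => covs (Y l).1 a.1)).card :=
            le_trans (Finset.card_le_card hsub) (Finset.card_biUnion_le)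
        _ = ∑ _l : Fin j, (2 * d - 1) := by
            apply Finset.sum_congr rfl
            intro l _
            rw [card_filter_univ_subtype G.edgeFinset (fun x => covs (Y l).1 x)]
            exact card_covs G hreg (Y l).2
        _ = j * (2 * d - 1) := by
            rw [Finset.sum_const, Finset.card_univ, Fintype.card_fin, smul_eq_mul]
    have hucard : (univ : Finset {e : Sym2 V // e ∈ G.edgeFinset}).card
        = G.edgeFinset.card := by
      rw [Finset.card_univ, Fintype.card_coe]
    have hfold : ((univ : Finset {e : Sym2 V // e ∈ G.edgeFinset}).filter
        (fun a => ∀ l : Fin j, ¬ covs (Y l).1 a.1)) = compat Y := rfl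
    rw [hfold, hucard] at hsplit
    omega
  have hstep1 : (matchingEvent G j).card * (G.edgeFinset.card - j * (2 * d - 1))
      ≤ ∑ Y ∈ matchingEvent G j, (compat Y).card := by
    calc (matchingEvent G j).card * (G.edgeFinset.card - j * (2 * d - 1))
        = ∑ _Y ∈ matchingEvent G j, (G.edgeFinset.card - j * (2 * d - 1)) := by
          rw [Finset.sum_const, smul_eq_mul]
      _ ≤ ∑ Y ∈ matchingEvent G j, (compat Y).card := Finset.sum_le_sum hcompat_card
  have hstep2 : ∑ Y ∈ matchingEvent G j, (compat Y).card
      ≤ (matchingEvent G (j + 1)).card := by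
    rw [← Finset.card_sigma]
    apply Finset.card_le_card_of_injOn (fun p => Fin.snoc p.1 p.2)
    · rintro ⟨Y, a⟩ hp
      obtain ⟨hY, ha⟩ := Finset.mem_sigma.1 hp
      have hYm := (Finset.mem_filter.1 hY).2
      have hac : ∀ l : Fin j, ¬ covs (Y l).1 a.1 := (Finset.mem_filter.1 ha).2
      refine Finset.mem_filter.2 ⟨Finset.mem_univ _, ?_⟩
      intro i1 i2 h12
      rcases Fin.eq_castSucc_or_eq_last i1 with ⟨c1, rfl⟩ | rfl <;>
        rcases Fin.eq_castSucc_or_eq_last i2 with ⟨c2, rfl⟩ | rfl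
      · simp only [Fin.snoc_castSucc]
        exact hYm c1 c2 (fun h => h12 (by rw [h]))
      · simp only [Fin.snoc_castSucc, Fin.snoc_last]
        constructor
        · intro h
          exact hac c1 (Or.inl h.symm)
        · intro v hv
          exact hac c1 (Or.inr ⟨v, hv.2, hv.1⟩)
      · simp only [Fin.snoc_castSucc, Fin.snoc_last]
        constructor
        · intro h
          exact hac c2 (Or.inl h)
        · intro v hv
          exact hac c2 (Or.inr ⟨v, hv.1, hv.2⟩)
      · exact absurd rfl h12
    · rintro ⟨Y1, a1⟩ h1 ⟨Y2, a2⟩ h2 heq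
      have hY : Y1 = Y2 := by
        funext l
        have := congrFun heq (Fin.castSucc l)
        simpa using this
      subst hY
      have hA : a1 = a2 := by
        have := congrFun heq (Fin.last j)
        simpa using this
      rw [hA]
  exact le_trans hstep1 hstep2

end AuxRepulsion

lemma bern3 (t : ℝ) (h0 : 0 ≤ t) (h1 : t ≤ 1) (k : ℕ) :
    1 - (k:ℝ)*t + ((k:ℝ)*((k:ℝ)-1))/2 * t^2 - ((k:ℝ)*((k:ℝ)-1)*((k:ℝ)-2))/6 * t^3
      ≤ (1-t)^k := by
  induction k with
  | zero => norm_num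
  | succ k ih =>
    have hb : (0:ℝ) ≤ (k:ℝ)*((k:ℝ)-1)*((k:ℝ)-2) := by
      rcases k with _|_|m
      · norm_num
      · norm_num
      · have hm0 : (0:ℝ) ≤ (m:ℝ) := Nat.cast_nonneg m
        push_cast
        exact mul_nonneg (mul_nonneg (by linarith) (by linarith)) (by linarith)
    have h1t : (0:ℝ) ≤ 1 - t := by linarith
    have hmul : (1-t) * (1 - (k:ℝ)*t + ((k:ℝ)*((k:ℝ)-1))/2 * t^2
        - ((k:ℝ)*((k:ℝ)-1)*((k:ℝ)-2))/6 * t^3) ≤ (1-t) * (1-t)^k :=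
      mul_le_mul_of_nonneg_left ih h1t
    have hpow : (1-t)^(k+1) = (1-t) * (1-t)^k := by ring
    rw [hpow]
    push_cast
    nlinarith [mul_nonneg hb (pow_nonneg h0 4)]

lemma final_algebra (k : ℕ) (M R T E A Q D1 SA SE : ℝ)
    (hM : 0 < M) (hR : 0 ≤ R) (hD1 : 0 ≤ D1) (hT : 0 ≤ T) (hE : 0 ≤ E)
    (hk : 1 ≤ k)
    (hRM : 14*((k:ℝ)*R) ≤ 3*M)
    (hA14 : 11*M ≤ 14*A)
    (hRD : 2*D1 ≤ R)
    (hQ : Q = M - R)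
    (hclaim : T * A^2 ≤ M * D1^2 * ((k:ℝ)^2 - (k:ℝ)) * E)
    (hSA : SA = M*M^k - M*Q^k) (hSE : SE = (k:ℝ)*R*E - T) :
    SA * E ≤ SE * M^k := by
  have hK1 : (1:ℝ) ≤ (k:ℝ) := by exact_mod_cast hk
  set t : ℝ := R/M with ht
  have ht0 : 0 ≤ t := div_nonneg hR hM.le
  have hMt : M*t = R := by rw [ht, mul_div_assoc', mul_div_cancel_left₀ R hM.ne']
  have hKt : 14*((k:ℝ)*t) ≤ 3 := by
    have h := hRM
    rw [← hMt] at h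
    have hM' : M ≠ 0 := ne_of_gt hM
    nlinarith [h]
  have ht1 : t ≤ 1 := by nlinarith [hKt, ht0, hK1]
  have hA0 : 0 < A := by linarith
  have hAt : 11*R ≤ 14*(A*t) := by
    have := mul_le_mul_of_nonneg_right hA14 ht0
    nlinarith [this, hMt]
  have hKm2t : 14*(((k:ℝ)-2)*t) ≤ 3 := by nlinarith [hKt, ht0]
  -- bracket fact : s := A*t satisfies 6*D1^2 ≤ s^2*(3-((k:ℝ)-2)*t)
  have hs0 : 0 ≤ A*t := mul_nonneg hA0.le ht0
  have hs2 : 121*R^2 ≤ 196*(A*t)^2 := by nlinarith [hAt, hR, hs0]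
  have hR2 : 4*D1^2 ≤ R^2 := by nlinarith [hRD, hD1]
  have hbrack : 6*D1^2 ≤ (A*t)^2*(3-((k:ℝ)-2)*t) := by
    nlinarith [hs2, hR2, hKm2t, sq_nonneg (A*t), sq_nonneg R, sq_nonneg D1]
  -- step 1 : T ≤ E * C
  have hKK : 0 ≤ (k:ℝ)^2 - (k:ℝ) := by nlinarith [hK1]
  have hstep1 : T ≤ E * (((k:ℝ)^2 - (k:ℝ))/6 * M * t^2 * (3 - ((k:ℝ)-2)*t)) := by
    have hA2 : (0:ℝ) < A^2 := by positivity
    rw [← mul_le_mul_iff_of_pos_right hA2]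
    calc T * A^2 ≤ M * D1^2 * ((k:ℝ)^2 - (k:ℝ)) * E := hclaim
      _ ≤ E * (((k:ℝ)^2 - (k:ℝ))/6 * M * t^2 * (3 - ((k:ℝ)-2)*t)) * A^2 := by
          nlinarith [mul_nonneg (mul_nonneg hE hM.le) hKK, hbrack,
            mul_nonneg (mul_nonneg (mul_nonneg hE hM.le) hKK) hD1]
  -- Bernoulli bound
  have hbern := bern3 t ht0 ht1 k
  have hbernM := mul_le_mul_of_nonneg_left hbern hM.le
  have hbrack2 : 0 ≤ (k:ℝ)*R - M + M*(1-t)^k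
      - (((k:ℝ)^2 - (k:ℝ))/6 * M * t^2 * (3 - ((k:ℝ)-2)*t)) := by
    have heq2 : (k:ℝ)*R - M + M*(1-t)^k - (((k:ℝ)^2 - (k:ℝ))/6 * M * t^2 * (3 - ((k:ℝ)-2)*t))
        = M*(1-t)^k - M*(1 - (k:ℝ)*t + ((k:ℝ)*((k:ℝ)-1))/2 * t^2
            - ((k:ℝ)*((k:ℝ)-1)*((k:ℝ)-2))/6 * t^3) := by
      linear_combination (-(k:ℝ)) * hMt
    rw [heq2]
    linarith [hbernM]
  have hQk : Q^k = M^k*(1-t)^k := by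
    have hfact : Q = M*(1-t) := by rw [hQ, ← hMt]; ring
    rw [hfact, mul_pow]
  have hTM : T*M^k ≤ (E*(((k:ℝ)^2 - (k:ℝ))/6 * M * t^2 * (3 - ((k:ℝ)-2)*t)))*M^k :=
    mul_le_mul_of_nonneg_right hstep1 (pow_nonneg hM.le k)
  have hfin : 0 ≤ M^k*(E*((k:ℝ)*R - M + M*(1-t)^k
      - (((k:ℝ)^2 - (k:ℝ))/6 * M * t^2 * (3 - ((k:ℝ)-2)*t)))) :=
    mul_nonneg (pow_nonneg hM.le k) (mul_nonneg hE hbrack2)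
  rw [hSA, hSE, hQk]
  nlinarith [hTM, hfin]

/-- **Repulsion inequality for matchings in `d`-regular graphs** (`thm:matchings`).
Let `G` be a `d`-regular graph on `n` vertices (so `G` has `m = n·d/2` edges) and let `k ≥ 1`
satisfy `56·k ≤ 3·n` (matching density `α = 2k/n ≤ 3/28`).  Choosing `k` edges independently
and uniformly at random (with replacement), we have `E[V_k · 1_{E_k}] ≥ E[V_k] · Pr[E_k]`. -/
theorem matching_repulsion {V : Type*} [Fintype V] [DecidableEq V] (G : SimpleGraph V)
    [DecidableRel G.Adj] (d k : ℕ) (hreg : G.IsRegularOfDegree d) (hk : 1 ≤ k)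
    (hdens : 56 * k ≤ 3 * Fintype.card V) :
    (∑ X ∈ matchingEvent G k, edgeCoveredFrac G X) / (G.edgeFinset.card : ℝ) ^ k ≥
      ((∑ X : Fin k → {e : Sym2 V // e ∈ G.edgeFinset}, edgeCoveredFrac G X) /
          (G.edgeFinset.card : ℝ) ^ k) *
        (((matchingEvent G k).card : ℝ) / (G.edgeFinset.card : ℝ) ^ k) := by
  classical
  by_cases hm0 : G.edgeFinset.card = 0
  · have hEmpty : IsEmpty {e : Sym2 V // e ∈ G.edgeFinset} := by
      constructor
      rintro ⟨e, he⟩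
      rw [Finset.card_eq_zero.1 hm0] at he
      exact absurd he (Finset.notMem_empty e)
    haveI hPE : IsEmpty (Fin k → {e : Sym2 V // e ∈ G.edgeFinset}) :=
      ⟨fun X => hEmpty.false (X ⟨0, hk⟩)⟩
    have huniv : (univ : Finset (Fin k → {e : Sym2 V // e ∈ G.edgeFinset})) = ∅ :=
      Finset.univ_eq_empty
    have hmE : matchingEvent G k = ∅ :=
      Finset.subset_empty.1 (huniv ▸ Finset.filter_subset _ _)
    rw [hmE, huniv]
    simp
  -- main case
  have hm : 0 < G.edgeFinset.card := Nat.pos_of_ne_zero hm0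
  set m := G.edgeFinset.card with hmdef
  set r : ℕ := 2 * d - 1 with hrdef
  -- d ≥ 1
  obtain ⟨e0, he0⟩ := Finset.card_pos.1 hm
  have hd : 0 < d := by
    induction e0 with
    | _ u v =>
      have huv : G.Adj u v := by
        rwa [SimpleGraph.mem_edgeFinset, SimpleGraph.mem_edgeSet] at he0
      rw [← hreg u]
      exact (G.degree_pos_iff_exists_adj u).2 ⟨v, huv⟩
  -- degree sum
  have hnd : Fintype.card V * d = 2 * m := by
    have h2 := G.sum_degrees_eq_twice_card_edges
    have h1 : ∑ v : V, G.degree v = Fintype.card V * d := by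
      rw [Finset.sum_congr rfl (fun v _ => hreg v), Finset.sum_const, Finset.card_univ,
        smul_eq_mul]
    rw [← h1, h2]
  -- arithmetic facts in ℕ
  have hkr : 14 * (k * r) ≤ 3 * m := by
    have h3 : 56 * k * d ≤ 6 * m := by
      calc 56 * k * d ≤ 3 * Fintype.card V * d := Nat.mul_le_mul_right d hdens
        _ = 3 * (Fintype.card V * d) := by ring
        _ = 6 * m := by rw [hnd]; ring
    have h4 : 14 * (k * r) ≤ 28 * (k * d) := by
      have hr2d : r ≤ 2 * d := by omega
      calc 14 * (k * r) ≤ 14 * (k * (2 * d)) :=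
            Nat.mul_le_mul_left _ (Nat.mul_le_mul_left _ hr2d)
        _ = 28 * (k * d) := by ring
    have h5 : 2 * (28 * (k * d)) ≤ 2 * (3 * m) := by
      calc 2 * (28 * (k * d)) = 56 * k * d := by ring
        _ ≤ 6 * m := h3
        _ = 2 * (3 * m) := by ring
    have h6 : 28 * (k * d) ≤ 3 * m := Nat.le_of_mul_le_mul_left h5 (by norm_num)
    exact le_trans h4 h6
  have hkr1 : (k - 1) * r ≤ k * r := Nat.mul_le_mul_right _ (Nat.sub_le k 1)
  have hrkr : r ≤ k * r := Nat.le_mul_of_pos_left r (by omega)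
  have hrm : r ≤ m := by omega
  have hklrm : (k - 1) * r ≤ m := by omega
  have ha14 : 11 * m ≤ 14 * (m - (k - 1) * r) := by omega
  -- ℕ sum facts
  have hF1 : (∑ X ∈ matchingEvent G k, covCard G X) + (∑ X ∈ matchingEvent G k, crossCard G X)
      = (matchingEvent G k).card * (k * r) := by
    rw [← Finset.sum_add_distrib]
    rw [Finset.sum_congr rfl (fun X hX => covCard_add_crossCard G hreg X hX)]
    rw [Finset.sum_const, smul_eq_mul]
  have hF2 : 2 * (∑ X ∈ matchingEvent G k, crossCard G X)
      ≤ (k * k - k) * ((matchingEvent G (k-2)).card * (m * (2 * (d - 1) ^ 2))) := by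
    calc 2 * (∑ X ∈ matchingEvent G k, crossCard G X)
        = ∑ X ∈ matchingEvent G k, 2 * crossCard G X := by rw [Finset.mul_sum]
      _ ≤ ∑ X ∈ matchingEvent G k,
            ∑ p ∈ (univ : Finset (Fin k)).offDiag, pairCov G (X p.1).1 (X p.2).1 :=
          Finset.sum_le_sum (fun X _ => cross_le_pairs G X)
      _ = ∑ p ∈ (univ : Finset (Fin k)).offDiag,
            ∑ X ∈ matchingEvent G k, pairCov G (X p.1).1 (X p.2).1 := Finset.sum_comm
      _ ≤ ∑ _p ∈ (univ : Finset (Fin k)).offDiag,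
            ((matchingEvent G (k-2)).card * (m * (2 * (d - 1) ^ 2))) := by
          apply Finset.sum_le_sum
          intro p hp
          exact sum_pairCov_event_le G hreg (Finset.mem_offDiag.1 hp).2.2
      _ = (k * k - k) * ((matchingEvent G (k-2)).card * (m * (2 * (d - 1) ^ 2))) := by
          rw [Finset.sum_const, smul_eq_mul, Finset.offDiag_card, Finset.card_univ,
            Fintype.card_fin]
  have hF3 : (k * k - k) * ((matchingEvent G (k-2)).card * (m - (k - 1) * r) ^ 2)
      ≤ (k * k - k) * (matchingEvent G k).card := by
    rcases k with _ | k1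
    · omega
    rcases k1 with _ | k2
    · simp
    · apply Nat.mul_le_mul_left
      have e1 := extension_le G hreg k2
      have e2 := extension_le G hreg (k2 + 1)
      have hidx : k2 + 1 + 1 - 2 = k2 := by omega
      have hidx2 : k2 + 1 + 1 - 1 = k2 + 1 := by omega
      rw [hidx, hidx2]
      have hmono : m - (k2 + 1) * r ≤ m - k2 * r :=
        Nat.sub_le_sub_left (Nat.mul_le_mul_right r (by omega)) m
      calc (matchingEvent G k2).card * (m - (k2 + 1) * r) ^ 2
          = ((matchingEvent G k2).card * (m - (k2 + 1) * r)) * (m - (k2 + 1) * r) := by ring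
        _ ≤ ((matchingEvent G k2).card * (m - k2 * r)) * (m - (k2 + 1) * r) :=
            Nat.mul_le_mul_right _ (Nat.mul_le_mul_left _ hmono)
        _ ≤ (matchingEvent G (k2 + 1)).card * (m - (k2 + 1) * r) :=
            Nat.mul_le_mul_right _ e1
        _ ≤ (matchingEvent G (k2 + 1 + 1)).card := e2
  have hall := sum_covCard_all G hreg k
  -- ℝ facts (raw casts)
  have hMpos : (0:ℝ) < (m:ℝ) := by exact_mod_cast hm
  have hKK : ((k * k - k : ℕ) : ℝ) = (k:ℝ) ^ 2 - (k:ℝ) := by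
    have hkk : k ≤ k * k := Nat.le_mul_of_pos_left k (by omega)
    push_cast [Nat.cast_sub hkk]
    ring
  have hQ : ((m - r : ℕ) : ℝ) = (m:ℝ) - (r:ℝ) := by
    rw [Nat.cast_sub hrm]
  have hSE : ((∑ X ∈ matchingEvent G k, covCard G X : ℕ) : ℝ)
      = (k:ℝ) * (r:ℝ) * ((matchingEvent G k).card : ℝ)
        - ((∑ X ∈ matchingEvent G k, crossCard G X : ℕ) : ℝ) := by
    have hc : ((∑ X ∈ matchingEvent G k, covCard G X : ℕ) : ℝ)
        + ((∑ X ∈ matchingEvent G k, crossCard G X : ℕ) : ℝ)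
        = ((matchingEvent G k).card : ℝ) * ((k:ℝ) * (r:ℝ)) := by
      exact_mod_cast congrArg (Nat.cast (R := ℝ)) hF1
    linarith [hc]
  have hSA : ((∑ X : Fin k → {e : Sym2 V // e ∈ G.edgeFinset}, covCard G X : ℕ) : ℝ)
      = (m:ℝ) * (m:ℝ) ^ k - (m:ℝ) * ((m - r : ℕ) : ℝ) ^ k := by
    have hc : ((∑ X : Fin k → {e : Sym2 V // e ∈ G.edgeFinset}, covCard G X : ℕ) : ℝ)
        + (m:ℝ) * ((m - r : ℕ) : ℝ) ^ k = (m:ℝ) * (m:ℝ) ^ k := by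
      exact_mod_cast congrArg (Nat.cast (R := ℝ)) hall
    linarith [hc]
  have hclaim : ((∑ X ∈ matchingEvent G k, crossCard G X : ℕ) : ℝ)
      * ((m - (k - 1) * r : ℕ) : ℝ) ^ 2
      ≤ (m:ℝ) * ((d - 1 : ℕ) : ℝ) ^ 2 * ((k:ℝ) ^ 2 - (k:ℝ))
        * ((matchingEvent G k).card : ℝ) := by
    have hc2 : 2 * ((∑ X ∈ matchingEvent G k, crossCard G X : ℕ) : ℝ)
        ≤ ((k:ℝ)^2 - (k:ℝ)) * (((matchingEvent G (k-2)).card : ℝ)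
          * ((m:ℝ) * (2 * ((d - 1 : ℕ) : ℝ) ^ 2))) := by
      rw [← hKK]
      exact_mod_cast hF2
    have hc3 : ((k:ℝ)^2 - (k:ℝ)) * (((matchingEvent G (k-2)).card : ℝ)
        * ((m - (k - 1) * r : ℕ) : ℝ) ^ 2)
        ≤ ((k:ℝ)^2 - (k:ℝ)) * ((matchingEvent G k).card : ℝ) := by
      rw [← hKK]
      exact_mod_cast hF3
    have hpos : (0:ℝ) ≤ (m:ℝ) * ((d - 1 : ℕ) : ℝ) ^ 2 := by positivity
    have hc4 := mul_le_mul_of_nonneg_left hc3 hpos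
    nlinarith [hc2, hc4, sq_nonneg (((m - (k - 1) * r : ℕ) : ℝ))]
  have hRM' : 14 * ((k:ℝ) * (r:ℝ)) ≤ 3 * (m:ℝ) := by exact_mod_cast hkr
  have hA14' : 11 * (m:ℝ) ≤ 14 * ((m - (k - 1) * r : ℕ) : ℝ) := by exact_mod_cast ha14
  have hRD' : 2 * ((d - 1 : ℕ) : ℝ) ≤ (r:ℝ) := by
    have h2d : 2 * (d - 1) ≤ 2 * d - 1 := by omega
    calc (2:ℝ) * ((d - 1 : ℕ) : ℝ) = ((2 * (d-1) : ℕ) : ℝ) := by push_cast; ring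
      _ ≤ ((2 * d - 1 : ℕ) : ℝ) := by exact_mod_cast h2d
      _ = (r:ℝ) := by rw [hrdef]
  have hkey := final_algebra k (m:ℝ) (r:ℝ)
    ((∑ X ∈ matchingEvent G k, crossCard G X : ℕ) : ℝ)
    (((matchingEvent G k).card : ℕ) : ℝ)
    ((m - (k - 1) * r : ℕ) : ℝ) ((m - r : ℕ) : ℝ) ((d - 1 : ℕ) : ℝ)
    ((∑ X : Fin k → {e : Sym2 V // e ∈ G.edgeFinset}, covCard G X : ℕ) : ℝ)
    ((∑ X ∈ matchingEvent G k, covCard G X : ℕ) : ℝ)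
    hMpos (by positivity) (by positivity) (by positivity) (by positivity) hk
    hRM' hA14' hRD' hQ hclaim hSA hSE
  -- convert the goal
  have hfrac : ∀ X : Fin k → {e : Sym2 V // e ∈ G.edgeFinset},
      edgeCoveredFrac G X = ((covCard G X : ℕ) : ℝ) / (m:ℝ) := by
    intro X
    rfl
  have hsum1 : (∑ X ∈ matchingEvent G k, edgeCoveredFrac G X)
      = ((∑ X ∈ matchingEvent G k, covCard G X : ℕ) : ℝ) / (m:ℝ) := by
    rw [Finset.sum_congr rfl (fun X _ => hfrac X), ← Finset.sum_div]
    push_cast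
    ring
  have hsum2 : (∑ X : Fin k → {e : Sym2 V // e ∈ G.edgeFinset}, edgeCoveredFrac G X)
      = ((∑ X : Fin k → {e : Sym2 V // e ∈ G.edgeFinset}, covCard G X : ℕ) : ℝ) / (m:ℝ) := by
    rw [Finset.sum_congr rfl (fun X _ => hfrac X), ← Finset.sum_div]
    push_cast
    ring
  rw [ge_iff_le, hsum1, hsum2]
  have hMk : (0:ℝ) < (m:ℝ) ^ k := pow_pos hMpos k
  rw [div_div, div_div, div_mul_div_comm, div_le_div_iff₀ (by positivity) (by positivity)]
  calc ((∑ X : Fin k → {e : Sym2 V // e ∈ G.edgeFinset}, covCard G X : ℕ) : ℝ)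
        * ((matchingEvent G k).card : ℝ) * ((m:ℝ) * (m:ℝ) ^ k)
      ≤ (((∑ X ∈ matchingEvent G k, covCard G X : ℕ) : ℝ) * (m:ℝ)^k) * ((m:ℝ) * (m:ℝ) ^ k) :=
        mul_le_mul_of_nonneg_right hkey (by positivity)
    _ = ((∑ X ∈ matchingEvent G k, covCard G X : ℕ) : ℝ) * ((m:ℝ) * (m:ℝ) ^ k * (m:ℝ) ^ k) := by
        ring
end
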